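/- arXiv:2512.18376 — 14 statements merged into one kernel-verified Lean document; each statement's English description precedes it below -/
import Mathlib

section
/- Let e, d ∈ {−1, 1}, let a, b, κ, λ ∈ ℝ with b² ≠ e·a², and let A, B : ℝ → ℝ be C¹ with A > 0 and B > 0. Set c₁ = d·e·(a²+b²)⁴, c₂ = 4(a²+b²)²(b²+e·a²), c₃ = 8·e·a·b·(a²+b²)², c₄ = 4d(2κab + λ(b²+e·a²))². Suppose R : ℝ → ℝ is C² with R'(t) ≠ 0 for every t and R'(t)² = (c₁·B(R(t))² + c₂·κ·B(R(t)) + c₃·λ·B(R(t)) + c₄) / ((a²+b²)²·(b²−e·a²)²·A(R(t))·B(R(t))) for all t, and H : ℝ → ℝ is differentiable with H'(t) = (2λd(b²+e·a²) + 4κd·ab + ab(a²+b²)(e+1)·B(R(t))) / ((b²−e·a²)(a²+b²)·B(R(t))) for all t. Then the map u(x,y) = (R(ay−bx), ax+by+H(ay−bx)) is harmonic on ℝ² with parameters e, d and target data A, B. -/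
open Real

/-- First partial derivative in the `x` direction. -/
noncomputable def px (f : ℝ × ℝ → ℝ) (p : ℝ × ℝ) : ℝ := fderiv ℝ f p (1, 0)

/-- First partial derivative in the `y` direction. -/
noncomputable def py (f : ℝ × ℝ → ℝ) (p : ℝ × ℝ) : ℝ := fderiv ℝ f p (0, 1)

/-- Harmonicity of the map `u = (R, S)` for domain conformal metric
`e^f (dx² − e dy²)` and target metric `A(R) dR² − d B(R) dS²`:
the Euler–Lagrange system (EL1)–(EL2). -/
noncomputable def IsHarmonic (e d : ℝ) (A B : ℝ → ℝ) (R S : ℝ × ℝ → ℝ) : Prop :=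
  ∀ p : ℝ × ℝ,
    2 * A (R p) * (e * px (px R) p - py (py R) p)
        + deriv A (R p) * (e * (px R p) ^ 2 - (py R p) ^ 2)
        + d * deriv B (R p) * (e * (px S p) ^ 2 - (py S p) ^ 2) = 0
    ∧ B (R p) * (e * px (px S) p - py (py S) p)
        + deriv B (R p) * (e * px R p * px S p - py R p * py S p) = 0

lemma lin_hasFDerivAt (a b : ℝ) (p : ℝ × ℝ) :
    HasFDerivAt (fun q : ℝ × ℝ => a * q.2 - b * q.1)
      (a • ContinuousLinearMap.snd ℝ ℝ ℝ - b • ContinuousLinearMap.fst ℝ ℝ ℝ) p := by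
  exact (((ContinuousLinearMap.snd ℝ ℝ ℝ).hasFDerivAt).const_mul a).sub
    (((ContinuousLinearMap.fst ℝ ℝ ℝ).hasFDerivAt).const_mul b)

lemma comp_fderiv (a b : ℝ) (f : ℝ → ℝ) (f' : ℝ) (p : ℝ × ℝ)
    (hf : HasDerivAt f f' (a * p.2 - b * p.1)) :
    px (fun q => f (a * q.2 - b * q.1)) p = -(b * f') ∧
    py (fun q => f (a * q.2 - b * q.1)) p = a * f' := by
  have h := hf.comp_hasFDerivAt p (lin_hasFDerivAt a b p)
  have hfd := h.fderiv
  constructor <;> simp only [px, py, Function.comp_def] at *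
  · rw [hfd]; simp; ring
  · rw [hfd]; simp; ring

lemma comp_fderiv' (a b : ℝ) (f : ℝ → ℝ) (f' : ℝ) (p : ℝ × ℝ)
    (hf : HasDerivAt f f' (a * p.2 - b * p.1)) :
    px (fun q => a * q.1 + b * q.2 + f (a * q.2 - b * q.1)) p = a + -(b * f') ∧
    py (fun q => a * q.1 + b * q.2 + f (a * q.2 - b * q.1)) p = b + a * f' := by
  have h := hf.comp_hasFDerivAt p (lin_hasFDerivAt a b p)
  have h2 : HasFDerivAt (fun q : ℝ × ℝ => a * q.1 + b * q.2 + f (a * q.2 - b * q.1))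
      ((a • ContinuousLinearMap.fst ℝ ℝ ℝ + b • ContinuousLinearMap.snd ℝ ℝ ℝ) +
        f' • (a • ContinuousLinearMap.snd ℝ ℝ ℝ - b • ContinuousLinearMap.fst ℝ ℝ ℝ)) p :=
    ((((ContinuousLinearMap.fst ℝ ℝ ℝ).hasFDerivAt).const_mul a).add
      (((ContinuousLinearMap.snd ℝ ℝ ℝ).hasFDerivAt).const_mul b)).add h
  have hfd := h2.fderiv
  constructor <;> simp only [px, py] at *
  · rw [hfd]; simp; ring
  · rw [hfd]; simp; ring


set_option maxHeartbeats 4000000 in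
lemma alg1 (e d a b κ lam aa bb a1 b1 : ℝ)
    (he : e = -1 ∨ e = 1) (hd : d = -1 ∨ d = 1)
    (hD : b ^ 2 - e * a ^ 2 ≠ 0) (hS : a ^ 2 + b ^ 2 ≠ 0)
    (hBn : bb ≠ 0) (hAn : aa ≠ 0) :
    2 * aa *
          (e *
              -(b *
                  -(b *
                      (((d * e * (a ^ 2 + b ^ 2) ^ 4 * (2 * bb) + 4 * (a ^ 2 + b ^ 2) ^ 2 * (b ^ 2 + e * a ^ 2) * κ +
                                  8 * e * a * b * (a ^ 2 + b ^ 2) ^ 2 * lam) *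
                                b1 *
                              ((a ^ 2 + b ^ 2) ^ 2 * (b ^ 2 - e * a ^ 2) ^ 2 * aa * bb) -
                            (d * e * (a ^ 2 + b ^ 2) ^ 4 * bb ^ 2 +
                                    4 * (a ^ 2 + b ^ 2) ^ 2 * (b ^ 2 + e * a ^ 2) * κ * bb +
                                  8 * e * a * b * (a ^ 2 + b ^ 2) ^ 2 * lam * bb +
                                4 * d * (2 * κ * a * b + lam * (b ^ 2 + e * a ^ 2)) ^ 2) *
                              ((a ^ 2 + b ^ 2) ^ 2 * (b ^ 2 - e * a ^ 2) ^ 2 * a1 * bb +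
                                (a ^ 2 + b ^ 2) ^ 2 * (b ^ 2 - e * a ^ 2) ^ 2 * aa * b1)) /
                          ((a ^ 2 + b ^ 2) ^ 2 * (b ^ 2 - e * a ^ 2) ^ 2 * aa * bb) ^ 2 /
                        2))) -
            a *
              (a *
                (((d * e * (a ^ 2 + b ^ 2) ^ 4 * (2 * bb) + 4 * (a ^ 2 + b ^ 2) ^ 2 * (b ^ 2 + e * a ^ 2) * κ +
                            8 * e * a * b * (a ^ 2 + b ^ 2) ^ 2 * lam) *
                          b1 *
                        ((a ^ 2 + b ^ 2) ^ 2 * (b ^ 2 - e * a ^ 2) ^ 2 * aa * bb) -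
                      (d * e * (a ^ 2 + b ^ 2) ^ 4 * bb ^ 2 + 4 * (a ^ 2 + b ^ 2) ^ 2 * (b ^ 2 + e * a ^ 2) * κ * bb +
                            8 * e * a * b * (a ^ 2 + b ^ 2) ^ 2 * lam * bb +
                          4 * d * (2 * κ * a * b + lam * (b ^ 2 + e * a ^ 2)) ^ 2) *
                        ((a ^ 2 + b ^ 2) ^ 2 * (b ^ 2 - e * a ^ 2) ^ 2 * a1 * bb +
                          (a ^ 2 + b ^ 2) ^ 2 * (b ^ 2 - e * a ^ 2) ^ 2 * aa * b1)) /
                    ((a ^ 2 + b ^ 2) ^ 2 * (b ^ 2 - e * a ^ 2) ^ 2 * aa * bb) ^ 2 /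
                  2))) +
        a1 *
          ((e * b ^ 2 - a ^ 2) *
            ((d * e * (a ^ 2 + b ^ 2) ^ 4 * bb ^ 2 + 4 * (a ^ 2 + b ^ 2) ^ 2 * (b ^ 2 + e * a ^ 2) * κ * bb +
                  8 * e * a * b * (a ^ 2 + b ^ 2) ^ 2 * lam * bb +
                4 * d * (2 * κ * a * b + lam * (b ^ 2 + e * a ^ 2)) ^ 2) /
              ((a ^ 2 + b ^ 2) ^ 2 * (b ^ 2 - e * a ^ 2) ^ 2 * aa * bb))) +
      d * b1 *
        (e *
            (a +
                -(b *
                    ((2 * lam * d * (b ^ 2 + e * a ^ 2) + 4 * κ * d * a * b + a * b * (a ^ 2 + b ^ 2) * (e + 1) * bb) /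
                      ((b ^ 2 - e * a ^ 2) * (a ^ 2 + b ^ 2) * bb)))) ^
              2 -
          (b +
              a *
                ((2 * lam * d * (b ^ 2 + e * a ^ 2) + 4 * κ * d * a * b + a * b * (a ^ 2 + b ^ 2) * (e + 1) * bb) /
                  ((b ^ 2 - e * a ^ 2) * (a ^ 2 + b ^ 2) * bb))) ^
            2) =
    0 := by
  have hD1 : (b ^ 2 - e * a ^ 2) * (a ^ 2 + b ^ 2) * bb ≠ 0 :=
    mul_ne_zero (mul_ne_zero hD hS) hBn
  have hD2 : (a ^ 2 + b ^ 2) ^ 2 * (b ^ 2 - e * a ^ 2) ^ 2 * aa * bb ≠ 0 :=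
    mul_ne_zero (mul_ne_zero (mul_ne_zero (pow_ne_zero 2 hS) (pow_ne_zero 2 hD)) hAn) hBn
  set u := (b ^ 2 - e * a ^ 2) * (a ^ 2 + b ^ 2) * bb with hu
  set v := (a ^ 2 + b ^ 2) ^ 2 * (b ^ 2 - e * a ^ 2) ^ 2 * aa * bb with hv
  rcases he with rfl | rfl <;> rcases hd with rfl | rfl <;> (field_simp; rw [hu, hv]; ring)

set_option maxHeartbeats 4000000 in
lemma alg2 (e d a b κ lam bb b1 r1 : ℝ)
    (he : e = -1 ∨ e = 1) (hd : d = -1 ∨ d = 1)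
    (hD : b ^ 2 - e * a ^ 2 ≠ 0) (hS : a ^ 2 + b ^ 2 ≠ 0)
    (hBn : bb ≠ 0) :
    bb *
        (e *
            -(b *
                -(b *
                    ((a * b * (a ^ 2 + b ^ 2) * (e + 1) * (b1 * r1) * ((b ^ 2 - e * a ^ 2) * (a ^ 2 + b ^ 2) * bb) -
                        (2 * lam * d * (b ^ 2 + e * a ^ 2) + 4 * κ * d * a * b +
                            a * b * (a ^ 2 + b ^ 2) * (e + 1) * bb) *
                          ((b ^ 2 - e * a ^ 2) * (a ^ 2 + b ^ 2) * (b1 * r1))) /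
                      ((b ^ 2 - e * a ^ 2) * (a ^ 2 + b ^ 2) * bb) ^ 2))) -
          a *
            (a *
              ((a * b * (a ^ 2 + b ^ 2) * (e + 1) * (b1 * r1) * ((b ^ 2 - e * a ^ 2) * (a ^ 2 + b ^ 2) * bb) -
                  (2 * lam * d * (b ^ 2 + e * a ^ 2) + 4 * κ * d * a * b + a * b * (a ^ 2 + b ^ 2) * (e + 1) * bb) *
                    ((b ^ 2 - e * a ^ 2) * (a ^ 2 + b ^ 2) * (b1 * r1))) /
                ((b ^ 2 - e * a ^ 2) * (a ^ 2 + b ^ 2) * bb) ^ 2))) +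
      b1 *
        (e * -(b * r1) *
            (a +
              -(b *
                  ((2 * lam * d * (b ^ 2 + e * a ^ 2) + 4 * κ * d * a * b + a * b * (a ^ 2 + b ^ 2) * (e + 1) * bb) /
                    ((b ^ 2 - e * a ^ 2) * (a ^ 2 + b ^ 2) * bb)))) -
          a * r1 *
            (b +
              a *
                ((2 * lam * d * (b ^ 2 + e * a ^ 2) + 4 * κ * d * a * b + a * b * (a ^ 2 + b ^ 2) * (e + 1) * bb) /
                  ((b ^ 2 - e * a ^ 2) * (a ^ 2 + b ^ 2) * bb)))) =
    0 := by
  have hD1 : (b ^ 2 - e * a ^ 2) * (a ^ 2 + b ^ 2) * bb ≠ 0 :=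
    mul_ne_zero (mul_ne_zero hD hS) hBn
  set u := (b ^ 2 - e * a ^ 2) * (a ^ 2 + b ^ 2) * bb with hu
  rcases he with rfl | rfl <;> rcases hd with rfl | rfl <;> (field_simp; rw [hu]; ring)


set_option maxHeartbeats 2000000 in
theorem stmt_0 (e d a b κ lam : ℝ)
    (he : e = -1 ∨ e = 1) (hd : d = -1 ∨ d = 1)
    (hab : b ^ 2 ≠ e * a ^ 2)
    (A B : ℝ → ℝ) (hA : ContDiff ℝ 1 A) (hB : ContDiff ℝ 1 B)
    (hApos : ∀ r, 0 < A r) (hBpos : ∀ r, 0 < B r)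
    (c₁ c₂ c₃ c₄ : ℝ)
    (hc₁ : c₁ = d * e * (a ^ 2 + b ^ 2) ^ 4)
    (hc₂ : c₂ = 4 * (a ^ 2 + b ^ 2) ^ 2 * (b ^ 2 + e * a ^ 2))
    (hc₃ : c₃ = 8 * e * a * b * (a ^ 2 + b ^ 2) ^ 2)
    (hc₄ : c₄ = 4 * d * (2 * κ * a * b + lam * (b ^ 2 + e * a ^ 2)) ^ 2)
    (R H : ℝ → ℝ) (hR : ContDiff ℝ 2 R) (hH : Differentiable ℝ H)
    (hR' : ∀ t, deriv R t ≠ 0)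
    (hRode : ∀ t, (deriv R t) ^ 2 =
      (c₁ * (B (R t)) ^ 2 + c₂ * κ * B (R t) + c₃ * lam * B (R t) + c₄)
        / ((a ^ 2 + b ^ 2) ^ 2 * (b ^ 2 - e * a ^ 2) ^ 2 * A (R t) * B (R t)))
    (hHode : ∀ t, deriv H t =
      (2 * lam * d * (b ^ 2 + e * a ^ 2) + 4 * κ * d * a * b
          + a * b * (a ^ 2 + b ^ 2) * (e + 1) * B (R t))
        / ((b ^ 2 - e * a ^ 2) * (a ^ 2 + b ^ 2) * B (R t))) :
    IsHarmonic e d A B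
      (fun p => R (a * p.2 - b * p.1))
      (fun p => a * p.1 + b * p.2 + H (a * p.2 - b * p.1)) := by
  have hD : b ^ 2 - e * a ^ 2 ≠ 0 := sub_ne_zero.mpr hab
  have hS : a ^ 2 + b ^ 2 ≠ 0 := by
    intro h
    apply hab
    have ha : a = 0 := by nlinarith [sq_nonneg a, sq_nonneg b]
    have hb : b = 0 := by nlinarith [sq_nonneg a, sq_nonneg b]
    simp [ha, hb]
  have hRd : Differentiable ℝ R := hR.differentiable (by norm_num)
  have hR'd : Differentiable ℝ (deriv R) := by
    have h2 : ContDiff ℝ (1 + 1 : ℕ) R := by exact_mod_cast hR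
    exact ((contDiff_succ_iff_deriv (n := 1)).mp (by exact_mod_cast h2)).2.2.differentiable one_ne_zero
  have hAd : Differentiable ℝ A := hA.differentiable one_ne_zero
  have hBd : Differentiable ℝ B := hB.differentiable one_ne_zero
  -- derivative of B ∘ R and A ∘ R
  have hq : ∀ s : ℝ, HasDerivAt (fun u => B (R u)) (deriv B (R s) * deriv R s) s :=
    fun s => ((hBd (R s)).hasDerivAt).comp s ((hRd s).hasDerivAt)
  have hp : ∀ s : ℝ, HasDerivAt (fun u => A (R u)) (deriv A (R s) * deriv R s) s :=
    fun s => ((hAd (R s)).hasDerivAt).comp s ((hRd s).hasDerivAt)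
  have hBne : ∀ s : ℝ, B (R s) ≠ 0 := fun s => (hBpos _).ne'
  have hAne : ∀ s : ℝ, A (R s) ≠ 0 := fun s => (hApos _).ne'
  -- derivative of φ (the function equal to deriv H)
  have hφ := fun s : ℝ =>
    HasDerivAt.div
      ((((hq s).const_mul (a * b * (a ^ 2 + b ^ 2) * (e + 1))).const_add
        (2 * lam * d * (b ^ 2 + e * a ^ 2) + 4 * κ * d * a * b))
      : HasDerivAt (fun u => 2 * lam * d * (b ^ 2 + e * a ^ 2) + 4 * κ * d * a * b
          + a * b * (a ^ 2 + b ^ 2) * (e + 1) * B (R u))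
          (a * b * (a ^ 2 + b ^ 2) * (e + 1) * (deriv B (R s) * deriv R s)) s)
      (((hq s).const_mul ((b ^ 2 - e * a ^ 2) * (a ^ 2 + b ^ 2)))
      : HasDerivAt (fun u => (b ^ 2 - e * a ^ 2) * (a ^ 2 + b ^ 2) * B (R u))
          ((b ^ 2 - e * a ^ 2) * (a ^ 2 + b ^ 2) * (deriv B (R s) * deriv R s)) s)
      (by exact mul_ne_zero (mul_ne_zero hD hS) (hBne s))
  -- derivative of the RHS of the R-ODE
  have hNum := fun s : ℝ =>
    (((((hq s).pow 2).const_mul c₁).add ((hq s).const_mul (c₂ * κ))).add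
      ((hq s).const_mul (c₃ * lam))).add_const c₄
  have hDen := fun s : ℝ =>
    ((hp s).const_mul ((a ^ 2 + b ^ 2) ^ 2 * (b ^ 2 - e * a ^ 2) ^ 2)).mul (hq s)
  have hDenne : ∀ s : ℝ, (a ^ 2 + b ^ 2) ^ 2 * (b ^ 2 - e * a ^ 2) ^ 2 * A (R s) * B (R s) ≠ 0 :=
    fun s => mul_ne_zero (mul_ne_zero (mul_ne_zero (pow_ne_zero 2 hS) (pow_ne_zero 2 hD)) (hAne s)) (hBne s)
  have hΨ := fun s : ℝ => (hNum s).div (hDen s) (hDenne s)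
  have hsq := fun s : ℝ => ((hR'd s).hasDerivAt).pow 2
  have hkey := fun s : ℝ => by
    have h1 := hsq s
    rw [show (deriv R ^ 2) = _ from funext hRode] at h1
    exact h1.unique (hΨ s)
  -- first-order partials as functions
  have hRcx : px (fun q : ℝ × ℝ => R (a * q.2 - b * q.1)) =
      fun q => -(b * deriv R (a * q.2 - b * q.1)) :=
    funext fun q => (comp_fderiv a b R (deriv R _) q ((hRd _).hasDerivAt)).1
  have hRcy : py (fun q : ℝ × ℝ => R (a * q.2 - b * q.1)) =
      fun q => a * deriv R (a * q.2 - b * q.1) :=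
    funext fun q => (comp_fderiv a b R (deriv R _) q ((hRd _).hasDerivAt)).2
  have hHd : deriv H = fun s => (2 * lam * d * (b ^ 2 + e * a ^ 2) + 4 * κ * d * a * b + a * b * (a ^ 2 + b ^ 2) * (e + 1) * B (R s)) / ((b ^ 2 - e * a ^ 2) * (a ^ 2 + b ^ 2) * B (R s)) := funext hHode
  have hScx : px (fun q : ℝ × ℝ => a * q.1 + b * q.2 + H (a * q.2 - b * q.1)) =
      fun q => a + -(b * ((2 * lam * d * (b ^ 2 + e * a ^ 2) + 4 * κ * d * a * b + a * b * (a ^ 2 + b ^ 2) * (e + 1) * B (R (a * q.2 - b * q.1))) / ((b ^ 2 - e * a ^ 2) * (a ^ 2 + b ^ 2) * B (R (a * q.2 - b * q.1))))) := by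
    funext q
    rw [(comp_fderiv' a b H (deriv H _) q ((hH _).hasDerivAt)).1, hHode]
  have hScy : py (fun q : ℝ × ℝ => a * q.1 + b * q.2 + H (a * q.2 - b * q.1)) =
      fun q => b + a * ((2 * lam * d * (b ^ 2 + e * a ^ 2) + 4 * κ * d * a * b + a * b * (a ^ 2 + b ^ 2) * (e + 1) * B (R (a * q.2 - b * q.1))) / ((b ^ 2 - e * a ^ 2) * (a ^ 2 + b ^ 2) * B (R (a * q.2 - b * q.1)))) := by
    funext q
    rw [(comp_fderiv' a b H (deriv H _) q ((hH _).hasDerivAt)).2, hHode]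
  intro p
  simp only [hRcx, hRcy, hScx, hScy]
  have hf2 := ((hφ (a * p.2 - b * p.1)).const_mul b).neg.const_add a
  have hxx := (comp_fderiv a b (fun y => a + -(b * ((2 * lam * d * (b ^ 2 + e * a ^ 2) + 4 * κ * d * a * b + a * b * (a ^ 2 + b ^ 2) * (e + 1) * B (R y)) / ((b ^ 2 - e * a ^ 2) * (a ^ 2 + b ^ 2) * B (R y))))) _ p hf2).1
  have hg2 := ((hφ (a * p.2 - b * p.1)).const_mul a).const_add b
  have hyy := (comp_fderiv a b (fun y => b + a * ((2 * lam * d * (b ^ 2 + e * a ^ 2) + 4 * κ * d * a * b + a * b * (a ^ 2 + b ^ 2) * (e + 1) * B (R y)) / ((b ^ 2 - e * a ^ 2) * (a ^ 2 + b ^ 2) * B (R y)))) _ p hg2).2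
  have hfr := (((hR'd (a * p.2 - b * p.1)).hasDerivAt).const_mul b).neg
  have hrxx := (comp_fderiv a b (fun y => -(b * deriv R y)) _ p hfr).1
  have hgr := ((hR'd (a * p.2 - b * p.1)).hasDerivAt).const_mul a
  have hryy := (comp_fderiv a b _ _ p hgr).2
  constructor
  · rw [hrxx, hryy]
    have hk := hkey (a * p.2 - b * p.1)
    norm_num at hk
    have h3 : deriv R (a * p.2 - b * p.1) * (2 * deriv (deriv R) (a * p.2 - b * p.1)) =
        deriv R (a * p.2 - b * p.1) * (((c₁ * (2 * B (R (a * p.2 - b * p.1))) + c₂ * κ + c₃ * lam) * deriv B (R (a * p.2 - b * p.1)) *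
        ((a ^ 2 + b ^ 2) ^ 2 * (b ^ 2 - e * a ^ 2) ^ 2 * A (R (a * p.2 - b * p.1)) * B (R (a * p.2 - b * p.1))) -
      (c₁ * B (R (a * p.2 - b * p.1)) ^ 2 + c₂ * κ * B (R (a * p.2 - b * p.1)) + c₃ * lam * B (R (a * p.2 - b * p.1)) + c₄) *
        ((a ^ 2 + b ^ 2) ^ 2 * (b ^ 2 - e * a ^ 2) ^ 2 * deriv A (R (a * p.2 - b * p.1)) * B (R (a * p.2 - b * p.1)) +
         (a ^ 2 + b ^ 2) ^ 2 * (b ^ 2 - e * a ^ 2) ^ 2 * A (R (a * p.2 - b * p.1)) * deriv B (R (a * p.2 - b * p.1)))) /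
      ((a ^ 2 + b ^ 2) ^ 2 * (b ^ 2 - e * a ^ 2) ^ 2 * A (R (a * p.2 - b * p.1)) * B (R (a * p.2 - b * p.1))) ^ 2) := by
      linear_combination hk
    have h4 := mul_left_cancel₀ (hR' (a * p.2 - b * p.1)) h3
    have hr2 : deriv (deriv R) (a * p.2 - b * p.1) = (((c₁ * (2 * B (R (a * p.2 - b * p.1))) + c₂ * κ + c₃ * lam) * deriv B (R (a * p.2 - b * p.1)) *
        ((a ^ 2 + b ^ 2) ^ 2 * (b ^ 2 - e * a ^ 2) ^ 2 * A (R (a * p.2 - b * p.1)) * B (R (a * p.2 - b * p.1))) -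
      (c₁ * B (R (a * p.2 - b * p.1)) ^ 2 + c₂ * κ * B (R (a * p.2 - b * p.1)) + c₃ * lam * B (R (a * p.2 - b * p.1)) + c₄) *
        ((a ^ 2 + b ^ 2) ^ 2 * (b ^ 2 - e * a ^ 2) ^ 2 * deriv A (R (a * p.2 - b * p.1)) * B (R (a * p.2 - b * p.1)) +
         (a ^ 2 + b ^ 2) ^ 2 * (b ^ 2 - e * a ^ 2) ^ 2 * A (R (a * p.2 - b * p.1)) * deriv B (R (a * p.2 - b * p.1)))) /
      ((a ^ 2 + b ^ 2) ^ 2 * (b ^ 2 - e * a ^ 2) ^ 2 * A (R (a * p.2 - b * p.1)) * B (R (a * p.2 - b * p.1))) ^ 2) / 2 := by linarith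
    rw [hr2]
    rw [show e * (-(b * deriv R (a * p.2 - b * p.1))) ^ 2 - (a * deriv R (a * p.2 - b * p.1)) ^ 2
        = (e * b ^ 2 - a ^ 2) *
          ((c₁ * B (R (a * p.2 - b * p.1)) ^ 2 + c₂ * κ * B (R (a * p.2 - b * p.1)) + c₃ * lam * B (R (a * p.2 - b * p.1)) + c₄) /
            ((a ^ 2 + b ^ 2) ^ 2 * (b ^ 2 - e * a ^ 2) ^ 2 * A (R (a * p.2 - b * p.1)) * B (R (a * p.2 - b * p.1)))) from by
      rw [← hRode]; ring]
    subst hc₁ hc₂ hc₃ hc₄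
    have hBn := hBne (a * p.2 - b * p.1)
    have hAn := hAne (a * p.2 - b * p.1)
    set aa := A (R (a * p.2 - b * p.1))
    set bb := B (R (a * p.2 - b * p.1))
    set a1 := deriv A (R (a * p.2 - b * p.1))
    set b1 := deriv B (R (a * p.2 - b * p.1))
    set r1 := deriv R (a * p.2 - b * p.1)
    exact alg1 e d a b κ lam aa bb a1 b1 he hd hD hS hBn hAn
  · rw [hxx, hyy]
    have hBn := hBne (a * p.2 - b * p.1)
    set aa := A (R (a * p.2 - b * p.1))
    set bb := B (R (a * p.2 - b * p.1))
    set a1 := deriv A (R (a * p.2 - b * p.1))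
    set b1 := deriv B (R (a * p.2 - b * p.1))
    set r1 := deriv R (a * p.2 - b * p.1)
    exact alg2 e d a b κ lam bb b1 r1 he hd hD hS hBn
end

section
/- Let a, b, κ, λ ∈ ℝ with (a,b) ≠ (0,0), and let A, B : ℝ → ℝ be C¹ with A > 0 and B > 0. Suppose R : ℝ → ℝ is C² with R'(t) ≠ 0 for all t and R'(t)² = ((a²+b²)⁴·B(R(t))² + 4κ(a²+b²)²(b²−a²)·B(R(t)) − 8λab(a²+b²)²·B(R(t)) − 4(2κab + λ(b²−a²))²) / ((a²+b²)⁴·A(R(t))·B(R(t))) for all t, and H : ℝ → ℝ is differentiable with H'(t) = −(2λ(b²−a²) + 4κab) / ((a²+b²)²·B(R(t))). Then the functions R(x,y) = R(ay−bx) and S(x,y) = ax+by+H(ay−bx) satisfy on ℝ²: 2A(R)(R_xx+R_yy) + A'(R)(R_x²+R_y²) − B'(R)(S_x²+S_y²) = 0 and B(R)(S_xx+S_yy) + B'(R)(R_x·S_x+R_y·S_y) = 0. -/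
open Real

open ContinuousLinearMap


lemma hasFDerivAt_lin (a b : ℝ) (p : ℝ × ℝ) :
    HasFDerivAt (fun q : ℝ × ℝ => a * q.2 - b * q.1)
      (a • (ContinuousLinearMap.snd ℝ ℝ ℝ) - b • (ContinuousLinearMap.fst ℝ ℝ ℝ)) p :=
  (hasFDerivAt_snd.const_mul a).sub (hasFDerivAt_fst.const_mul b)

lemma px_c (a b : ℝ) (g : ℝ → ℝ) (hg : Differentiable ℝ g) (p : ℝ × ℝ) :
    px (fun q : ℝ × ℝ => g (a * q.2 - b * q.1)) p = -b * deriv g (a * p.2 - b * p.1) := by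
  have h := (hg (a * p.2 - b * p.1)).hasDerivAt.comp_hasFDerivAt p (hasFDerivAt_lin a b p)
  unfold px
  rw [show (fun q : ℝ × ℝ => g (a * q.2 - b * q.1)) = (g ∘ fun q : ℝ × ℝ => a * q.2 - b * q.1) from rfl, h.fderiv]
  simp
  ring

lemma py_c (a b : ℝ) (g : ℝ → ℝ) (hg : Differentiable ℝ g) (p : ℝ × ℝ) :
    py (fun q : ℝ × ℝ => g (a * q.2 - b * q.1)) p = a * deriv g (a * p.2 - b * p.1) := by
  have h := (hg (a * p.2 - b * p.1)).hasDerivAt.comp_hasFDerivAt p (hasFDerivAt_lin a b p)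
  unfold py
  rw [show (fun q : ℝ × ℝ => g (a * q.2 - b * q.1)) = (g ∘ fun q : ℝ × ℝ => a * q.2 - b * q.1) from rfl, h.fderiv]
  simp
  ring

lemma px_s (a b : ℝ) (g : ℝ → ℝ) (hg : Differentiable ℝ g) (p : ℝ × ℝ) :
    px (fun q : ℝ × ℝ => a * q.1 + b * q.2 + g (a * q.2 - b * q.1)) p
      = a - b * deriv g (a * p.2 - b * p.1) := by
  have h1 := (hg (a * p.2 - b * p.1)).hasDerivAt.comp_hasFDerivAt p (hasFDerivAt_lin a b p)
  have h2 : HasFDerivAt (fun q : ℝ × ℝ => a * q.1 + b * q.2)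
      (a • (ContinuousLinearMap.fst ℝ ℝ ℝ) + b • (ContinuousLinearMap.snd ℝ ℝ ℝ)) p :=
    (hasFDerivAt_fst.const_mul a).add (hasFDerivAt_snd.const_mul b)
  have h := h2.add h1
  unfold px
  rw [show (fun q : ℝ × ℝ => a * q.1 + b * q.2 + g (a * q.2 - b * q.1)) = ((fun q : ℝ × ℝ => a * q.1 + b * q.2) + (g ∘ fun q : ℝ × ℝ => a * q.2 - b * q.1)) from rfl, h.fderiv]
  simp
  ring

lemma py_s (a b : ℝ) (g : ℝ → ℝ) (hg : Differentiable ℝ g) (p : ℝ × ℝ) :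
    py (fun q : ℝ × ℝ => a * q.1 + b * q.2 + g (a * q.2 - b * q.1)) p
      = b + a * deriv g (a * p.2 - b * p.1) := by
  have h1 := (hg (a * p.2 - b * p.1)).hasDerivAt.comp_hasFDerivAt p (hasFDerivAt_lin a b p)
  have h2 : HasFDerivAt (fun q : ℝ × ℝ => a * q.1 + b * q.2)
      (a • (ContinuousLinearMap.fst ℝ ℝ ℝ) + b • (ContinuousLinearMap.snd ℝ ℝ ℝ)) p :=
    (hasFDerivAt_fst.const_mul a).add (hasFDerivAt_snd.const_mul b)
  have h := h2.add h1
  unfold py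
  rw [show (fun q : ℝ × ℝ => a * q.1 + b * q.2 + g (a * q.2 - b * q.1)) = ((fun q : ℝ × ℝ => a * q.1 + b * q.2) + (g ∘ fun q : ℝ × ℝ => a * q.2 - b * q.1)) from rfl, h.fderiv]
  simp
  ring


theorem stmt_1 (a b κ lam : ℝ) (hab : (a, b) ≠ (0, 0))
    (A B : ℝ → ℝ) (hA : ContDiff ℝ 1 A) (hB : ContDiff ℝ 1 B)
    (hApos : ∀ r, 0 < A r) (hBpos : ∀ r, 0 < B r)
    (R H : ℝ → ℝ) (hR : ContDiff ℝ 2 R) (hH : Differentiable ℝ H)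
    (hR' : ∀ t, deriv R t ≠ 0)
    (hRode : ∀ t, (deriv R t) ^ 2 =
      ((a ^ 2 + b ^ 2) ^ 4 * (B (R t)) ^ 2
          + 4 * κ * (a ^ 2 + b ^ 2) ^ 2 * (b ^ 2 - a ^ 2) * B (R t)
          - 8 * lam * a * b * (a ^ 2 + b ^ 2) ^ 2 * B (R t)
          - 4 * (2 * κ * a * b + lam * (b ^ 2 - a ^ 2)) ^ 2)
        / ((a ^ 2 + b ^ 2) ^ 4 * A (R t) * B (R t)))
    (hHode : ∀ t, deriv H t =
      -(2 * lam * (b ^ 2 - a ^ 2) + 4 * κ * a * b)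
        / ((a ^ 2 + b ^ 2) ^ 2 * B (R t))) :
    ∀ p : ℝ × ℝ,
      (2 * A ((fun q : ℝ × ℝ => R (a * q.2 - b * q.1)) p) *
            (px (px (fun q : ℝ × ℝ => R (a * q.2 - b * q.1))) p
              + py (py (fun q : ℝ × ℝ => R (a * q.2 - b * q.1))) p)
          + deriv A ((fun q : ℝ × ℝ => R (a * q.2 - b * q.1)) p) *
            ((px (fun q : ℝ × ℝ => R (a * q.2 - b * q.1)) p) ^ 2
              + (py (fun q : ℝ × ℝ => R (a * q.2 - b * q.1)) p) ^ 2)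
          - deriv B ((fun q : ℝ × ℝ => R (a * q.2 - b * q.1)) p) *
            ((px (fun q : ℝ × ℝ => a * q.1 + b * q.2 + H (a * q.2 - b * q.1)) p) ^ 2
              + (py (fun q : ℝ × ℝ => a * q.1 + b * q.2 + H (a * q.2 - b * q.1)) p) ^ 2)
        = 0)
      ∧ (B ((fun q : ℝ × ℝ => R (a * q.2 - b * q.1)) p) *
            (px (px (fun q : ℝ × ℝ => a * q.1 + b * q.2 + H (a * q.2 - b * q.1))) p
              + py (py (fun q : ℝ × ℝ => a * q.1 + b * q.2 + H (a * q.2 - b * q.1))) p)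
          + deriv B ((fun q : ℝ × ℝ => R (a * q.2 - b * q.1)) p) *
            (px (fun q : ℝ × ℝ => R (a * q.2 - b * q.1)) p *
                px (fun q : ℝ × ℝ => a * q.1 + b * q.2 + H (a * q.2 - b * q.1)) p
              + py (fun q : ℝ × ℝ => R (a * q.2 - b * q.1)) p *
                py (fun q : ℝ × ℝ => a * q.1 + b * q.2 + H (a * q.2 - b * q.1)) p)
        = 0) := by
  
  have hab' : a ≠ 0 ∨ b ≠ 0 := by
    by_contra h
    push_neg at h
    exact hab (by rw [h.1, h.2])
  have hm : (0:ℝ) < a ^ 2 + b ^ 2 := by rcases hab' with h | h <;> positivity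
  have hmne : (a ^ 2 + b ^ 2 : ℝ) ≠ 0 := ne_of_gt hm
  have hRdiff : Differentiable ℝ R := hR.differentiable (by norm_num)
  have hRddiff : Differentiable ℝ (deriv R) := by
    have h2 : ContDiff ℝ ((1:WithTop ℕ∞)+1) R := (by norm_num : ((1:WithTop ℕ∞)+1) = 2) ▸ hR
    exact (contDiff_succ_iff_deriv.mp h2).2.2.differentiable one_ne_zero
  have hAdiff : Differentiable ℝ A := hA.differentiable one_ne_zero
  have hBdiff : Differentiable ℝ B := hB.differentiable one_ne_zero
  have hHfun : deriv H = fun s => -(2 * lam * (b ^ 2 - a ^ 2) + 4 * κ * a * b)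
      / ((a ^ 2 + b ^ 2) ^ 2 * B (R s)) := funext hHode
  have hH1d : Differentiable ℝ (deriv H) := by
    rw [hHfun]
    exact (differentiable_const _).div ((differentiable_const _).mul (hBdiff.comp hRdiff))
      (fun s => by have h1 := hBpos (R s); positivity)
  intro p
  beta_reduce
  set t := a * p.2 - b * p.1 with ht
  have hBne : B (R t) ≠ 0 := (hBpos (R t)).ne'
  -- first derivatives
  have h1x : px (fun q : ℝ × ℝ => R (a * q.2 - b * q.1)) p = -b * deriv R t := by
    rw [ht]; exact px_c a b R hRdiff p
  have h1y : py (fun q : ℝ × ℝ => R (a * q.2 - b * q.1)) p = a * deriv R t := by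
    rw [ht]; exact py_c a b R hRdiff p
  have hSx : px (fun q : ℝ × ℝ => a * q.1 + b * q.2 + H (a * q.2 - b * q.1)) p
      = a - b * deriv H t := by rw [ht]; exact px_s a b H hH p
  have hSy : py (fun q : ℝ × ℝ => a * q.1 + b * q.2 + H (a * q.2 - b * q.1)) p
      = b + a * deriv H t := by rw [ht]; exact py_s a b H hH p
  -- second derivatives of R-part
  have eRx : px (fun q : ℝ × ℝ => R (a * q.2 - b * q.1))
      = fun q : ℝ × ℝ => -b * deriv R (a * q.2 - b * q.1) := funext fun q => px_c a b R hRdiff q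
  have eRy : py (fun q : ℝ × ℝ => R (a * q.2 - b * q.1))
      = fun q : ℝ × ℝ => a * deriv R (a * q.2 - b * q.1) := funext fun q => py_c a b R hRdiff q
  have h2x : px (px (fun q : ℝ × ℝ => R (a * q.2 - b * q.1))) p
      = -b * (-b * deriv (deriv R) t) := by
    rw [eRx, ht]
    have h : px (fun q : ℝ × ℝ => -b * deriv R (a * q.2 - b * q.1)) p
        = -b * deriv (fun s => -b * deriv R s) (a * p.2 - b * p.1) :=
      px_c a b (fun s => -b * deriv R s) (hRddiff.const_mul (-b)) p
    rw [h, deriv_const_mul (-b : ℝ) (hRddiff _)]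
  have h2y : py (py (fun q : ℝ × ℝ => R (a * q.2 - b * q.1))) p
      = a * (a * deriv (deriv R) t) := by
    rw [eRy, ht]
    have h : py (fun q : ℝ × ℝ => a * deriv R (a * q.2 - b * q.1)) p
        = a * deriv (fun s => a * deriv R s) (a * p.2 - b * p.1) :=
      py_c a b (fun s => a * deriv R s) (hRddiff.const_mul a) p
    rw [h, deriv_const_mul (a : ℝ) (hRddiff _)]
  -- second derivatives of S-part
  have eSx : px (fun q : ℝ × ℝ => a * q.1 + b * q.2 + H (a * q.2 - b * q.1))
      = fun q : ℝ × ℝ => a - b * deriv H (a * q.2 - b * q.1) := funext fun q => px_s a b H hH q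
  have eSy : py (fun q : ℝ × ℝ => a * q.1 + b * q.2 + H (a * q.2 - b * q.1))
      = fun q : ℝ × ℝ => b + a * deriv H (a * q.2 - b * q.1) := funext fun q => py_s a b H hH q
  have hS2x : px (px (fun q : ℝ × ℝ => a * q.1 + b * q.2 + H (a * q.2 - b * q.1))) p
      = -b * -(b * deriv (deriv H) t) := by
    rw [eSx, ht]
    have h : px (fun q : ℝ × ℝ => a - b * deriv H (a * q.2 - b * q.1)) p
        = -b * deriv (fun s => a - b * deriv H s) (a * p.2 - b * p.1) :=
      px_c a b (fun s => a - b * deriv H s) ((differentiable_const a).sub (hH1d.const_mul b)) p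
    have hg : HasDerivAt (fun s => a - b * deriv H s)
        (-(b * deriv (deriv H) (a * p.2 - b * p.1))) (a * p.2 - b * p.1) :=
      HasDerivAt.const_sub a (((hH1d _).hasDerivAt).const_mul b)
    rw [h, hg.deriv]
  have hS2y : py (py (fun q : ℝ × ℝ => a * q.1 + b * q.2 + H (a * q.2 - b * q.1))) p
      = a * (a * deriv (deriv H) t) := by
    rw [eSy, ht]
    have h : py (fun q : ℝ × ℝ => b + a * deriv H (a * q.2 - b * q.1)) p
        = a * deriv (fun s => b + a * deriv H s) (a * p.2 - b * p.1) :=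
      py_c a b (fun s => b + a * deriv H s) ((differentiable_const b).add (hH1d.const_mul a)) p
    have hg : HasDerivAt (fun s => b + a * deriv H s)
        (a * deriv (deriv H) (a * p.2 - b * p.1)) (a * p.2 - b * p.1) :=
      HasDerivAt.const_add b (((hH1d _).hasDerivAt).const_mul a)
    rw [h, hg.deriv]
  -- derivative facts along t
  have hRt : HasDerivAt R (deriv R t) t := (hRdiff t).hasDerivAt
  have hBRt : HasDerivAt (fun s => B (R s)) (deriv B (R t) * deriv R t) t :=
    (hBdiff (R t)).hasDerivAt.comp t hRt
  have hARt : HasDerivAt (fun s => A (R s)) (deriv A (R t) * deriv R t) t :=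
    (hAdiff (R t)).hasDerivAt.comp t hRt
  -- H'' value
  have hden : HasDerivAt (fun s => (a ^ 2 + b ^ 2) ^ 2 * B (R s))
      ((a ^ 2 + b ^ 2) ^ 2 * (deriv B (R t) * deriv R t)) t := hBRt.const_mul _
  have hH2 : HasDerivAt (deriv H)
      ((0 * ((a ^ 2 + b ^ 2) ^ 2 * B (R t))
          - -(2 * lam * (b ^ 2 - a ^ 2) + 4 * κ * a * b)
            * ((a ^ 2 + b ^ 2) ^ 2 * (deriv B (R t) * deriv R t)))
        / ((a ^ 2 + b ^ 2) ^ 2 * B (R t)) ^ 2) t := by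
    rw [hHfun]
    exact (hasDerivAt_const t _).div hden (by have := hBpos (R t); positivity)
  have H2m : deriv (deriv H) t * ((a ^ 2 + b ^ 2) ^ 2 * (B (R t)) ^ 2)
      = (2 * lam * (b ^ 2 - a ^ 2) + 4 * κ * a * b) * (deriv B (R t) * deriv R t) := by
    rw [hH2.deriv]
    field_simp
    ring
  have H1m : deriv H t * ((a ^ 2 + b ^ 2) ^ 2 * B (R t))
      = -(2 * lam * (b ^ 2 - a ^ 2) + 4 * κ * a * b) := by
    rw [hHode t]; field_simp
  have H1sq : (deriv H t) ^ 2 * ((a ^ 2 + b ^ 2) ^ 4 * (B (R t)) ^ 2)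
      = (2 * lam * (b ^ 2 - a ^ 2) + 4 * κ * a * b) ^ 2 := by
    rw [hHode t]; field_simp
  -- the ODE, cleared of denominators
  have hfun2 : (fun s => (a ^ 2 + b ^ 2) ^ 4 * A (R s) * B (R s) * (deriv R s) ^ 2)
      = (fun s => (a ^ 2 + b ^ 2) ^ 4 * (B (R s)) ^ 2
          + (4 * κ * (b ^ 2 - a ^ 2) - 8 * lam * a * b) * (a ^ 2 + b ^ 2) ^ 2 * B (R s)
          - 4 * (2 * κ * a * b + lam * (b ^ 2 - a ^ 2)) ^ 2) := by
    funext s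
    have h := hRode s
    have hBne' := (hBpos (R s)).ne'
    have hAne' := (hApos (R s)).ne'
    field_simp at h
    linear_combination h
  have hPolyt : (a ^ 2 + b ^ 2) ^ 4 * A (R t) * B (R t) * (deriv R t) ^ 2
      = (a ^ 2 + b ^ 2) ^ 4 * (B (R t)) ^ 2
        + (4 * κ * (b ^ 2 - a ^ 2) - 8 * lam * a * b) * (a ^ 2 + b ^ 2) ^ 2 * B (R t)
        - 4 * (2 * κ * a * b + lam * (b ^ 2 - a ^ 2)) ^ 2 := congrFun hfun2 t
  -- differentiate the ODE
  have h1 : HasDerivAt (fun s => (a ^ 2 + b ^ 2) ^ 4 * A (R s) * B (R s) * (deriv R s) ^ 2)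
      (((a ^ 2 + b ^ 2) ^ 4 * (deriv A (R t) * deriv R t) * B (R t)
          + (a ^ 2 + b ^ 2) ^ 4 * A (R t) * (deriv B (R t) * deriv R t)) * (deriv R t) ^ 2
        + (a ^ 2 + b ^ 2) ^ 4 * A (R t) * B (R t)
            * (2 * deriv R t ^ 1 * deriv (deriv R) t)) t :=
    ((hARt.const_mul _).mul hBRt).mul (((hRddiff t).hasDerivAt).pow 2)
  have h2 : HasDerivAt (fun s => (a ^ 2 + b ^ 2) ^ 4 * (B (R s)) ^ 2
        + (4 * κ * (b ^ 2 - a ^ 2) - 8 * lam * a * b) * (a ^ 2 + b ^ 2) ^ 2 * B (R s)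
        - 4 * (2 * κ * a * b + lam * (b ^ 2 - a ^ 2)) ^ 2)
      ((a ^ 2 + b ^ 2) ^ 4 * (2 * B (R t) ^ 1 * (deriv B (R t) * deriv R t))
        + (4 * κ * (b ^ 2 - a ^ 2) - 8 * lam * a * b) * (a ^ 2 + b ^ 2) ^ 2
            * (deriv B (R t) * deriv R t)) t :=
    (((hBRt.pow 2).const_mul _).add (hBRt.const_mul _)).sub_const _
  have h3 := hfun2 ▸ h1
  have hkey := h3.unique h2
  have hkey2 : (a ^ 2 + b ^ 2) ^ 4 * (deriv A (R t) * (deriv R t) ^ 2 * B (R t)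
        + A (R t) * deriv B (R t) * (deriv R t) ^ 2
        + 2 * A (R t) * B (R t) * deriv (deriv R) t)
      = 2 * (a ^ 2 + b ^ 2) ^ 4 * B (R t) * deriv B (R t)
        + (4 * κ * (b ^ 2 - a ^ 2) - 8 * lam * a * b) * (a ^ 2 + b ^ 2) ^ 2
            * deriv B (R t) := by
    refine mul_left_cancel₀ (hR' t) ?_
    linear_combination hkey
  constructor
  · rw [h2x, h2y, h1x, h1y, hSx, hSy]
    have hfac : (2 * A (R t) * (-b * (-b * deriv (deriv R) t) + a * (a * deriv (deriv R) t))
        + deriv A (R t) * ((-b * deriv R t) ^ 2 + (a * deriv R t) ^ 2)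
        - deriv B (R t) * ((a - b * deriv H t) ^ 2 + (b + a * deriv H t) ^ 2))
        * ((a ^ 2 + b ^ 2) ^ 4 * (B (R t)) ^ 2) = 0 := by
      linear_combination ((a ^ 2 + b ^ 2) * B (R t)) * hkey2
        - ((a ^ 2 + b ^ 2) * deriv B (R t)) * hPolyt
        - ((a ^ 2 + b ^ 2) * deriv B (R t)) * H1sq
    rcases mul_eq_zero.mp hfac with h | h
    · exact h
    · exact absurd h (by have := hBpos (R t); positivity)
  · rw [hS2x, hS2y, h1x, h1y, hSx, hSy]
    have hfac : (B (R t) * (-b * -(b * deriv (deriv H) t) + a * (a * deriv (deriv H) t))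
        + deriv B (R t) * (-b * deriv R t * (a - b * deriv H t)
          + a * deriv R t * (b + a * deriv H t)))
        * ((a ^ 2 + b ^ 2) ^ 2 * (B (R t)) ^ 2) = 0 := by
      linear_combination ((a ^ 2 + b ^ 2) * B (R t)) * H2m
        + ((a ^ 2 + b ^ 2) * deriv B (R t) * deriv R t * B (R t)) * H1m
    rcases mul_eq_zero.mp hfac with h | h
    · exact h
    · exact absurd h (by have := hBpos (R t); positivity)
end

section
/- Let a, b, κ, λ ∈ ℝ with b² ≠ a², and let A, B : ℝ → ℝ be C¹ with A > 0 and B > 0. Suppose R : ℝ → ℝ is C² with R'(t) ≠ 0 for all t and R'(t)² = ((a²+b²)⁴·B(R(t))² + 4κ(a²+b²)³·B(R(t)) + 8λab(a²+b²)²·B(R(t)) + 4(2κab + λ(a²+b²))²) / ((a²+b²)²(b²−a²)²·A(R(t))·B(R(t))) for all t, and H : ℝ → ℝ is differentiable with H'(t) = (2λ(a²+b²) + 4κab + 2ab(a²+b²)·B(R(t))) / ((b²−a²)(a²+b²)·B(R(t))). Then the functions R(x,y) = R(ay−bx) and S(x,y) = ax+by+H(ay−bx) satisfy on ℝ²: 2A(R)(R_xx−R_yy)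 + A'(R)(R_x²−R_y²) + B'(R)(S_x²−S_y²) = 0 and B(R)(S_xx−S_yy) + B'(R)(R_x·S_x−R_y·S_y) = 0. -/
open Real

lemma key_fderiv (a b α β : ℝ) (f : ℝ → ℝ) (hf : Differentiable ℝ f) (p : ℝ × ℝ) :
    HasFDerivAt (fun q : ℝ × ℝ => α * q.1 + β * q.2 + f (a * q.2 - b * q.1))
      (α • (ContinuousLinearMap.fst ℝ ℝ ℝ) + β • (ContinuousLinearMap.snd ℝ ℝ ℝ)
        + deriv f (a * p.2 - b * p.1) • (a • (ContinuousLinearMap.snd ℝ ℝ ℝ)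
            - b • (ContinuousLinearMap.fst ℝ ℝ ℝ))) p := by
  have hu : HasFDerivAt (fun q : ℝ × ℝ => a * q.2 - b * q.1)
      (a • (ContinuousLinearMap.snd ℝ ℝ ℝ) - b • (ContinuousLinearMap.fst ℝ ℝ ℝ)) p :=
    (((ContinuousLinearMap.snd ℝ ℝ ℝ).hasFDerivAt (x := p)).const_mul a).sub
      (((ContinuousLinearMap.fst ℝ ℝ ℝ).hasFDerivAt (x := p)).const_mul b)
  have hc : HasFDerivAt (fun q : ℝ × ℝ => f (a * q.2 - b * q.1))
      (deriv f (a * p.2 - b * p.1) • (a • (ContinuousLinearMap.snd ℝ ℝ ℝ)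
        - b • (ContinuousLinearMap.fst ℝ ℝ ℝ))) p :=
    (hf _).hasDerivAt.comp_hasFDerivAt p hu
  have hl : HasFDerivAt (fun q : ℝ × ℝ => α * q.1 + β * q.2)
      (α • (ContinuousLinearMap.fst ℝ ℝ ℝ) + β • (ContinuousLinearMap.snd ℝ ℝ ℝ)) p :=
    (((ContinuousLinearMap.fst ℝ ℝ ℝ).hasFDerivAt (x := p)).const_mul α).add
      (((ContinuousLinearMap.snd ℝ ℝ ℝ).hasFDerivAt (x := p)).const_mul β)
  exact hl.add hc

lemma px_key (a b α β : ℝ) (f : ℝ → ℝ) (hf : Differentiable ℝ f) (p : ℝ × ℝ) :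
    px (fun q : ℝ × ℝ => α * q.1 + β * q.2 + f (a * q.2 - b * q.1)) p
      = α - b * deriv f (a * p.2 - b * p.1) := by
  rw [px, (key_fderiv a b α β f hf p).fderiv]
  simp
  ring

lemma py_key (a b α β : ℝ) (f : ℝ → ℝ) (hf : Differentiable ℝ f) (p : ℝ × ℝ) :
    py (fun q : ℝ × ℝ => α * q.1 + β * q.2 + f (a * q.2 - b * q.1)) p
      = β + a * deriv f (a * p.2 - b * p.1) := by
  rw [py, (key_fderiv a b α β f hf p).fderiv]
  simp
  ring

lemma pxx_key (a b α β : ℝ) (f : ℝ → ℝ) (hf : Differentiable ℝ f)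
    (hf' : Differentiable ℝ (deriv f)) (p : ℝ × ℝ) :
    px (px (fun q : ℝ × ℝ => α * q.1 + β * q.2 + f (a * q.2 - b * q.1))) p
      = b ^ 2 * deriv (deriv f) (a * p.2 - b * p.1) := by
  have h1 : px (fun q : ℝ × ℝ => α * q.1 + β * q.2 + f (a * q.2 - b * q.1))
      = fun q : ℝ × ℝ => 0 * q.1 + 0 * q.2 + (α - b * deriv f (a * q.2 - b * q.1)) := by
    funext q; rw [px_key a b α β f hf q]; ring
  rw [h1]
  have h2 := px_key a b 0 0 (fun t => α - b * deriv f t)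
    ((differentiable_const α).sub (hf'.const_mul b)) p
  rw [h2]
  have h3 : deriv (fun t => α - b * deriv f t) (a * p.2 - b * p.1)
      = -(b * deriv (deriv f) (a * p.2 - b * p.1)) := by
    have := (((hf' (a * p.2 - b * p.1)).hasDerivAt.const_mul b).const_sub α).deriv
    simpa using this
  rw [h3]; ring

lemma pyy_key (a b α β : ℝ) (f : ℝ → ℝ) (hf : Differentiable ℝ f)
    (hf' : Differentiable ℝ (deriv f)) (p : ℝ × ℝ) :
    py (py (fun q : ℝ × ℝ => α * q.1 + β * q.2 + f (a * q.2 - b * q.1))) p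
      = a ^ 2 * deriv (deriv f) (a * p.2 - b * p.1) := by
  have h1 : py (fun q : ℝ × ℝ => α * q.1 + β * q.2 + f (a * q.2 - b * q.1))
      = fun q : ℝ × ℝ => 0 * q.1 + 0 * q.2 + (β + a * deriv f (a * q.2 - b * q.1)) := by
    funext q; rw [py_key a b α β f hf q]; ring
  rw [h1]
  have h2 := py_key a b 0 0 (fun t => β + a * deriv f t)
    ((differentiable_const β).add (hf'.const_mul a)) p
  rw [h2]
  have h3 : deriv (fun t => β + a * deriv f t) (a * p.2 - b * p.1)
      = a * deriv (deriv f) (a * p.2 - b * p.1) := by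
    have := (((hf' (a * p.2 - b * p.1)).hasDerivAt.const_mul a).const_add β).deriv
    simpa using this
  rw [h3]; ring

set_option maxHeartbeats 4000000 in
theorem stmt_2 (a b κ lam : ℝ) (hab : b ^ 2 ≠ a ^ 2)
    (A B : ℝ → ℝ) (hA : ContDiff ℝ 1 A) (hB : ContDiff ℝ 1 B)
    (hApos : ∀ r, 0 < A r) (hBpos : ∀ r, 0 < B r)
    (R H : ℝ → ℝ) (hR : ContDiff ℝ 2 R) (hH : Differentiable ℝ H)
    (hR' : ∀ t, deriv R t ≠ 0)
    (hRode : ∀ t, (deriv R t) ^ 2 =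
      ((a ^ 2 + b ^ 2) ^ 4 * (B (R t)) ^ 2
          + 4 * κ * (a ^ 2 + b ^ 2) ^ 3 * B (R t)
          + 8 * lam * a * b * (a ^ 2 + b ^ 2) ^ 2 * B (R t)
          + 4 * (2 * κ * a * b + lam * (a ^ 2 + b ^ 2)) ^ 2)
        / ((a ^ 2 + b ^ 2) ^ 2 * (b ^ 2 - a ^ 2) ^ 2 * A (R t) * B (R t)))
    (hHode : ∀ t, deriv H t =
      (2 * lam * (a ^ 2 + b ^ 2) + 4 * κ * a * b
          + 2 * a * b * (a ^ 2 + b ^ 2) * B (R t))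
        / ((b ^ 2 - a ^ 2) * (a ^ 2 + b ^ 2) * B (R t))) :
    ∀ p : ℝ × ℝ,
      (2 * A ((fun q : ℝ × ℝ => R (a * q.2 - b * q.1)) p) *
            (px (px (fun q : ℝ × ℝ => R (a * q.2 - b * q.1))) p
              - py (py (fun q : ℝ × ℝ => R (a * q.2 - b * q.1))) p)
          + deriv A ((fun q : ℝ × ℝ => R (a * q.2 - b * q.1)) p) *
            ((px (fun q : ℝ × ℝ => R (a * q.2 - b * q.1)) p) ^ 2
              - (py (fun q : ℝ × ℝ => R (a * q.2 - b * q.1)) p) ^ 2)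
          + deriv B ((fun q : ℝ × ℝ => R (a * q.2 - b * q.1)) p) *
            ((px (fun q : ℝ × ℝ => a * q.1 + b * q.2 + H (a * q.2 - b * q.1)) p) ^ 2
              - (py (fun q : ℝ × ℝ => a * q.1 + b * q.2 + H (a * q.2 - b * q.1)) p) ^ 2)
        = 0)
      ∧ (B ((fun q : ℝ × ℝ => R (a * q.2 - b * q.1)) p) *
            (px (px (fun q : ℝ × ℝ => a * q.1 + b * q.2 + H (a * q.2 - b * q.1))) p
              - py (py (fun q : ℝ × ℝ => a * q.1 + b * q.2 + H (a * q.2 - b * q.1))) p)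
          + deriv B ((fun q : ℝ × ℝ => R (a * q.2 - b * q.1)) p) *
            (px (fun q : ℝ × ℝ => R (a * q.2 - b * q.1)) p *
                px (fun q : ℝ × ℝ => a * q.1 + b * q.2 + H (a * q.2 - b * q.1)) p
              - py (fun q : ℝ × ℝ => R (a * q.2 - b * q.1)) p *
                py (fun q : ℝ × ℝ => a * q.1 + b * q.2 + H (a * q.2 - b * q.1)) p)
        = 0) := by
  have hs0 : (a ^ 2 + b ^ 2) ≠ 0 := by
    intro h
    apply hab
    have ha : a ^ 2 = 0 := by nlinarith [sq_nonneg a, sq_nonneg b]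
    have hb2 : b ^ 2 = 0 := by nlinarith [sq_nonneg a, sq_nonneg b]
    rw [ha, hb2]
  have hc0 : b ^ 2 - a ^ 2 ≠ 0 := sub_ne_zero.mpr hab
  have hAd : Differentiable ℝ A := hA.differentiable one_ne_zero
  have hBd : Differentiable ℝ B := hB.differentiable one_ne_zero
  have hRd : Differentiable ℝ R := hR.differentiable two_ne_zero
  have hRd' : Differentiable ℝ (deriv R) := by
    have h2 : ContDiff ℝ (1 + 1) R := by norm_num; exact hR
    exact (contDiff_succ_iff_deriv.mp h2).2.2.differentiable one_ne_zero
  have hBR : Differentiable ℝ (fun t => B (R t)) := hBd.comp hRd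
  have hphit : ∀ t, HasDerivAt (fun t => B (R t)) (deriv B (R t) * deriv R t) t :=
    fun t => ((hBd (R t)).hasDerivAt).comp t (hRd t).hasDerivAt
  have hpsit : ∀ t, HasDerivAt (fun t => A (R t)) (deriv A (R t) * deriv R t) t :=
    fun t => ((hAd (R t)).hasDerivAt).comp t (hRd t).hasDerivAt
  have hH1 : deriv H = fun t =>
      (2 * lam * (a ^ 2 + b ^ 2) + 4 * κ * a * b
          + 2 * a * b * (a ^ 2 + b ^ 2) * B (R t))
        / ((b ^ 2 - a ^ 2) * (a ^ 2 + b ^ 2) * B (R t)) := funext hHode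
  have hden0 : ∀ t, (b ^ 2 - a ^ 2) * (a ^ 2 + b ^ 2) * B (R t) ≠ 0 :=
    fun t => mul_ne_zero (mul_ne_zero hc0 hs0) (hBpos _).ne'
  have hHd' : Differentiable ℝ (deriv H) := by
    rw [hH1]
    exact ((differentiable_const _).add (hBR.const_mul _)).div
      ((hBR.const_mul _)) hden0
  have hH2 : ∀ t, deriv (deriv H) t =
      -((2 * lam * (a ^ 2 + b ^ 2) + 4 * κ * a * b) * (deriv B (R t) * deriv R t))
        / ((b ^ 2 - a ^ 2) * (a ^ 2 + b ^ 2) * (B (R t)) ^ 2) := by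
    intro t
    have hnum : HasDerivAt (fun t => 2 * lam * (a ^ 2 + b ^ 2) + 4 * κ * a * b
          + 2 * a * b * (a ^ 2 + b ^ 2) * B (R t))
        (2 * a * b * (a ^ 2 + b ^ 2) * (deriv B (R t) * deriv R t)) t := by
      exact (hasDerivAt_const t (2 * lam * (a ^ 2 + b ^ 2) + 4 * κ * a * b)).add
        ((hphit t).const_mul (2 * a * b * (a ^ 2 + b ^ 2))) |>.congr_deriv (zero_add _)
    have hdenD : HasDerivAt (fun t => (b ^ 2 - a ^ 2) * (a ^ 2 + b ^ 2) * B (R t))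
        ((b ^ 2 - a ^ 2) * (a ^ 2 + b ^ 2) * (deriv B (R t) * deriv R t)) t :=
      (hphit t).const_mul _
    have hdiv := (hnum.div hdenD (hden0 t)).deriv
    rw [hH1]; erw [hdiv]
    have hb0 : B (R t) ≠ 0 := (hBpos _).ne'
    field_simp
    ring
  have hsq : (fun t => (deriv R t) ^ 2) = fun t =>
      ((a ^ 2 + b ^ 2) ^ 4 * (B (R t)) ^ 2
          + 4 * κ * (a ^ 2 + b ^ 2) ^ 3 * B (R t)
          + 8 * lam * a * b * (a ^ 2 + b ^ 2) ^ 2 * B (R t)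
          + 4 * (2 * κ * a * b + lam * (a ^ 2 + b ^ 2)) ^ 2)
        / ((a ^ 2 + b ^ 2) ^ 2 * (b ^ 2 - a ^ 2) ^ 2 * A (R t) * B (R t)) := funext hRode
  have hr'' : ∀ t, deriv (deriv R) t =
      ((2 * (a ^ 2 + b ^ 2) ^ 4 * B (R t) + 4 * κ * (a ^ 2 + b ^ 2) ^ 3
            + 8 * lam * a * b * (a ^ 2 + b ^ 2) ^ 2) * deriv B (R t) * A (R t) * B (R t)
          - ((a ^ 2 + b ^ 2) ^ 4 * (B (R t)) ^ 2
              + 4 * κ * (a ^ 2 + b ^ 2) ^ 3 * B (R t)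
              + 8 * lam * a * b * (a ^ 2 + b ^ 2) ^ 2 * B (R t)
              + 4 * (2 * κ * a * b + lam * (a ^ 2 + b ^ 2)) ^ 2)
            * (deriv A (R t) * B (R t) + A (R t) * deriv B (R t)))
        / (2 * (a ^ 2 + b ^ 2) ^ 2 * (b ^ 2 - a ^ 2) ^ 2 * (A (R t)) ^ 2 * (B (R t)) ^ 2) := by
    intro t
    have hA0 : A (R t) ≠ 0 := (hApos _).ne'
    have hB0 : B (R t) ≠ 0 := (hBpos _).ne'
    have hden0' : (a ^ 2 + b ^ 2) ^ 2 * (b ^ 2 - a ^ 2) ^ 2 * A (R t) * B (R t) ≠ 0 := by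
      have := hApos (R t); have := hBpos (R t)
      positivity
    have hnum : HasDerivAt (fun t => (a ^ 2 + b ^ 2) ^ 4 * (B (R t)) ^ 2
          + 4 * κ * (a ^ 2 + b ^ 2) ^ 3 * B (R t)
          + 8 * lam * a * b * (a ^ 2 + b ^ 2) ^ 2 * B (R t)
          + 4 * (2 * κ * a * b + lam * (a ^ 2 + b ^ 2)) ^ 2)
        ((a ^ 2 + b ^ 2) ^ 4 * (2 * B (R t) ^ 1 * (deriv B (R t) * deriv R t))
          + 4 * κ * (a ^ 2 + b ^ 2) ^ 3 * (deriv B (R t) * deriv R t)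
          + 8 * lam * a * b * (a ^ 2 + b ^ 2) ^ 2 * (deriv B (R t) * deriv R t)) t := by
      simpa using ((((hphit t).pow 2).const_mul ((a ^ 2 + b ^ 2) ^ 4)).add
          ((hphit t).const_mul (4 * κ * (a ^ 2 + b ^ 2) ^ 3))).add
          ((hphit t).const_mul (8 * lam * a * b * (a ^ 2 + b ^ 2) ^ 2)) |>.add_const
          (4 * (2 * κ * a * b + lam * (a ^ 2 + b ^ 2)) ^ 2)
    have hdenD : HasDerivAt (fun t => (a ^ 2 + b ^ 2) ^ 2 * (b ^ 2 - a ^ 2) ^ 2 * A (R t) * B (R t))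
        ((a ^ 2 + b ^ 2) ^ 2 * (b ^ 2 - a ^ 2) ^ 2 * (deriv A (R t) * deriv R t) * B (R t)
          + (a ^ 2 + b ^ 2) ^ 2 * (b ^ 2 - a ^ 2) ^ 2 * A (R t) * (deriv B (R t) * deriv R t)) t :=
      (((hpsit t).const_mul ((a ^ 2 + b ^ 2) ^ 2 * (b ^ 2 - a ^ 2) ^ 2)).mul (hphit t))
    have hdiv := hnum.div hdenD hden0'
    have hsq2 : HasDerivAt (fun t => (deriv R t) ^ 2) _ t :=
      hdiv.congr_of_eventuallyEq (Filter.Eventually.of_forall fun s => hRode s)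
    have hleft := ((hRd' t).hasDerivAt).pow 2
    have huniq := hleft.unique hsq2
    have h2 : 2 * deriv R t * deriv (deriv R) t = 2 * deriv R t *
        (((2 * (a ^ 2 + b ^ 2) ^ 4 * B (R t) + 4 * κ * (a ^ 2 + b ^ 2) ^ 3
            + 8 * lam * a * b * (a ^ 2 + b ^ 2) ^ 2) * deriv B (R t) * A (R t) * B (R t)
          - ((a ^ 2 + b ^ 2) ^ 4 * (B (R t)) ^ 2
              + 4 * κ * (a ^ 2 + b ^ 2) ^ 3 * B (R t)
              + 8 * lam * a * b * (a ^ 2 + b ^ 2) ^ 2 * B (R t)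
              + 4 * (2 * κ * a * b + lam * (a ^ 2 + b ^ 2)) ^ 2)
            * (deriv A (R t) * B (R t) + A (R t) * deriv B (R t)))
        / (2 * (a ^ 2 + b ^ 2) ^ 2 * (b ^ 2 - a ^ 2) ^ 2 * (A (R t)) ^ 2 * (B (R t)) ^ 2)) := by
      rw [pow_one] at huniq
      push_cast at huniq
      rw [huniq]
      field_simp
    exact mul_left_cancel₀ (mul_ne_zero two_ne_zero (hR' t)) h2
  intro p
  have hFRr : (fun q : ℝ × ℝ => R (a * q.2 - b * q.1))
      = (fun q : ℝ × ℝ => 0 * q.1 + 0 * q.2 + R (a * q.2 - b * q.1)) := by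
    funext q; ring
  have hRx : px (fun q : ℝ × ℝ => R (a * q.2 - b * q.1)) p
      = -(b * deriv R (a * p.2 - b * p.1)) := by
    rw [hFRr, px_key a b 0 0 R hRd p]; ring
  have hRy : py (fun q : ℝ × ℝ => R (a * q.2 - b * q.1)) p
      = a * deriv R (a * p.2 - b * p.1) := by
    rw [hFRr, py_key a b 0 0 R hRd p]; ring
  have hRxx : px (px (fun q : ℝ × ℝ => R (a * q.2 - b * q.1))) p
      = b ^ 2 * deriv (deriv R) (a * p.2 - b * p.1) := by
    rw [hFRr]; exact pxx_key a b 0 0 R hRd hRd' p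
  have hRyy : py (py (fun q : ℝ × ℝ => R (a * q.2 - b * q.1))) p
      = a ^ 2 * deriv (deriv R) (a * p.2 - b * p.1) := by
    rw [hFRr]; exact pyy_key a b 0 0 R hRd hRd' p
  have hSx : px (fun q : ℝ × ℝ => a * q.1 + b * q.2 + H (a * q.2 - b * q.1)) p
      = a - b * deriv H (a * p.2 - b * p.1) := px_key a b a b H hH p
  have hSy : py (fun q : ℝ × ℝ => a * q.1 + b * q.2 + H (a * q.2 - b * q.1)) p
      = b + a * deriv H (a * p.2 - b * p.1) := py_key a b a b H hH p
  have hSxx : px (px (fun q : ℝ × ℝ => a * q.1 + b * q.2 + H (a * q.2 - b * q.1))) p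
      = b ^ 2 * deriv (deriv H) (a * p.2 - b * p.1) := pxx_key a b a b H hH hHd' p
  have hSyy : py (py (fun q : ℝ × ℝ => a * q.1 + b * q.2 + H (a * q.2 - b * q.1))) p
      = a ^ 2 * deriv (deriv H) (a * p.2 - b * p.1) := pyy_key a b a b H hH hHd' p
  have hA0 : A (R (a * p.2 - b * p.1)) ≠ 0 := (hApos _).ne'
  have hB0 : B (R (a * p.2 - b * p.1)) ≠ 0 := (hBpos _).ne'
  constructor
  · beta_reduce
    rw [hRxx, hRyy, hRx, hRy, hSx, hSy]
    rw [show (∀ v : ℝ, (-(b * v)) ^ 2 - (a * v) ^ 2 = (b ^ 2 - a ^ 2) * v ^ 2)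
      from fun v => by ring]
    rw [hRode (a * p.2 - b * p.1), hr'' (a * p.2 - b * p.1),
      hHode (a * p.2 - b * p.1)]
    field_simp
    ring
  · beta_reduce
    rw [hSxx, hSyy, hRx, hRy, hSx, hSy,
      hH2 (a * p.2 - b * p.1), hHode (a * p.2 - b * p.1)]
    field_simp
    ring
end

section
/- Let d ∈ {−1, 1}, let A, B : ℝ → ℝ be C¹ with A > 0 and B > 0, and let R, S : ℝ² → ℝ be C² functions satisfying on ℝ² the Lorentzian Euler–Lagrange system: 2A(R)(R_xx−R_yy) + A'(R)(R_x²−R_y²) + d·B'(R)(S_x²−S_y²) = 0 and B(R)(S_xx−S_yy) + B'(R)(R_x·S_x−R_y·S_y) = 0. Then (∂_x − ∂_y)[A(R)(R_x+R_y)² − d·B(R)(S_x+S_y)²] = 0 and (∂_x + ∂_y)[A(R)(R_x−R_y)² − d·B(R)(S_x−S_y)²] = 0 everywhere on ℝ²; i.e., the first bracketed quantity is a function of x+y only and the second a function of x−y only. -/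
open Real

lemma aux_deriv (R : ℝ × ℝ → ℝ) (hR : ContDiff ℝ 2 R) (p : ℝ × ℝ) (v : ℝ × ℝ) :
    HasFDerivAt (fun q => fderiv ℝ R q v)
      ((ContinuousLinearMap.apply ℝ ℝ v).comp (fderiv ℝ (fderiv ℝ R) p)) p :=
  (ContinuousLinearMap.apply ℝ ℝ v).hasFDerivAt.comp p
    (((hR.fderiv_right (m := 1) (by norm_num)).differentiable (by norm_num) p).hasFDerivAt)

lemma aux_symm (R : ℝ × ℝ → ℝ) (hR : ContDiff ℝ 2 R) (p v w : ℝ × ℝ) :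
    fderiv ℝ (fderiv ℝ R) p v w = fderiv ℝ (fderiv ℝ R) p w v :=
  second_derivative_symmetric (fun y => (hR.differentiable (by norm_num) y).hasFDerivAt)
    (((hR.fderiv_right (m := 1) (by norm_num)).differentiable (by norm_num) p).hasFDerivAt) v w

lemma aux_second (R : ℝ × ℝ → ℝ) (hR : ContDiff ℝ 2 R) (p : ℝ × ℝ) (v w : ℝ × ℝ) :
    fderiv ℝ (fun q => fderiv ℝ R q v) p w = fderiv ℝ (fderiv ℝ R) p w v := by
  rw [(aux_deriv R hR p v).fderiv]; rfl

theorem stmt_3 (d : ℝ) (hd : d = -1 ∨ d = 1)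
    (A B : ℝ → ℝ) (hA : ContDiff ℝ 1 A) (hB : ContDiff ℝ 1 B)
    (hApos : ∀ r, 0 < A r) (hBpos : ∀ r, 0 < B r)
    (R S : ℝ × ℝ → ℝ) (hR : ContDiff ℝ 2 R) (hS : ContDiff ℝ 2 S)
    (hEL1 : ∀ p : ℝ × ℝ,
      2 * A (R p) * (px (px R) p - py (py R) p)
        + deriv A (R p) * ((px R p) ^ 2 - (py R p) ^ 2)
        + d * deriv B (R p) * ((px S p) ^ 2 - (py S p) ^ 2) = 0)
    (hEL2 : ∀ p : ℝ × ℝ,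
      B (R p) * (px (px S) p - py (py S) p)
        + deriv B (R p) * (px R p * px S p - py R p * py S p) = 0) :
    ∀ p : ℝ × ℝ,
      (px (fun q => A (R q) * (px R q + py R q) ^ 2
              - d * B (R q) * (px S q + py S q) ^ 2) p
        - py (fun q => A (R q) * (px R q + py R q) ^ 2
              - d * B (R q) * (px S q + py S q) ^ 2) p = 0)
      ∧ (px (fun q => A (R q) * (px R q - py R q) ^ 2
              - d * B (R q) * (px S q - py S q) ^ 2) p
        + py (fun q => A (R q) * (px R q - py R q) ^ 2
              - d * B (R q) * (px S q - py S q) ^ 2) p = 0) := by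
  intro p
  have hEL1' := hEL1 p
  have hEL2' := hEL2 p
  simp only [px, py] at hEL1' hEL2' ⊢
  rw [show px R = fun q => fderiv ℝ R q (1,0) from rfl,
      show py R = fun q => fderiv ℝ R q (0,1) from rfl] at hEL1'
  rw [show px S = fun q => fderiv ℝ S q (1,0) from rfl,
      show py S = fun q => fderiv ℝ S q (0,1) from rfl] at hEL2'
  -- rewrite the second derivatives in the EL equations
  rw [aux_second R hR p (1,0) (1,0), aux_second R hR p (0,1) (0,1)] at hEL1'
  rw [aux_second S hS p (1,0) (1,0), aux_second S hS p (0,1) (0,1)] at hEL2'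
  -- basic differentiability facts
  have hAR : HasFDerivAt (fun q => A (R q)) (deriv A (R p) • fderiv ℝ R p) p :=
    ((hA.differentiable (by norm_num) (R p)).hasDerivAt).comp_hasFDerivAt p
      ((hR.differentiable (by norm_num) p).hasFDerivAt)
  have hBR : HasFDerivAt (fun q => B (R q)) (deriv B (R p) • fderiv ℝ R p) p :=
    ((hB.differentiable (by norm_num) (R p)).hasDerivAt).comp_hasFDerivAt p
      ((hR.differentiable (by norm_num) p).hasFDerivAt)
  have hdBR : HasFDerivAt (fun q => d * B (R q)) (d • (deriv B (R p) • fderiv ℝ R p)) p :=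
    hBR.const_mul d
  have hRsym := aux_symm R hR p (1,0) (0,1)
  have hSsym := aux_symm S hS p (1,0) (0,1)
  simp only [pow_two]
  constructor
  · have hg1 : HasFDerivAt (fun q => fderiv ℝ R q (1,0) + fderiv ℝ R q (0,1))
        ((ContinuousLinearMap.apply ℝ ℝ ((1:ℝ),(0:ℝ))).comp (fderiv ℝ (fderiv ℝ R) p)
          + (ContinuousLinearMap.apply ℝ ℝ ((0:ℝ),(1:ℝ))).comp (fderiv ℝ (fderiv ℝ R) p)) p :=
      (aux_deriv R hR p (1,0)).add (aux_deriv R hR p (0,1))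
    have hg2 : HasFDerivAt (fun q => fderiv ℝ S q (1,0) + fderiv ℝ S q (0,1))
        ((ContinuousLinearMap.apply ℝ ℝ ((1:ℝ),(0:ℝ))).comp (fderiv ℝ (fderiv ℝ S) p)
          + (ContinuousLinearMap.apply ℝ ℝ ((0:ℝ),(1:ℝ))).comp (fderiv ℝ (fderiv ℝ S) p)) p :=
      (aux_deriv S hS p (1,0)).add (aux_deriv S hS p (0,1))
    have hF := (hAR.mul (hg1.mul hg1)).sub (hdBR.mul (hg2.mul hg2))
    simp only [Pi.mul_def, Pi.sub_def] at hF
    rw [hF.fderiv]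
    simp only [ContinuousLinearMap.add_apply, ContinuousLinearMap.smul_apply,
      ContinuousLinearMap.comp_apply, ContinuousLinearMap.apply_apply,
      ContinuousLinearMap.sub_apply, smul_eq_mul, pow_one]
    linear_combination (fderiv ℝ R p (1,0) + fderiv ℝ R p (0,1)) * hEL1'
      - 2*d*(fderiv ℝ S p (1,0) + fderiv ℝ S p (0,1)) * hEL2'
      + 2*(A (R p))*(fderiv ℝ R p (1,0) + fderiv ℝ R p (0,1)) * hRsym
      - 2*d*(B (R p))*(fderiv ℝ S p (1,0) + fderiv ℝ S p (0,1)) * hSsym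
  · have hg1 : HasFDerivAt (fun q => fderiv ℝ R q (1,0) - fderiv ℝ R q (0,1))
        ((ContinuousLinearMap.apply ℝ ℝ ((1:ℝ),(0:ℝ))).comp (fderiv ℝ (fderiv ℝ R) p)
          - (ContinuousLinearMap.apply ℝ ℝ ((0:ℝ),(1:ℝ))).comp (fderiv ℝ (fderiv ℝ R) p)) p :=
      (aux_deriv R hR p (1,0)).sub (aux_deriv R hR p (0,1))
    have hg2 : HasFDerivAt (fun q => fderiv ℝ S q (1,0) - fderiv ℝ S q (0,1))
        ((ContinuousLinearMap.apply ℝ ℝ ((1:ℝ),(0:ℝ))).comp (fderiv ℝ (fderiv ℝ S) p)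
          - (ContinuousLinearMap.apply ℝ ℝ ((0:ℝ),(1:ℝ))).comp (fderiv ℝ (fderiv ℝ S) p)) p :=
      (aux_deriv S hS p (1,0)).sub (aux_deriv S hS p (0,1))
    have hF := (hAR.mul (hg1.mul hg1)).sub (hdBR.mul (hg2.mul hg2))
    simp only [Pi.mul_def, Pi.sub_def] at hF
    rw [hF.fderiv]
    simp only [ContinuousLinearMap.add_apply, ContinuousLinearMap.smul_apply,
      ContinuousLinearMap.comp_apply, ContinuousLinearMap.apply_apply,
      ContinuousLinearMap.sub_apply, smul_eq_mul, pow_one]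
    linear_combination (fderiv ℝ R p (1,0) - fderiv ℝ R p (0,1)) * hEL1'
      - 2*d*(fderiv ℝ S p (1,0) - fderiv ℝ S p (0,1)) * hEL2'
      - 2*(A (R p))*(fderiv ℝ R p (1,0) - fderiv ℝ R p (0,1)) * hRsym
      + 2*d*(B (R p))*(fderiv ℝ S p (1,0) - fderiv ℝ S p (0,1)) * hSsym
end

section
/- Let d ∈ {−1, 1}, let A, B : ℝ → ℝ be C¹ with A > 0 and B > 0, and let R, S : ℝ² → ℝ be C² functions. Suppose there exist differentiable functions F, G : ℝ → ℝ such that A(R)(R_x+R_y)² − d·B(R)(S_x+S_y)² = F(x+y) and A(R)(R_x−R_y)² − d·B(R)(S_x−S_y)² = G(x−y) for all (x,y) ∈ ℝ², and suppose the Jacobian R_x·S_y − R_y·S_x never vanishes. Then R, S satisfy the Lorentzian Euler–Lagrange system: 2A(R)(R_xx−R_yy) + A'(R)(R_x²−R_y²) + d·B'(R)(S_x²−S_y²) = 0 and B(R)(S_xx−S_yy) + B'(R)(R_x·S_x−R_y·S_y) = 0 on ℝ². -/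
open Real

private lemma hasFDerivAt_fderiv_apply (f : ℝ × ℝ → ℝ) (hf : ContDiff ℝ 2 f)
    (p v : ℝ × ℝ) :
    HasFDerivAt (fun q => fderiv ℝ f q v)
      ((ContinuousLinearMap.apply ℝ ℝ v).comp (fderiv ℝ (fderiv ℝ f) p)) p := by
  have h1 : ContDiff ℝ 1 (fderiv ℝ f) := hf.fderiv_right (by norm_num)
  have h2 : HasFDerivAt (fderiv ℝ f) (fderiv ℝ (fderiv ℝ f) p) p :=
    (h1.differentiable (by norm_num) p).hasFDerivAt
  exact (ContinuousLinearMap.apply ℝ ℝ v).hasFDerivAt.comp p h2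

private lemma pxx_eq (f : ℝ × ℝ → ℝ) (hf : ContDiff ℝ 2 f) (p : ℝ × ℝ) :
    px (px f) p = fderiv ℝ (fderiv ℝ f) p (1, 0) (1, 0) := by
  have h := (hasFDerivAt_fderiv_apply f hf p (1, 0)).fderiv
  show fderiv ℝ (px f) p (1, 0) = _
  have hpx : px f = fun q => fderiv ℝ f q (1, 0) := rfl
  rw [hpx, h]
  rfl

private lemma pyy_eq (f : ℝ × ℝ → ℝ) (hf : ContDiff ℝ 2 f) (p : ℝ × ℝ) :
    py (py f) p = fderiv ℝ (fderiv ℝ f) p (0, 1) (0, 1) := by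
  have h := (hasFDerivAt_fderiv_apply f hf p (0, 1)).fderiv
  show fderiv ℝ (py f) p (0, 1) = _
  have hpy : py f = fun q => fderiv ℝ f q (0, 1) := rfl
  rw [hpy, h]
  rfl

private lemma hasDerivAt_term (A : ℝ → ℝ) (hA : ContDiff ℝ 1 A)
    (R S : ℝ × ℝ → ℝ) (hR : ContDiff ℝ 2 R) (hS : ContDiff ℝ 2 S)
    (p v w : ℝ × ℝ) :
    HasDerivAt (fun t : ℝ => A (R (p + t • v)) * (fderiv ℝ S (p + t • v) w) ^ 2)
      (deriv A (R p) * fderiv ℝ R p v * (fderiv ℝ S p w) ^ 2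
        + A (R p) * (2 * fderiv ℝ S p w * fderiv ℝ (fderiv ℝ S) p v w)) 0 := by
  have hline : HasDerivAt (fun t : ℝ => p + t • v) v 0 := by
    simpa using ((hasDerivAt_id (0 : ℝ)).smul_const v).const_add p
  have hRl : HasDerivAt (fun t : ℝ => R (p + t • v)) (fderiv ℝ R p v) 0 :=
    ((hR.differentiable (by norm_num) p).hasFDerivAt).comp_hasDerivAt_of_eq 0 hline (by simp)
  have hAl : HasDerivAt (fun t : ℝ => A (R (p + t • v)))
      (deriv A (R p) * fderiv ℝ R p v) 0 := by
    have hA' := (hA.differentiable (by norm_num) (R p)).hasDerivAt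
    exact hA'.comp_of_eq 0 hRl (by simp)
  have hSl : HasDerivAt (fun t : ℝ => fderiv ℝ S (p + t • v) w)
      (fderiv ℝ (fderiv ℝ S) p v w) 0 := by
    have h := (hasFDerivAt_fderiv_apply S hS p w).comp_hasDerivAt_of_eq 0 hline (by simp)
    exact h
  exact (hAl.mul (hSl.pow 2)).congr_deriv (by simp)

theorem stmt_4 (d : ℝ) (hd : d = -1 ∨ d = 1)
    (A B : ℝ → ℝ) (hA : ContDiff ℝ 1 A) (hB : ContDiff ℝ 1 B)
    (hApos : ∀ r, 0 < A r) (hBpos : ∀ r, 0 < B r)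
    (R S : ℝ × ℝ → ℝ) (hR : ContDiff ℝ 2 R) (hS : ContDiff ℝ 2 S)
    (F G : ℝ → ℝ) (hF : Differentiable ℝ F) (hG : Differentiable ℝ G)
    (hFI1 : ∀ p : ℝ × ℝ,
      A (R p) * (px R p + py R p) ^ 2 - d * B (R p) * (px S p + py S p) ^ 2
        = F (p.1 + p.2))
    (hFI2 : ∀ p : ℝ × ℝ,
      A (R p) * (px R p - py R p) ^ 2 - d * B (R p) * (px S p - py S p) ^ 2
        = G (p.1 - p.2))
    (hJac : ∀ p : ℝ × ℝ, px R p * py S p - py R p * px S p ≠ 0) :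
    ∀ p : ℝ × ℝ,
      (2 * A (R p) * (px (px R) p - py (py R) p)
          + deriv A (R p) * ((px R p) ^ 2 - (py R p) ^ 2)
          + d * deriv B (R p) * ((px S p) ^ 2 - (py S p) ^ 2) = 0)
      ∧ (B (R p) * (px (px S) p - py (py S) p)
          + deriv B (R p) * (px R p * px S p - py R p * py S p) = 0) := by
  intro p
  -- basis vector decompositions
  have hvp : ((1 : ℝ), (1 : ℝ)) = ((1 : ℝ), (0 : ℝ)) + ((0 : ℝ), (1 : ℝ)) := by norm_num
  have hvm : ((1 : ℝ), (-1 : ℝ)) = ((1 : ℝ), (0 : ℝ)) - ((0 : ℝ), (1 : ℝ)) := by norm_num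
  have hplus : ∀ (f : ℝ × ℝ → ℝ) (q : ℝ × ℝ),
      fderiv ℝ f q (1, 1) = px f q + py f q := by
    intro f q
    rw [hvp, map_add]; rfl
  have hminus : ∀ (f : ℝ × ℝ → ℝ) (q : ℝ × ℝ),
      fderiv ℝ f q (1, -1) = px f q - py f q := by
    intro f q
    rw [hvm, map_sub]; rfl
  -- second derivative symmetry, and cross-term computation
  have hsymR : IsSymmSndFDerivAt ℝ R p := hR.contDiffAt.isSymmSndFDerivAt (by simp [minSmoothness_of_isRCLikeNormedField])
  have hsymS : IsSymmSndFDerivAt ℝ S p := hS.contDiffAt.isSymmSndFDerivAt (by simp [minSmoothness_of_isRCLikeNormedField])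
  have hcross : ∀ (f : ℝ × ℝ → ℝ), IsSymmSndFDerivAt ℝ f p →
      (fderiv ℝ (fderiv ℝ f) p (1, -1) (1, 1)
          = fderiv ℝ (fderiv ℝ f) p (1, 0) (1, 0) - fderiv ℝ (fderiv ℝ f) p (0, 1) (0, 1))
        ∧ (fderiv ℝ (fderiv ℝ f) p (1, 1) (1, -1)
          = fderiv ℝ (fderiv ℝ f) p (1, 0) (1, 0) - fderiv ℝ (fderiv ℝ f) p (0, 1) (0, 1)) := by
    intro f hsym
    constructor
    · rw [hvm, hvp, map_sub, ContinuousLinearMap.sub_apply, map_add, map_add,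
        hsym (0, 1) (1, 0)]
      ring
    · rw [hvm, hvp, map_add, ContinuousLinearMap.add_apply, map_sub, map_sub,
        hsym (0, 1) (1, 0)]
      ring
  -- First integral along the line p + t • (1, -1)
  have key : ∀ (v w : ℝ × ℝ) (c : ℝ),
      (∀ t : ℝ, A (R (p + t • v)) * (fderiv ℝ R (p + t • v) w) ^ 2
          - d * (B (R (p + t • v)) * (fderiv ℝ S (p + t • v) w) ^ 2) = c) →
      deriv A (R p) * fderiv ℝ R p v * (fderiv ℝ R p w) ^ 2
        + A (R p) * (2 * fderiv ℝ R p w * fderiv ℝ (fderiv ℝ R) p v w)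
        - d * (deriv B (R p) * fderiv ℝ R p v * (fderiv ℝ S p w) ^ 2
          + B (R p) * (2 * fderiv ℝ S p w * fderiv ℝ (fderiv ℝ S) p v w)) = 0 := by
    intro v w c hconst
    have H := (hasDerivAt_term A hA R R hR hR p v w).sub
      ((hasDerivAt_term B hB R S hR hS p v w).const_mul d)
    have hfun : (fun t : ℝ => A (R (p + t • v)) * (fderiv ℝ R (p + t • v) w) ^ 2
        - d * (B (R (p + t • v)) * (fderiv ℝ S (p + t • v) w) ^ 2)) = fun _ => c :=
      funext hconst
    replace H : HasDerivAt (fun t : ℝ => A (R (p + t • v)) * (fderiv ℝ R (p + t • v) w) ^ 2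
        - d * (B (R (p + t • v)) * (fderiv ℝ S (p + t • v) w) ^ 2)) _ 0 := H
    rw [hfun] at H
    exact H.unique (hasDerivAt_const 0 c)
  have e1 := key (1, -1) (1, 1) (F (p.1 + p.2)) (by
    intro t
    rw [hplus R, hplus S]
    have harg : (p + t • ((1 : ℝ), (-1 : ℝ))).1 + (p + t • ((1 : ℝ), (-1 : ℝ))).2
        = p.1 + p.2 := by
      simp [Prod.smul_def]; try ring
    have := hFI1 (p + t • ((1 : ℝ), (-1 : ℝ)))
    rw [harg] at this
    linarith [this])
  have e2 := key (1, 1) (1, -1) (G (p.1 - p.2)) (by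
    intro t
    rw [hminus R, hminus S]
    have harg : (p + t • ((1 : ℝ), (1 : ℝ))).1 - (p + t • ((1 : ℝ), (1 : ℝ))).2
        = p.1 - p.2 := by
      simp [Prod.smul_def]; try ring
    have := hFI2 (p + t • ((1 : ℝ), (1 : ℝ)))
    rw [harg] at this
    linarith [this])
  rw [hminus R p, hplus R p, hplus S p, (hcross R hsymR).1, (hcross S hsymS).1] at e1
  rw [hplus R p, hminus R p, hminus S p, (hcross R hsymR).2, (hcross S hsymS).2] at e2
  rw [pxx_eq R hR p, pyy_eq R hR p, pxx_eq S hS p, pyy_eq S hS p]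
  have hJ := hJac p
  have hd0 : d ≠ 0 := by rcases hd with h | h <;> rw [h] <;> norm_num
  set rx := px R p
  set ry := py R p
  set sx := px S p
  set sy := py S p
  set RXX := fderiv ℝ (fderiv ℝ R) p (1, 0) (1, 0)
  set RYY := fderiv ℝ (fderiv ℝ R) p (0, 1) (0, 1)
  set SXX := fderiv ℝ (fderiv ℝ S) p (1, 0) (1, 0)
  set SYY := fderiv ℝ (fderiv ℝ S) p (0, 1) (0, 1)
  constructor
  · have hne : (-2 : ℝ) * (rx * sy - ry * sx) ≠ 0 := by
      intro h
      exact hJ (by linarith [mul_eq_zero.mp h])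
    refine mul_left_cancel₀ hne ?_
    rw [mul_zero]
    linear_combination (sx - sy) * e1 - (sx + sy) * e2
  · have hne : (-4 : ℝ) * d * (rx * sy - ry * sx) ≠ 0 := by
      simp only [mul_ne_zero_iff]
      exact ⟨⟨by norm_num, hd0⟩, hJ⟩
    refine mul_left_cancel₀ hne ?_
    rw [mul_zero]
    linear_combination (rx - ry) * e1 - (rx + ry) * e2
end

section
/- Let d ∈ {−1, 1}, let A, B : ℝ → ℝ be C¹ with A > 0 and B > 0, and let R, S : Ω → ℝ be C² functions on an open set Ω ⊆ ℝ² satisfying the Riemannian-domain Euler–Lagrange system: 2A(R)(R_xx+R_yy) + A'(R)(R_x²+R_y²) + d·B'(R)(S_x²+S_y²) = 0 and B(R)(S_xx+S_yy) + B'(R)(R_x·S_x+R_y·S_y) = 0 on Ω. Define Φ : Ω → ℂ by Φ = A(R)·(R_x − i·R_y)² − d·B(R)·(S_x − i·S_y)². Then ∂_xΦ + i·∂_yΦ = 0 on Ω; i.e., the Hopf differential Φ satisfies the Cauchy–Riemann equations and is holomorphic as a function of x + iy. -/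
open Real Complex

/-- First partial derivative in the `x` direction (complex-valued). -/
noncomputable def pxC (f : ℝ × ℝ → ℂ) (p : ℝ × ℝ) : ℂ := fderiv ℝ f p (1, 0)

/-- First partial derivative in the `y` direction (complex-valued). -/
noncomputable def pyC (f : ℝ × ℝ → ℂ) (p : ℝ × ℝ) : ℂ := fderiv ℝ f p (0, 1)

theorem stmt_5 (d : ℝ) (hd : d = -1 ∨ d = 1)
    (A B : ℝ → ℝ) (hA : ContDiff ℝ 1 A) (hB : ContDiff ℝ 1 B)
    (hApos : ∀ r, 0 < A r) (hBpos : ∀ r, 0 < B r)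
    (Ω : Set (ℝ × ℝ)) (hΩ : IsOpen Ω)
    (R S : ℝ × ℝ → ℝ) (hR : ContDiffOn ℝ 2 R Ω) (hS : ContDiffOn ℝ 2 S Ω)
    (hEL1 : ∀ p ∈ Ω,
      2 * A (R p) * (px (px R) p + py (py R) p)
        + deriv A (R p) * ((px R p) ^ 2 + (py R p) ^ 2)
        + d * deriv B (R p) * ((px S p) ^ 2 + (py S p) ^ 2) = 0)
    (hEL2 : ∀ p ∈ Ω,
      B (R p) * (px (px S) p + py (py S) p)
        + deriv B (R p) * (px R p * px S p + py R p * py S p) = 0) :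
    ∀ p ∈ Ω,
      pxC (fun q => (A (R q) : ℂ) * ((px R q : ℂ) - Complex.I * (py R q : ℂ)) ^ 2
            - (d : ℂ) * (B (R q) : ℂ) * ((px S q : ℂ) - Complex.I * (py S q : ℂ)) ^ 2) p
        + Complex.I *
          pyC (fun q => (A (R q) : ℂ) * ((px R q : ℂ) - Complex.I * (py R q : ℂ)) ^ 2
            - (d : ℂ) * (B (R q) : ℂ) * ((px S q : ℂ) - Complex.I * (py S q : ℂ)) ^ 2) p
        = 0 := by
  intro p hp
  have hmem : Ω ∈ nhds p := hΩ.mem_nhds hp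
  have hRp : ContDiffAt ℝ 2 R p := hR.contDiffAt hmem
  have hSp : ContDiffAt ℝ 2 S p := hS.contDiffAt hmem
  -- first derivatives
  have hRd : HasFDerivAt R (fderiv ℝ R p) p :=
    (hRp.differentiableAt (by norm_num)).hasFDerivAt
  have hSd : HasFDerivAt S (fderiv ℝ S p) p :=
    (hSp.differentiableAt (by norm_num)).hasFDerivAt
  -- second derivatives
  have hDR : ContDiffAt ℝ 1 (fderiv ℝ R) p := hRp.fderiv_right (by norm_num)
  have hDS : ContDiffAt ℝ 1 (fderiv ℝ S) p := hSp.fderiv_right (by norm_num)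
  have hDRd : HasFDerivAt (fderiv ℝ R) (fderiv ℝ (fderiv ℝ R) p) p :=
    (hDR.differentiableAt one_ne_zero).hasFDerivAt
  have hDSd : HasFDerivAt (fderiv ℝ S) (fderiv ℝ (fderiv ℝ S) p) p :=
    (hDS.differentiableAt one_ne_zero).hasFDerivAt
  set HR := fderiv ℝ (fderiv ℝ R) p with hHR
  set HS := fderiv ℝ (fderiv ℝ S) p with hHS
  set ex : (ℝ × ℝ →L[ℝ] ℝ) →L[ℝ] ℝ := ContinuousLinearMap.apply ℝ ℝ ((1:ℝ), (0:ℝ)) with hex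
  set ey : (ℝ × ℝ →L[ℝ] ℝ) →L[ℝ] ℝ := ContinuousLinearMap.apply ℝ ℝ ((0:ℝ), (1:ℝ)) with hey
  have hu : HasFDerivAt (px R) (ex.comp HR) p := ex.hasFDerivAt.comp p hDRd
  have hv : HasFDerivAt (py R) (ey.comp HR) p := ey.hasFDerivAt.comp p hDRd
  have hs : HasFDerivAt (px S) (ex.comp HS) p := ex.hasFDerivAt.comp p hDSd
  have ht : HasFDerivAt (py S) (ey.comp HS) p := ey.hasFDerivAt.comp p hDSd
  -- second partial derivatives identified
  have hpxxR : px (px R) p = HR (1, 0) (1, 0) := by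
    rw [show px (px R) p = fderiv ℝ (px R) p (1, 0) from rfl, hu.fderiv]; rfl
  have hpyyR : py (py R) p = HR (0, 1) (0, 1) := by
    rw [show py (py R) p = fderiv ℝ (py R) p (0, 1) from rfl, hv.fderiv]; rfl
  have hpxxS : px (px S) p = HS (1, 0) (1, 0) := by
    rw [show px (px S) p = fderiv ℝ (px S) p (1, 0) from rfl, hs.fderiv]; rfl
  have hpyyS : py (py S) p = HS (0, 1) (0, 1) := by
    rw [show py (py S) p = fderiv ℝ (py S) p (0, 1) from rfl, ht.fderiv]; rfl
  -- symmetry of second derivatives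
  have hsymR : HR (0, 1) (1, 0) = HR (1, 0) (0, 1) :=
    (hRp.isSymmSndFDerivAt (by norm_num)) _ _
  have hsymS : HS (0, 1) (1, 0) = HS (1, 0) (0, 1) :=
    (hSp.isSymmSndFDerivAt (by norm_num)) _ _
  -- complex lifts of first-order factors
  have hAd : HasDerivAt A (deriv A (R p)) (R p) :=
    ((hA.differentiable one_ne_zero) (R p)).hasDerivAt
  have hBd : HasDerivAt B (deriv B (R p)) (R p) :=
    ((hB.differentiable one_ne_zero) (R p)).hasDerivAt
  have hARd : HasFDerivAt (fun q => A (R q)) (deriv A (R p) • fderiv ℝ R p) p :=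
    hAd.comp_hasFDerivAt p hRd
  have hBRd : HasFDerivAt (fun q => B (R q)) (deriv B (R p) • fderiv ℝ R p) p :=
    hBd.comp_hasFDerivAt p hRd
  have hA1 : HasFDerivAt (fun q => ((A (R q) : ℝ) : ℂ))
      (Complex.ofRealCLM.comp (deriv A (R p) • fderiv ℝ R p)) p :=
    Complex.ofRealCLM.hasFDerivAt.comp p hARd
  have hB1 : HasFDerivAt (fun q => ((B (R q) : ℝ) : ℂ))
      (Complex.ofRealCLM.comp (deriv B (R p) • fderiv ℝ R p)) p :=
    Complex.ofRealCLM.hasFDerivAt.comp p hBRd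
  have hu1 : HasFDerivAt (fun q => ((px R q : ℝ) : ℂ)) (Complex.ofRealCLM.comp (ex.comp HR)) p :=
    Complex.ofRealCLM.hasFDerivAt.comp p hu
  have hv1 : HasFDerivAt (fun q => ((py R q : ℝ) : ℂ)) (Complex.ofRealCLM.comp (ey.comp HR)) p :=
    Complex.ofRealCLM.hasFDerivAt.comp p hv
  have hs1 : HasFDerivAt (fun q => ((px S q : ℝ) : ℂ)) (Complex.ofRealCLM.comp (ex.comp HS)) p :=
    Complex.ofRealCLM.hasFDerivAt.comp p hs
  have ht1 : HasFDerivAt (fun q => ((py S q : ℝ) : ℂ)) (Complex.ofRealCLM.comp (ey.comp HS)) p :=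
    Complex.ofRealCLM.hasFDerivAt.comp p ht
  have hGR : HasFDerivAt (fun q => ((px R q : ℂ)) - Complex.I * ((py R q : ℂ)))
      (Complex.ofRealCLM.comp (ex.comp HR) - Complex.I • Complex.ofRealCLM.comp (ey.comp HR)) p :=
    hu1.sub (hv1.const_mul Complex.I)
  have hGS : HasFDerivAt (fun q => ((px S q : ℂ)) - Complex.I * ((py S q : ℂ)))
      (Complex.ofRealCLM.comp (ex.comp HS) - Complex.I • Complex.ofRealCLM.comp (ey.comp HS)) p :=
    hs1.sub (ht1.const_mul Complex.I)
  have hdB1 : HasFDerivAt (fun q => (d : ℂ) * ((B (R q) : ℝ) : ℂ))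
      ((d : ℂ) • Complex.ofRealCLM.comp (deriv B (R p) • fderiv ℝ R p)) p :=
    hB1.const_mul (d : ℂ)
  have hPhi := (hA1.mul (hGR.mul hGR)).sub (hdB1.mul (hGS.mul hGS))
  set LGR := Complex.ofRealCLM.comp (ex.comp HR) - Complex.I • Complex.ofRealCLM.comp (ey.comp HR) with hLGR
  set LGS := Complex.ofRealCLM.comp (ex.comp HS) - Complex.I • Complex.ofRealCLM.comp (ey.comp HS) with hLGS
  set LA := Complex.ofRealCLM.comp (deriv A (R p) • fderiv ℝ R p) with hLA
  set LB := Complex.ofRealCLM.comp (deriv B (R p) • fderiv ℝ R p) with hLB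
  have hPhi2 : HasFDerivAt
      (fun q => ((A (R q) : ℝ) : ℂ)
          * (((px R q : ℂ) - Complex.I * (py R q : ℂ)) * ((px R q : ℂ) - Complex.I * (py R q : ℂ)))
        - ((d : ℂ) * ((B (R q) : ℝ) : ℂ))
          * (((px S q : ℂ) - Complex.I * (py S q : ℂ)) * ((px S q : ℂ) - Complex.I * (py S q : ℂ))))
      ((((A (R p) : ℝ) : ℂ)) • ((((px R p : ℂ) - Complex.I * (py R p : ℂ)) • LGR)
            + (((px R p : ℂ) - Complex.I * (py R p : ℂ)) • LGR))
        + ((((px R p : ℂ) - Complex.I * (py R p : ℂ)) * ((px R p : ℂ) - Complex.I * (py R p : ℂ))) • LA)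
        - (((d : ℂ) * ((B (R p) : ℝ) : ℂ)) • ((((px S p : ℂ) - Complex.I * (py S p : ℂ)) • LGS)
            + (((px S p : ℂ) - Complex.I * (py S p : ℂ)) • LGS))
          + ((((px S p : ℂ) - Complex.I * (py S p : ℂ)) * ((px S p : ℂ) - Complex.I * (py S p : ℂ)))
              • ((d : ℂ) • LB)))) p := hPhi
  have hfun : (fun q => (A (R q) : ℂ) * ((px R q : ℂ) - Complex.I * (py R q : ℂ)) ^ 2
            - (d : ℂ) * (B (R q) : ℂ) * ((px S q : ℂ) - Complex.I * (py S q : ℂ)) ^ 2)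
      = (fun q => ((A (R q) : ℝ) : ℂ)
          * (((px R q : ℂ) - Complex.I * (py R q : ℂ)) * ((px R q : ℂ) - Complex.I * (py R q : ℂ)))
        - ((d : ℂ) * ((B (R q) : ℝ) : ℂ))
          * (((px S q : ℂ) - Complex.I * (py S q : ℂ)) * ((px S q : ℂ) - Complex.I * (py S q : ℂ)))) :=
    funext fun q => by ring
  simp only [pxC, pyC, hfun, hPhi2.fderiv]
  -- the Euler–Lagrange equations, in terms of the second derivative bilinear maps
  have E1 := hEL1 p hp
  rw [hpxxR, hpyyR] at E1
  have E2 := hEL2 p hp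
  rw [hpxxS, hpyyS] at E2
  have E1C : 2 * (A (R p) : ℂ) * ((HR (1, 0) (1, 0) : ℂ) + (HR (0, 1) (0, 1) : ℂ))
      + ((deriv A (R p) : ℝ) : ℂ) * ((px R p : ℂ) ^ 2 + (py R p : ℂ) ^ 2)
      + (d : ℂ) * ((deriv B (R p) : ℝ) : ℂ) * ((px S p : ℂ) ^ 2 + (py S p : ℂ) ^ 2) = 0 := by
    exact_mod_cast congrArg (Complex.ofReal) E1
  have E2C : (B (R p) : ℂ) * ((HS (1, 0) (1, 0) : ℂ) + (HS (0, 1) (0, 1) : ℂ))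
      + ((deriv B (R p) : ℝ) : ℂ) * ((px R p : ℂ) * (px S p : ℂ) + (py R p : ℂ) * (py S p : ℂ)) = 0 := by
    exact_mod_cast congrArg (Complex.ofReal) E2
  have hsymRC : (HR (0, 1) (1, 0) : ℂ) = (HR (1, 0) (0, 1) : ℂ) := by exact_mod_cast hsymR
  have hsymSC : (HS (0, 1) (1, 0) : ℂ) = (HS (1, 0) (0, 1) : ℂ) := by exact_mod_cast hsymS
  simp only [hLGR, hLGS, hLA, hLB, hex, hey,
    ContinuousLinearMap.sub_apply, ContinuousLinearMap.add_apply,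
    ContinuousLinearMap.smul_apply, ContinuousLinearMap.coe_comp', Function.comp_apply,
    ContinuousLinearMap.apply_apply, Complex.ofRealCLM_apply, smul_eq_mul,
    show fderiv ℝ R p ((1 : ℝ), (0 : ℝ)) = px R p from rfl,
    show fderiv ℝ R p ((0 : ℝ), (1 : ℝ)) = py R p from rfl]
  push_cast
  linear_combination ((px R p : ℂ) - Complex.I * (py R p : ℂ)) * E1C
    - 2 * (d : ℂ) * ((px S p : ℂ) - Complex.I * (py S p : ℂ)) * E2C
    + 2 * (A (R p) : ℂ) * ((px R p : ℂ) - Complex.I * (py R p : ℂ)) * Complex.I * hsymRC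
    - 2 * (d : ℂ) * (B (R p) : ℂ) * ((px S p : ℂ) - Complex.I * (py S p : ℂ)) * Complex.I * hsymSC
    + (-2 * (A (R p) : ℂ) * ((px R p : ℂ) - Complex.I * (py R p : ℂ)) * (HR (0, 1) (0, 1) : ℂ)
        - ((deriv A (R p) : ℝ) : ℂ) * ((px R p : ℂ) - Complex.I * (py R p : ℂ)) * (py R p : ℂ) ^ 2
        + 2 * (d : ℂ) * (B (R p) : ℂ) * ((px S p : ℂ) - Complex.I * (py S p : ℂ)) * (HS (0, 1) (0, 1) : ℂ)
        - (d : ℂ) * ((deriv B (R p) : ℝ) : ℂ) * ((py S p : ℂ) ^ 2 * (px R p : ℂ)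
            + Complex.I * (py S p : ℂ) ^ 2 * (py R p : ℂ)
            - 2 * (px S p : ℂ) * (py S p : ℂ) * (py R p : ℂ))) * Complex.I_sq
end

section
/- Let d ∈ {−1, 1}, let A, B : ℝ → ℝ be C¹ with A > 0 and B > 0, and let R, S : Ω → ℝ be C² functions on an open set Ω ⊆ ℝ² whose Jacobian R_x·S_y − R_y·S_x never vanishes on Ω. Suppose the function Φ : Ω → ℂ defined by Φ = A(R)·(R_x − i·R_y)² − d·B(R)·(S_x − i·S_y)² satisfies ∂_xΦ + i·∂_yΦ = 0 on Ω. Then R, S satisfy the Riemannian-domain Euler–Lagrange system: 2A(R)(R_xx+R_yy) + A'(R)(R_x²+R_y²) + d·B'(R)(S_x²+S_y²) = 0 and B(R)(S_xx+S_yy) + B'(R)(R_x·S_x+R_y·S_y) = 0 on Ω. -/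
open Real Complex

lemma hasFDerivAt_pd {F : ℝ × ℝ → ℝ} {p : ℝ × ℝ} (hF : ContDiffAt ℝ 2 F p) (w : ℝ × ℝ) :
    HasFDerivAt (fun q => fderiv ℝ F q w)
      ((ContinuousLinearMap.apply ℝ ℝ w).comp (fderiv ℝ (fderiv ℝ F) p)) p := by
  have h1 : ContDiffAt ℝ 1 (fderiv ℝ F) p := hF.fderiv_right (by norm_num)
  have h2 := (h1.differentiableAt (by norm_num)).hasFDerivAt
  exact (ContinuousLinearMap.apply ℝ ℝ w).hasFDerivAt.comp p h2


noncomputable def LD (F : ℝ × ℝ → ℝ) (p w : ℝ × ℝ) : (ℝ × ℝ) →L[ℝ] ℂ :=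
  Complex.ofRealCLM.comp ((ContinuousLinearMap.apply ℝ ℝ w).comp (fderiv ℝ (fderiv ℝ F) p))

noncomputable def LG (c : ℝ) (F : ℝ × ℝ → ℝ) (p : ℝ × ℝ) : (ℝ × ℝ) →L[ℝ] ℂ :=
  Complex.ofRealCLM.comp (c • fderiv ℝ F p)

set_option maxHeartbeats 2000000 in
theorem stmt_6 (d : ℝ) (hd : d = -1 ∨ d = 1)
    (A B : ℝ → ℝ) (hA : ContDiff ℝ 1 A) (hB : ContDiff ℝ 1 B)
    (hApos : ∀ r, 0 < A r) (hBpos : ∀ r, 0 < B r)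
    (Ω : Set (ℝ × ℝ)) (hΩ : IsOpen Ω)
    (R S : ℝ × ℝ → ℝ) (hR : ContDiffOn ℝ 2 R Ω) (hS : ContDiffOn ℝ 2 S Ω)
    (hJac : ∀ p ∈ Ω, px R p * py S p - py R p * px S p ≠ 0)
    (hCR : ∀ p ∈ Ω,
      pxC (fun q => (A (R q) : ℂ) * ((px R q : ℂ) - Complex.I * (py R q : ℂ)) ^ 2
            - (d : ℂ) * (B (R q) : ℂ) * ((px S q : ℂ) - Complex.I * (py S q : ℂ)) ^ 2) p
        + Complex.I *
          pyC (fun q => (A (R q) : ℂ) * ((px R q : ℂ) - Complex.I * (py R q : ℂ)) ^ 2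
            - (d : ℂ) * (B (R q) : ℂ) * ((px S q : ℂ) - Complex.I * (py S q : ℂ)) ^ 2) p
        = 0) :
    ∀ p ∈ Ω,
      (2 * A (R p) * (px (px R) p + py (py R) p)
          + deriv A (R p) * ((px R p) ^ 2 + (py R p) ^ 2)
          + d * deriv B (R p) * ((px S p) ^ 2 + (py S p) ^ 2) = 0)
      ∧ (B (R p) * (px (px S) p + py (py S) p)
          + deriv B (R p) * (px R p * px S p + py R p * py S p) = 0) := by
  intro p hp
  have hRp : ContDiffAt ℝ 2 R p := hR.contDiffAt (hΩ.mem_nhds hp)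
  have hSp : ContDiffAt ℝ 2 S p := hS.contDiffAt (hΩ.mem_nhds hp)
  have hRf : HasFDerivAt R (fderiv ℝ R p) p := (hRp.differentiableAt (by norm_num)).hasFDerivAt
  have hA' : HasDerivAt A (deriv A (R p)) (R p) := (hA.differentiable (by norm_num) (R p)).hasDerivAt
  have hB' : HasDerivAt B (deriv B (R p)) (R p) := (hB.differentiable (by norm_num) (R p)).hasDerivAt
  have hARC : HasFDerivAt (fun q => ((A (R q) : ℝ) : ℂ))
      (Complex.ofRealCLM.comp (deriv A (R p) • fderiv ℝ R p)) p :=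
    Complex.ofRealCLM.hasFDerivAt.comp p (hA'.comp_hasFDerivAt p hRf)
  have hBRC : HasFDerivAt (fun q => ((B (R q) : ℝ) : ℂ))
      (Complex.ofRealCLM.comp (deriv B (R p) • fderiv ℝ R p)) p :=
    Complex.ofRealCLM.hasFDerivAt.comp p (hB'.comp_hasFDerivAt p hRf)
  have hu : HasFDerivAt (fun q => ((px R q : ℝ) : ℂ))
      (Complex.ofRealCLM.comp ((ContinuousLinearMap.apply ℝ ℝ (1, 0)).comp
        (fderiv ℝ (fderiv ℝ R) p))) p :=
    Complex.ofRealCLM.hasFDerivAt.comp p (hasFDerivAt_pd hRp (1, 0))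
  have hv : HasFDerivAt (fun q => ((py R q : ℝ) : ℂ))
      (Complex.ofRealCLM.comp ((ContinuousLinearMap.apply ℝ ℝ (0, 1)).comp
        (fderiv ℝ (fderiv ℝ R) p))) p :=
    Complex.ofRealCLM.hasFDerivAt.comp p (hasFDerivAt_pd hRp (0, 1))
  have hs : HasFDerivAt (fun q => ((px S q : ℝ) : ℂ))
      (Complex.ofRealCLM.comp ((ContinuousLinearMap.apply ℝ ℝ (1, 0)).comp
        (fderiv ℝ (fderiv ℝ S) p))) p :=
    Complex.ofRealCLM.hasFDerivAt.comp p (hasFDerivAt_pd hSp (1, 0))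
  have ht : HasFDerivAt (fun q => ((py S q : ℝ) : ℂ))
      (Complex.ofRealCLM.comp ((ContinuousLinearMap.apply ℝ ℝ (0, 1)).comp
        (fderiv ℝ (fderiv ℝ S) p))) p :=
    Complex.ofRealCLM.hasFDerivAt.comp p (hasFDerivAt_pd hSp (0, 1))
  have hW : HasFDerivAt (fun q => ((px R q : ℂ) - Complex.I * (py R q : ℂ)))
      ((Complex.ofRealCLM.comp ((ContinuousLinearMap.apply ℝ ℝ (1, 0)).comp
        (fderiv ℝ (fderiv ℝ R) p))) -
       Complex.I • (Complex.ofRealCLM.comp ((ContinuousLinearMap.apply ℝ ℝ (0, 1)).comp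
        (fderiv ℝ (fderiv ℝ R) p)))) p := hu.sub (hv.const_mul Complex.I)
  have hZ : HasFDerivAt (fun q => ((px S q : ℂ) - Complex.I * (py S q : ℂ)))
      ((Complex.ofRealCLM.comp ((ContinuousLinearMap.apply ℝ ℝ (1, 0)).comp
        (fderiv ℝ (fderiv ℝ S) p))) -
       Complex.I • (Complex.ofRealCLM.comp ((ContinuousLinearMap.apply ℝ ℝ (0, 1)).comp
        (fderiv ℝ (fderiv ℝ S) p)))) p := hs.sub (ht.const_mul Complex.I)
  have hΦ : HasFDerivAt (fun q => (A (R q) : ℂ) *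
        (((px R q : ℂ) - Complex.I * (py R q : ℂ)) * ((px R q : ℂ) - Complex.I * (py R q : ℂ)))
      - (d : ℂ) * (B (R q) : ℂ) *
        (((px S q : ℂ) - Complex.I * (py S q : ℂ)) * ((px S q : ℂ) - Complex.I * (py S q : ℂ))))
      (((A (R p) : ℂ) •
          (((px R p : ℂ) - Complex.I * (py R p : ℂ)) • (LD R p (1,0) - Complex.I • LD R p (0,1))
            + ((px R p : ℂ) - Complex.I * (py R p : ℂ)) • (LD R p (1,0) - Complex.I • LD R p (0,1)))
        + (((px R p : ℂ) - Complex.I * (py R p : ℂ)) * ((px R p : ℂ) - Complex.I * (py R p : ℂ))) •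
            LG (deriv A (R p)) R p)
       - (((d : ℂ) * (B (R p) : ℂ)) •
          (((px S p : ℂ) - Complex.I * (py S p : ℂ)) • (LD S p (1,0) - Complex.I • LD S p (0,1))
            + ((px S p : ℂ) - Complex.I * (py S p : ℂ)) • (LD S p (1,0) - Complex.I • LD S p (0,1)))
        + (((px S p : ℂ) - Complex.I * (py S p : ℂ)) * ((px S p : ℂ) - Complex.I * (py S p : ℂ))) •
            ((d : ℂ) • LG (deriv B (R p)) R p))) p := by
    have hdB : HasFDerivAt (fun q => (d : ℂ) * ((B (R q) : ℝ) : ℂ))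
        ((d : ℂ) • LG (deriv B (R p)) R p) p := hBRC.const_mul (d : ℂ)
    exact (hARC.mul (hW.mul hW)).sub (hdB.mul (hZ.mul hZ))
  have hval := hCR p hp
  simp only [pxC, pyC, pow_two] at hval
  rw [hΦ.fderiv] at hval
  simp only [LD, LG, ContinuousLinearMap.coe_sub', ContinuousLinearMap.coe_add', Pi.sub_apply,
    Pi.add_apply, ContinuousLinearMap.add_apply, ContinuousLinearMap.sub_apply,
    ContinuousLinearMap.smul_apply, ContinuousLinearMap.comp_apply,
    ContinuousLinearMap.apply_apply, Complex.ofRealCLM_apply, smul_eq_mul,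
    Pi.smul_apply] at hval
  have hsymR := hRp.isSymmSndFDerivAt (by simp [minSmoothness_of_isRCLikeNormedField]) (0, 1) (1, 0)
  have hsymS := hSp.isSymmSndFDerivAt (by simp [minSmoothness_of_isRCLikeNormedField]) (0, 1) (1, 0)
  rw [hsymR, hsymS] at hval
  rw [show fderiv ℝ R p (1, 0) = px R p from rfl, show fderiv ℝ R p (0, 1) = py R p from rfl] at hval
  have gRxx : px (px R) p = fderiv ℝ (fderiv ℝ R) p (1, 0) (1, 0) := by
    show fderiv ℝ (px R) p (1, 0) = _
    rw [show px R = (fun q => fderiv ℝ R q (1, 0)) from rfl, (hasFDerivAt_pd hRp (1, 0)).fderiv]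
    rfl
  have gRyy : py (py R) p = fderiv ℝ (fderiv ℝ R) p (0, 1) (0, 1) := by
    show fderiv ℝ (py R) p (0, 1) = _
    rw [show py R = (fun q => fderiv ℝ R q (0, 1)) from rfl, (hasFDerivAt_pd hRp (0, 1)).fderiv]
    rfl
  have gSxx : px (px S) p = fderiv ℝ (fderiv ℝ S) p (1, 0) (1, 0) := by
    show fderiv ℝ (px S) p (1, 0) = _
    rw [show px S = (fun q => fderiv ℝ S q (1, 0)) from rfl, (hasFDerivAt_pd hSp (1, 0)).fderiv]
    rfl
  have gSyy : py (py S) p = fderiv ℝ (fderiv ℝ S) p (0, 1) (0, 1) := by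
    show fderiv ℝ (py S) p (0, 1) = _
    rw [show py S = (fun q => fderiv ℝ S q (0, 1)) from rfl, (hasFDerivAt_pd hSp (0, 1)).fderiv]
    rfl
  rw [gRxx, gRyy, gSxx, gSyy]
  have hJ := hJac p hp
  rw [Complex.ext_iff] at hval
  obtain ⟨hre, him⟩ := hval
  simp only [Complex.add_re, Complex.add_im, Complex.sub_re, Complex.sub_im, Complex.mul_re,
    Complex.mul_im, Complex.I_re, Complex.I_im, Complex.ofReal_re, Complex.ofReal_im,
    Complex.zero_re, Complex.zero_im] at hre him
  set ux := px R p with hux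
  set uy := py R p with huy
  set sx := px S p with hsx0
  set sy := py S p with hsy0
  set aa := A (R p) with haa
  set bb := B (R p) with hbb
  set a1 := deriv A (R p) with ha1
  set b1 := deriv B (R p) with hb1
  set rxx := fderiv ℝ (fderiv ℝ R) p (1, 0) (1, 0) with hrxx
  set rxy := fderiv ℝ (fderiv ℝ R) p (1, 0) (0, 1) with hrxy
  set ryy := fderiv ℝ (fderiv ℝ R) p (0, 1) (0, 1) with hryy
  set sxx := fderiv ℝ (fderiv ℝ S) p (1, 0) (1, 0) with hsxx
  set sxy := fderiv ℝ (fderiv ℝ S) p (1, 0) (0, 1) with hsxy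
  set syy := fderiv ℝ (fderiv ℝ S) p (0, 1) (0, 1) with hsyy
  have h1 : ux * (2 * aa * (rxx + ryy) + a1 * (ux ^ 2 + uy ^ 2) + d * b1 * (sx ^ 2 + sy ^ 2))
      = 2 * d * sx * (bb * (sxx + syy) + b1 * (ux * sx + uy * sy)) := by
    linear_combination hre
  have h2 : uy * (2 * aa * (rxx + ryy) + a1 * (ux ^ 2 + uy ^ 2) + d * b1 * (sx ^ 2 + sy ^ 2))
      = 2 * d * sy * (bb * (sxx + syy) + b1 * (ux * sx + uy * sy)) := by
    linear_combination -him
  have hF1 : 2 * aa * (rxx + ryy) + a1 * (ux ^ 2 + uy ^ 2) + d * b1 * (sx ^ 2 + sy ^ 2) = 0 := by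
    have h3 : (ux * sy - uy * sx) *
        (2 * aa * (rxx + ryy) + a1 * (ux ^ 2 + uy ^ 2) + d * b1 * (sx ^ 2 + sy ^ 2)) = 0 := by
      linear_combination sy * h1 - sx * h2
    rcases mul_eq_zero.mp h3 with h | h
    · exact absurd h hJ
    · exact h
  refine ⟨hF1, ?_⟩
  have hd0 : d ≠ 0 := by rcases hd with h | h <;> rw [h] <;> norm_num
  by_contra hE2
  have hsx : sx = 0 := by
    have h5 : (2 * d) * (sx * (bb * (sxx + syy) + b1 * (ux * sx + uy * sy))) = 0 := by
      linear_combination ux * hF1 - h1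
    rcases mul_eq_zero.mp h5 with h | h
    · exact absurd h (by simp [hd0])
    · rcases mul_eq_zero.mp h with h | h
      · exact h
      · exact absurd h hE2
  have hsy : sy = 0 := by
    have h5 : (2 * d) * (sy * (bb * (sxx + syy) + b1 * (ux * sx + uy * sy))) = 0 := by
      linear_combination uy * hF1 - h2
    rcases mul_eq_zero.mp h5 with h | h
    · exact absurd h (by simp [hd0])
    · rcases mul_eq_zero.mp h with h | h
      · exact h
      · exact absurd h hE2
  apply hJ
  rw [hsx, hsy]
  ring
end

section
/- Let e, d ∈ {−1, 1} and a, b, κ, λ ∈ ℝ with b² ≠ e·a². Let A > 0, B > 0 and η, ρ be real numbers, and set K = A·ρ² − d·B·η². Then the pair of equations (a² + e·b²)·K = 4eκ + d·B·(b² + e·a² + 2(1−e)·a·b·η) and a·b·K = −2λ + d·B·((b²−a²)·η − a·b) holds if and only if η = (2λd(b²+e·a²) + 4κd·ab + ab(a²+b²)(e+1)·B) / ((b²−e·a²)(a²+b²)·B) and ρ² = (c₁·B² + c₂·κ·B + c₃·λ·B + c₄) / ((a²+b²)²(b²−e·a²)²·A·B), where c₁ = d·e·(a²+b²)⁴, c₂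 = 4(a²+b²)²(b²+e·a²), c₃ = 8e·ab·(a²+b²)², c₄ = 4d(2κab + λ(b²+e·a²))². -/
theorem stmt_7 (e d a b κ lam : ℝ)
    (he : e = -1 ∨ e = 1) (hd : d = -1 ∨ d = 1)
    (hab : b ^ 2 ≠ e * a ^ 2)
    (A B η ρ : ℝ) (hApos : 0 < A) (hBpos : 0 < B)
    (K : ℝ) (hK : K = A * ρ ^ 2 - d * B * η ^ 2)
    (c₁ c₂ c₃ c₄ : ℝ)
    (hc₁ : c₁ = d * e * (a ^ 2 + b ^ 2) ^ 4)
    (hc₂ : c₂ = 4 * (a ^ 2 + b ^ 2) ^ 2 * (b ^ 2 + e * a ^ 2))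
    (hc₃ : c₃ = 8 * e * a * b * (a ^ 2 + b ^ 2) ^ 2)
    (hc₄ : c₄ = 4 * d * (2 * κ * a * b + lam * (b ^ 2 + e * a ^ 2)) ^ 2) :
    ((a ^ 2 + e * b ^ 2) * K
        = 4 * e * κ + d * B * (b ^ 2 + e * a ^ 2 + 2 * (1 - e) * a * b * η)
      ∧ a * b * K = -2 * lam + d * B * ((b ^ 2 - a ^ 2) * η - a * b))
    ↔ (η = (2 * lam * d * (b ^ 2 + e * a ^ 2) + 4 * κ * d * a * b
            + a * b * (a ^ 2 + b ^ 2) * (e + 1) * B)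
          / ((b ^ 2 - e * a ^ 2) * (a ^ 2 + b ^ 2) * B)
      ∧ ρ ^ 2 = (c₁ * B ^ 2 + c₂ * κ * B + c₃ * lam * B + c₄)
          / ((a ^ 2 + b ^ 2) ^ 2 * (b ^ 2 - e * a ^ 2) ^ 2 * A * B)) := by
  have hA : A ≠ 0 := ne_of_gt hApos
  have hB : B ≠ 0 := ne_of_gt hBpos
  have hab0 : a ^ 2 + b ^ 2 ≠ 0 := by
    intro h
    apply hab
    have ha : a = 0 := by nlinarith [sq_nonneg a, sq_nonneg b]
    have hb : b = 0 := by nlinarith [sq_nonneg a, sq_nonneg b]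
    simp [ha, hb]
  have hD : b ^ 2 - e * a ^ 2 ≠ 0 := sub_ne_zero.mpr hab
  have hD1 : (b ^ 2 - e * a ^ 2) * (a ^ 2 + b ^ 2) * B ≠ 0 :=
    mul_ne_zero (mul_ne_zero hD hab0) hB
  have hD2 : (a ^ 2 + b ^ 2) ^ 2 * (b ^ 2 - e * a ^ 2) ^ 2 * A * B ≠ 0 :=
    mul_ne_zero (mul_ne_zero (mul_ne_zero (pow_ne_zero 2 hab0) (pow_ne_zero 2 hD)) hA) hB
  subst hc₁ hc₂ hc₃ hc₄
  rcases he with rfl | rfl <;> rcases hd with rfl | rfl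
  · constructor
    · rintro ⟨h1, h2⟩
      have hη : η * ((b^2 - (-1)*a^2) * (a^2+b^2) * B) = ((-2)*b^2*lam + (-4)*a*b*κ + (2)*a^2*lam) := by
        linear_combination ((1)*a*b) * h1 + ((1)*b^2 + (-1)*a^2) * h2
      refine ⟨?_, ?_⟩
      · rw [eq_div_iff hD1]
        linear_combination hη
      · rw [eq_div_iff hD2]
        have hKv : K * (a^2+b^2)^2 = 4*κ*(b^2-a^2) - 8*lam*a*b - (-1)*B*(a^2+b^2)^2 := by
          linear_combination ((-1)*b^2 + (1)*a^2) * h1 + ((4)*a*b) * h2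
        linear_combination ((-1)*b^8*B + (-4)*a^2*b^6*B + (-6)*a^4*b^4*B + (-4)*a^6*b^2*B + (-1)*a^8*B) * hK + ((1)*b^4*B + (2)*a^2*b^2*B + (1)*a^4*B) * hKv + ((2)*b^2*lam + (-1)*b^4*B*η + (4)*a*b*κ + (-2)*a^2*lam + (-2)*a^2*b^2*B*η + (-1)*a^4*B*η) * hη
    · rintro ⟨hη, hρ⟩
      rw [eq_div_iff hD1] at hη
      rw [eq_div_iff hD2] at hρ
      constructor
      · refine mul_right_cancel₀ hD2 ?_
        linear_combination ((-1)*b^10*A*B + (-3)*a^2*b^8*A*B + (-2)*a^4*b^6*A*B + (2)*a^6*b^4*A*B + (3)*a^8*b^2*A*B + (1)*a^10*A*B) * hK + ((-1)*b^2*A + (1)*a^2*A) * hρ + ((2)*b^4*lam*A + (-1)*b^6*A*B*η + (4)*a*b^3*κ*A + (4)*a*b^5*A*B + (-4)*a^2*b^2*lam*A + (-1)*a^2*b^4*A*B*η + (-4)*a^3*b*κ*A + (8)*a^3*b^3*A*B + (2)*a^4*lam*A + (1)*a^4*b^2*A*B*η + (4)*a^5*b*A*B + (1)*a^6*A*B*η)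 * hη
      · refine mul_right_cancel₀ hD2 ?_
        linear_combination ((1)*a*b^9*A*B + (4)*a^3*b^7*A*B + (6)*a^5*b^5*A*B + (4)*a^7*b^3*A*B + (1)*a^9*b*A*B) * hK + ((1)*a*b*A) * hρ + ((1)*b^6*A*B + (-2)*a*b^3*lam*A + (1)*a*b^5*A*B*η + (-4)*a^2*b^2*κ*A + (1)*a^2*b^4*A*B + (2)*a^3*b*lam*A + (2)*a^3*b^3*A*B*η + (-1)*a^4*b^2*A*B + (1)*a^5*b*A*B*η + (-1)*a^6*A*B) * hη
  · constructor
    · rintro ⟨h1, h2⟩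
      have hη : η * ((b^2 - (-1)*a^2) * (a^2+b^2) * B) = ((2)*b^2*lam + (4)*a*b*κ + (-2)*a^2*lam) := by
        linear_combination ((-1)*a*b) * h1 + ((-1)*b^2 + (1)*a^2) * h2
      refine ⟨?_, ?_⟩
      · rw [eq_div_iff hD1]
        linear_combination hη
      · rw [eq_div_iff hD2]
        have hKv : K * (a^2+b^2)^2 = 4*κ*(b^2-a^2) - 8*lam*a*b - (1)*B*(a^2+b^2)^2 := by
          linear_combination ((-1)*b^2 + (1)*a^2) * h1 + ((4)*a*b) * h2
        linear_combination ((-1)*b^8*B + (-4)*a^2*b^6*B + (-6)*a^4*b^4*B + (-4)*a^6*b^2*B + (-1)*a^8*B) * hK + ((1)*b^4*B + (2)*a^2*b^2*B + (1)*a^4*B) * hKv + ((2)*b^2*lam + (1)*b^4*B*η + (4)*a*b*κ + (-2)*a^2*lam + (2)*a^2*b^2*B*η + (1)*a^4*B*η) * hη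
    · rintro ⟨hη, hρ⟩
      rw [eq_div_iff hD1] at hη
      rw [eq_div_iff hD2] at hρ
      constructor
      · refine mul_right_cancel₀ hD2 ?_
        linear_combination ((-1)*b^10*A*B + (-3)*a^2*b^8*A*B + (-2)*a^4*b^6*A*B + (2)*a^6*b^4*A*B + (3)*a^8*b^2*A*B + (1)*a^10*A*B) * hK + ((-1)*b^2*A + (1)*a^2*A) * hρ + ((2)*b^4*lam*A + (1)*b^6*A*B*η + (4)*a*b^3*κ*A + (-4)*a*b^5*A*B + (-4)*a^2*b^2*lam*A + (1)*a^2*b^4*A*B*η + (-4)*a^3*b*κ*A + (-8)*a^3*b^3*A*B + (2)*a^4*lam*A + (-1)*a^4*b^2*A*B*η + (-4)*a^5*b*A*B + (-1)*a^6*A*B*η) * hη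
      · refine mul_right_cancel₀ hD2 ?_
        linear_combination ((1)*a*b^9*A*B + (4)*a^3*b^7*A*B + (6)*a^5*b^5*A*B + (4)*a^7*b^3*A*B + (1)*a^9*b*A*B) * hK + ((1)*a*b*A) * hρ + ((-1)*b^6*A*B + (-2)*a*b^3*lam*A + (-1)*a*b^5*A*B*η + (-4)*a^2*b^2*κ*A + (-1)*a^2*b^4*A*B + (2)*a^3*b*lam*A + (-2)*a^3*b^3*A*B*η + (1)*a^4*b^2*A*B + (-1)*a^5*b*A*B*η + (1)*a^6*A*B) * hη
  · constructor
    · rintro ⟨h1, h2⟩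
      have hη : η * ((b^2 - (1)*a^2) * (a^2+b^2) * B) = ((-2)*b^2*lam + (-4)*a*b*κ + (2)*a*b^3*B + (-2)*a^2*lam + (2)*a^3*b*B) := by
        linear_combination ((-1)*a*b) * h1 + ((1)*b^2 + (1)*a^2) * h2
      refine ⟨?_, ?_⟩
      · rw [eq_div_iff hD1]
        linear_combination hη
      · rw [eq_div_iff hD2]
        linear_combination ((-1)*b^8*B + (2)*a^4*b^4*B + (-1)*a^8*B) * hK + ((1)*b^6*B + (-1)*a^2*b^4*B + (-1)*a^4*b^2*B + (1)*a^6*B) * h1 + ((2)*b^2*lam + (-1)*b^4*B*η + (4)*a*b*κ + (-2)*a*b^3*B + (2)*a^2*lam + (-2)*a^3*b*B + (1)*a^4*B*η) * hη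
    · rintro ⟨hη, hρ⟩
      rw [eq_div_iff hD1] at hη
      rw [eq_div_iff hD2] at hρ
      constructor
      · refine mul_right_cancel₀ hD2 ?_
        linear_combination ((1)*b^10*A*B + (1)*a^2*b^8*A*B + (-2)*a^4*b^6*A*B + (-2)*a^6*b^4*A*B + (1)*a^8*b^2*A*B + (1)*a^10*A*B) * hK + ((1)*b^2*A + (1)*a^2*A) * hρ + ((-2)*b^4*lam*A + (1)*b^6*A*B*η + (-4)*a*b^3*κ*A + (2)*a*b^5*A*B + (-4)*a^2*b^2*lam*A + (1)*a^2*b^4*A*B*η + (-4)*a^3*b*κ*A + (4)*a^3*b^3*A*B + (-2)*a^4*lam*A + (-1)*a^4*b^2*A*B*η + (2)*a^5*b*A*B + (-1)*a^6*A*B*η) * hη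
      · refine mul_right_cancel₀ hD2 ?_
        linear_combination ((1)*a*b^9*A*B + (-2)*a^5*b^5*A*B + (1)*a^9*b*A*B) * hK + ((1)*a*b*A) * hρ + ((1)*b^6*A*B + (-2)*a*b^3*lam*A + (1)*a*b^5*A*B*η + (-4)*a^2*b^2*κ*A + (1)*a^2*b^4*A*B + (-2)*a^3*b*lam*A + (1)*a^4*b^2*A*B + (-1)*a^5*b*A*B*η + (1)*a^6*A*B) * hη
  · constructor
    · rintro ⟨h1, h2⟩
      have hη : η * ((b^2 - (1)*a^2) * (a^2+b^2) * B) = ((2)*b^2*lam + (4)*a*b*κ + (2)*a*b^3*B + (2)*a^2*lam + (2)*a^3*b*B) := by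
        linear_combination ((1)*a*b) * h1 + ((-1)*b^2 + (-1)*a^2) * h2
      refine ⟨?_, ?_⟩
      · rw [eq_div_iff hD1]
        linear_combination hη
      · rw [eq_div_iff hD2]
        linear_combination ((-1)*b^8*B + (2)*a^4*b^4*B + (-1)*a^8*B) * hK + ((1)*b^6*B + (-1)*a^2*b^4*B + (-1)*a^4*b^2*B + (1)*a^6*B) * h1 + ((2)*b^2*lam + (1)*b^4*B*η + (4)*a*b*κ + (2)*a*b^3*B + (2)*a^2*lam + (2)*a^3*b*B + (-1)*a^4*B*η) * hη
    · rintro ⟨hη, hρ⟩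
      rw [eq_div_iff hD1] at hη
      rw [eq_div_iff hD2] at hρ
      constructor
      · refine mul_right_cancel₀ hD2 ?_
        linear_combination ((1)*b^10*A*B + (1)*a^2*b^8*A*B + (-2)*a^4*b^6*A*B + (-2)*a^6*b^4*A*B + (1)*a^8*b^2*A*B + (1)*a^10*A*B) * hK + ((1)*b^2*A + (1)*a^2*A) * hρ + ((-2)*b^4*lam*A + (-1)*b^6*A*B*η + (-4)*a*b^3*κ*A + (-2)*a*b^5*A*B + (-4)*a^2*b^2*lam*A + (-1)*a^2*b^4*A*B*η + (-4)*a^3*b*κ*A + (-4)*a^3*b^3*A*B + (-2)*a^4*lam*A + (1)*a^4*b^2*A*B*η + (-2)*a^5*b*A*B + (1)*a^6*A*B*η) * hη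
      · refine mul_right_cancel₀ hD2 ?_
        linear_combination ((1)*a*b^9*A*B + (-2)*a^5*b^5*A*B + (1)*a^9*b*A*B) * hK + ((1)*a*b*A) * hρ + ((-1)*b^6*A*B + (-2)*a*b^3*lam*A + (-1)*a*b^5*A*B*η + (-4)*a^2*b^2*κ*A + (-1)*a^2*b^4*A*B + (-2)*a^3*b*lam*A + (-1)*a^4*b^2*A*B + (1)*a^5*b*A*B*η + (-1)*a^6*A*B) * hη
end

section
/- Let e, d ∈ {−1, 1} and a, b, κ, λ ∈ ℝ with b² ≠ e·a², and let A, B : ℝ → ℝ be C¹ with A > 0 and B > 0. Let R, H : ℝ → ℝ be C² with R'(t) ≠ 0 for all t, and suppose that for all t ∈ ℝ the two identities (a² + e·b²)·K(t) = 4eκ + d·B(R(t))·(b² + e·a² + 2(1−e)·a·b·H'(t)) and a·b·K(t) = −2λ + d·B(R(t))·((b²−a²)·H'(t) − a·b) hold, where K(t) = A(R(t))·R'(t)² − d·B(R(t))·H'(t)². Then the map u(x,y) = (R(ay−bx), ax+by+H(ay−bx)) is harmonic on ℝ² with parameters e, d and target data A, B. -/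
/-!
Along the wave the map depends only on `t = a y - b x`, so at each point (EL1) and (EL2) become
two polynomial identities in `R', R'', H', H''` at `t`. Differentiating the two first integrals
gives a linear system for `K'` and `(B(R) H')'` in terms of `(B ∘ R)'`, with determinant
`-d (a² + b²) (a² - e b²) ≠ 0`. Its solution, `K' = e d (B ∘ R)'` and
`(a² - e b²) (B(R) H')' + (1 + e) a b (B ∘ R)' = 0`, is (EL2) itself and `R'` times (EL1).
-/

open Real

def travelingWave (a b c₁ c₂ : ℝ) (g : ℝ → ℝ) (q : ℝ × ℝ) : ℝ :=
  c₁ * q.1 + c₂ * q.2 + g (a * q.2 - b * q.1)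

section TravelingWave

variable {a b c₁ c₂ : ℝ} {g : ℝ → ℝ}

lemma hasFDerivAt_travelingWave {p : ℝ × ℝ} (hg : DifferentiableAt ℝ g (a * p.2 - b * p.1)) :
    HasFDerivAt (travelingWave a b c₁ c₂ g)
      ((c₁ - b * deriv g (a * p.2 - b * p.1)) • ContinuousLinearMap.fst ℝ ℝ ℝ
        + (c₂ + a * deriv g (a * p.2 - b * p.1)) • ContinuousLinearMap.snd ℝ ℝ ℝ) p := by
  have hphase : HasFDerivAt (fun q : ℝ × ℝ => a * q.2 - b * q.1)
      (a • ContinuousLinearMap.snd ℝ ℝ ℝ - b • ContinuousLinearMap.fst ℝ ℝ ℝ) p :=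
    (hasFDerivAt_snd.const_mul a).sub (hasFDerivAt_fst.const_mul b)
  refine (((hasFDerivAt_fst.const_mul c₁).add (hasFDerivAt_snd.const_mul c₂)).add
    (hg.hasDerivAt.comp_hasFDerivAt p hphase)).congr_fderiv ?_
  module

lemma px_travelingWave (hg : Differentiable ℝ g) :
    px (travelingWave a b c₁ c₂ g) = travelingWave a b 0 0 (fun t => c₁ - b * deriv g t) := by
  funext p
  simp [px, travelingWave, (hasFDerivAt_travelingWave (c₁ := c₁) (c₂ := c₂) (hg _)).fderiv]

lemma py_travelingWave (hg : Differentiable ℝ g) :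
    py (travelingWave a b c₁ c₂ g) = travelingWave a b 0 0 (fun t => c₂ + a * deriv g t) := by
  funext p
  simp [py, travelingWave, (hasFDerivAt_travelingWave (c₁ := c₁) (c₂ := c₂) (hg _)).fderiv]

lemma px_px_travelingWave (hg : ContDiff ℝ 2 g) :
    px (px (travelingWave a b c₁ c₂ g))
      = travelingWave a b 0 0 (fun t => b ^ 2 * deriv (deriv g) t) := by
  rw [px_travelingWave (hg.differentiable two_ne_zero),
    px_travelingWave ((hg.differentiable_deriv_two.const_mul b).const_sub c₁)]
  congr 1
  funext t
  simp only [deriv_const_sub, deriv_const_mul_field']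
  ring

lemma py_py_travelingWave (hg : ContDiff ℝ 2 g) :
    py (py (travelingWave a b c₁ c₂ g))
      = travelingWave a b 0 0 (fun t => a ^ 2 * deriv (deriv g) t) := by
  rw [py_travelingWave (hg.differentiable two_ne_zero),
    py_travelingWave ((hg.differentiable_deriv_two.const_mul a).const_add c₂)]
  congr 1
  funext t
  simp only [deriv_const_add', deriv_const_mul_field', zero_add]
  ring

end TravelingWave

lemma eq_of_hasDerivAt_of_first_integral {K F G : ℝ → ℝ} {C c₀ c₁ c₂ K' F' G' t : ℝ}
    (hK : HasDerivAt K K' t) (hF : HasDerivAt F F' t) (hG : HasDerivAt G G' t)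
    (h : ∀ s, C * K s = c₀ + c₁ * F s + c₂ * G s) :
    C * K' = c₁ * F' + c₂ * G' := by
  have hCK := hK.const_mul C
  rw [show (fun s => C * K s) = fun s => c₀ + c₁ * F s + c₂ * G s from funext h] at hCK
  exact hCK.unique ((((hF.const_mul c₁).const_add c₀).add (hG.const_mul c₂)))

lemma hasDerivAt_energy {A B R H : ℝ → ℝ} {d t : ℝ}
    (hA : DifferentiableAt ℝ A (R t)) (hB : DifferentiableAt ℝ B (R t))
    (hR : DifferentiableAt ℝ R t) (hR' : DifferentiableAt ℝ (deriv R) t)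
    (hH' : DifferentiableAt ℝ (deriv H) t) :
    HasDerivAt (fun s => A (R s) * deriv R s ^ 2 - d * B (R s) * deriv H s ^ 2)
      (deriv A (R t) * deriv R t ^ 3 + 2 * A (R t) * deriv R t * deriv (deriv R) t
        - d * (deriv B (R t) * deriv R t * deriv H t ^ 2
          + 2 * B (R t) * deriv H t * deriv (deriv H) t)) t := by
  have hAR := hA.hasDerivAt.comp t hR.hasDerivAt
  have hBR := hB.hasDerivAt.comp t hR.hasDerivAt
  refine ((hAR.mul (hR'.hasDerivAt.pow 2)).sub
    ((hBR.const_mul d).mul (hH'.hasDerivAt.pow 2))).congr_deriv ?_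
  simp only [Function.comp_apply, Pi.pow_apply, Nat.cast_ofNat]
  ring

lemma eq_of_differentiated_first_integrals {e d a b D P Q : ℝ}
    (he : e ^ 2 = 1) (hd : d ≠ 0) (hab : b ^ 2 ≠ e * a ^ 2)
    (h₁ : (a ^ 2 + e * b ^ 2) * D = d * (b ^ 2 + e * a ^ 2) * P + d * (2 * (1 - e) * a * b) * Q)
    (h₂ : a * b * D = d * (-(a * b)) * P + d * (b ^ 2 - a ^ 2) * Q) :
    D = e * d * P ∧ (a ^ 2 - e * b ^ 2) * Q + (1 + e) * a * b * P = 0 := by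
  have hab₀ : a ^ 2 + b ^ 2 ≠ 0 := by
    intro h
    have ha : a = 0 := by nlinarith [sq_nonneg a, sq_nonneg b]
    have hb : b = 0 := by nlinarith [sq_nonneg a, sq_nonneg b]
    simp [ha, hb] at hab
  constructor
  · have h : (a ^ 2 + b ^ 2) ^ 2 * (D - e * d * P) = 0 := by
      linear_combination (a ^ 2 + e * b ^ 2) * h₁ + 2 * (1 - e) * a * b * h₂
        - (b ^ 4 * D - d * a ^ 2 * b ^ 2 * P + 2 * d * a * b ^ 3 * Q) * he
    simpa [sub_eq_zero, hab₀] using h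
  · have h : d * (a ^ 2 + b ^ 2) * ((a ^ 2 - e * b ^ 2) * Q + (1 + e) * a * b * P) = 0 := by
      linear_combination (a ^ 2 + e * b ^ 2) * h₂ - a * b * h₁
    simpa [hd, hab₀] using h

lemma eulerLagrange_of_energy_deriv {e d a b A₀ A₁ B₀ B₁ r₁ r₂ h₁ h₂ : ℝ}
    (he : e ^ 2 = 1) (hr₁ : r₁ ≠ 0)
    (hD : A₁ * r₁ ^ 3 + 2 * A₀ * r₁ * r₂ - d * (B₁ * r₁ * h₁ ^ 2 + 2 * B₀ * h₁ * h₂)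
      = e * d * (B₁ * r₁))
    (hQ : (a ^ 2 - e * b ^ 2) * (B₁ * r₁ * h₁ + B₀ * h₂) + (1 + e) * a * b * (B₁ * r₁) = 0) :
    2 * A₀ * (e * b ^ 2 - a ^ 2) * r₂ + A₁ * (e * b ^ 2 - a ^ 2) * r₁ ^ 2
        + d * B₁ * (e * (a - b * h₁) ^ 2 - (b + a * h₁) ^ 2) = 0
      ∧ B₀ * (e * b ^ 2 - a ^ 2) * h₂ + B₁ * (e * (-(b * r₁)) * (a - b * h₁) - a * r₁ * (b + a * h₁))
        = 0 := by
  constructor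
  · have h : r₁ * (2 * A₀ * (e * b ^ 2 - a ^ 2) * r₂ + A₁ * (e * b ^ 2 - a ^ 2) * r₁ ^ 2
        + d * B₁ * (e * (a - b * h₁) ^ 2 - (b + a * h₁) ^ 2)) = 0 := by
      linear_combination (e * b ^ 2 - a ^ 2) * hD - 2 * d * h₁ * hQ + d * B₁ * r₁ * b ^ 2 * he
    simpa [hr₁] using h
  · linear_combination -hQ

theorem stmt_8_general (e d a b κ lam : ℝ)
    (he : e = -1 ∨ e = 1) (hd : d = -1 ∨ d = 1)
    (hab : b ^ 2 ≠ e * a ^ 2)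
    (A B : ℝ → ℝ) (hA : ContDiff ℝ 1 A) (hB : ContDiff ℝ 1 B)
    (R H : ℝ → ℝ) (hR : ContDiff ℝ 2 R) (hH : ContDiff ℝ 2 H)
    (hR' : ∀ t, deriv R t ≠ 0)
    (hK1 : ∀ t : ℝ,
      (a ^ 2 + e * b ^ 2) *
          (A (R t) * (deriv R t) ^ 2 - d * B (R t) * (deriv H t) ^ 2)
        = 4 * e * κ
          + d * B (R t) * (b ^ 2 + e * a ^ 2 + 2 * (1 - e) * a * b * deriv H t))
    (hK2 : ∀ t : ℝ,
      a * b * (A (R t) * (deriv R t) ^ 2 - d * B (R t) * (deriv H t) ^ 2)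
        = -2 * lam + d * B (R t) * ((b ^ 2 - a ^ 2) * deriv H t - a * b)) :
    IsHarmonic e d A B
      (fun p => R (a * p.2 - b * p.1))
      (fun p => a * p.1 + b * p.2 + H (a * p.2 - b * p.1)) := by
  have he₂ : e ^ 2 = 1 := by rcases he with rfl | rfl <;> norm_num
  have hd₀ : d ≠ 0 := by rcases hd with rfl | rfl <;> norm_num
  have hRd := hR.differentiable two_ne_zero
  have hHd := hH.differentiable two_ne_zero
  have hRwave : (fun p : ℝ × ℝ => R (a * p.2 - b * p.1)) = travelingWave a b 0 0 R := by
    funext p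
    simp [travelingWave]
  rw [hRwave]
  change IsHarmonic e d A B (travelingWave a b 0 0 R) (travelingWave a b a b H)
  intro p
  set t := a * p.2 - b * p.1
  have hBR : HasDerivAt (fun s => B (R s)) (deriv B (R t) * deriv R t) t :=
    (hB.differentiable one_ne_zero _).hasDerivAt.comp t (hRd t).hasDerivAt
  have hBRH : HasDerivAt (fun s => B (R s) * deriv H s)
      (deriv B (R t) * deriv R t * deriv H t + B (R t) * deriv (deriv H) t) t :=
    hBR.mul (hH.differentiable_deriv_two t).hasDerivAt
  have hK := hasDerivAt_energy (d := d) (hA.differentiable one_ne_zero _)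
    (hB.differentiable one_ne_zero _) (hRd t) (hR.differentiable_deriv_two t)
    (hH.differentiable_deriv_two t)
  obtain ⟨hD, hQ⟩ := eq_of_differentiated_first_integrals he₂ hd₀ hab
    (eq_of_hasDerivAt_of_first_integral (c₀ := 4 * e * κ) hK hBR hBRH
      (fun s => by linear_combination hK1 s))
    (eq_of_hasDerivAt_of_first_integral (c₀ := -2 * lam) hK hBR hBRH
      (fun s => by linear_combination hK2 s))
  obtain ⟨hEL₁, hEL₂⟩ := eulerLagrange_of_energy_deriv he₂ (hR' t) hD hQ
  rw [px_px_travelingWave hR, py_py_travelingWave hR, px_px_travelingWave hH,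
    py_py_travelingWave hH, px_travelingWave hRd, py_travelingWave hRd, px_travelingWave hHd,
    py_travelingWave hHd]
  simp only [travelingWave, zero_mul, zero_add]
  exact ⟨by linear_combination hEL₁, by linear_combination hEL₂⟩

theorem stmt_8 (e d a b κ lam : ℝ)
    (he : e = -1 ∨ e = 1) (hd : d = -1 ∨ d = 1)
    (hab : b ^ 2 ≠ e * a ^ 2)
    (A B : ℝ → ℝ) (hA : ContDiff ℝ 1 A) (hB : ContDiff ℝ 1 B)
    (hApos : ∀ r, 0 < A r) (hBpos : ∀ r, 0 < B r)
    (R H : ℝ → ℝ) (hR : ContDiff ℝ 2 R) (hH : ContDiff ℝ 2 H)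
    (hR' : ∀ t, deriv R t ≠ 0)
    (hK1 : ∀ t : ℝ,
      (a ^ 2 + e * b ^ 2) *
          (A (R t) * (deriv R t) ^ 2 - d * B (R t) * (deriv H t) ^ 2)
        = 4 * e * κ
          + d * B (R t) * (b ^ 2 + e * a ^ 2 + 2 * (1 - e) * a * b * deriv H t))
    (hK2 : ∀ t : ℝ,
      a * b * (A (R t) * (deriv R t) ^ 2 - d * B (R t) * (deriv H t) ^ 2)
        = -2 * lam + d * B (R t) * ((b ^ 2 - a ^ 2) * deriv H t - a * b)) :
    IsHarmonic e d A B
      (fun p => R (a * p.2 - b * p.1))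
      (fun p => a * p.1 + b * p.2 + H (a * p.2 - b * p.1)) :=
  stmt_8_general e d a b κ lam he hd hab A B hA hB R H hR hH hR' hK1 hK2
end

section
/- Let c > 1, θ ∈ (0, π/2), and a, b ∈ ℝ with (a,b) ≠ (0,0). Set ω = 1/√(c²−1), t(x,y) = ay−bx, and let Ω = {(x,y) ∈ ℝ² : cos(ω·t(x,y)) ≠ 0}. Define on Ω: R(x,y) = arccos(cosθ·sin(ω·t(x,y))) and S(x,y) = ax + by + arctan(sinθ·tan(ω·t(x,y))). Let A(r) = c²·sin²r + cos²r and B(r) = sin²r. Then on Ω: 2A(R)(R_xx+R_yy) + A'(R)(R_x²+R_y²) − B'(R)(S_x²+S_y²) = 0 and B(R)(S_xx+S_yy) + B'(R)(R_x·S_x+R_y·S_y) = 0. -/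
open Real Topology Filter

-- positivity of the square-root quantity
lemma Epos {k s : ℝ} (hs : 0 < s) (hks : k^2 + s^2 = 1) (v : ℝ) :
    0 < Real.sqrt (1 - (k * Real.sin v)^2) := by
  apply Real.sqrt_pos.2
  nlinarith [Real.sin_sq_le_one v, sq_nonneg k, sq_nonneg (Real.sin v),
    mul_le_mul_of_nonneg_left (Real.sin_sq_le_one v) (sq_nonneg k)]

lemma Esq {k s : ℝ} (hs : 0 < s) (hks : k^2 + s^2 = 1) (v : ℝ) :
    (Real.sqrt (1 - (k * Real.sin v)^2))^2 = 1 - (k * Real.sin v)^2 := by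
  apply Real.sq_sqrt
  nlinarith [Real.sin_sq_le_one v, sq_nonneg k,
    mul_le_mul_of_nonneg_left (Real.sin_sq_le_one v) (sq_nonneg k)]

-- derivative of E
lemma hasDerivAt_E {k s : ℝ} (hs : 0 < s) (hks : k^2 + s^2 = 1) (v : ℝ) :
    HasDerivAt (fun w => Real.sqrt (1 - (k * Real.sin w)^2))
      (-(k^2 * Real.sin v * Real.cos v) / Real.sqrt (1 - (k * Real.sin v)^2)) v := by
  have h1 : HasDerivAt (fun w => k * Real.sin w) (k * Real.cos v) v :=
    (Real.hasDerivAt_sin v).const_mul k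
  have h2 := (h1.pow 2).const_sub 1
  simp only [Pi.pow_apply] at h2
  have h3 := h2.sqrt (ne_of_gt (by
    nlinarith [Real.sin_sq_le_one v, sq_nonneg k,
      mul_le_mul_of_nonneg_left (Real.sin_sq_le_one v) (sq_nonneg k)]))
  refine h3.congr_deriv (Eq.symm ?_)
  have hE := Epos hs hks v
  field_simp
  ring

-- derivative of g = arccos (k sin v)
lemma hasDerivAt_g {k s : ℝ} (hk : 0 < k) (hk1 : k < 1) (hs : 0 < s)
    (hks : k^2 + s^2 = 1) (v : ℝ) :
    HasDerivAt (fun w => Real.arccos (k * Real.sin w))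
      (-(k * Real.cos v) / Real.sqrt (1 - (k * Real.sin v)^2)) v := by
  have h1 : HasDerivAt (fun w => k * Real.sin w) (k * Real.cos v) v :=
    (Real.hasDerivAt_sin v).const_mul k
  have hlt : |k * Real.sin v| < 1 := by
    rw [abs_mul, abs_of_pos hk]
    calc k * |Real.sin v| ≤ k * 1 := by
          exact mul_le_mul_of_nonneg_left (abs_le.2 ⟨Real.neg_one_le_sin v, Real.sin_le_one v⟩) hk.le
      _ < 1 := by linarith
  have hb := abs_lt.1 hlt
  have h2 := Real.hasDerivAt_arccos (x := k * Real.sin v) (by linarith [hb.1]) (by linarith [hb.2])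
  have h3 := h2.comp v h1
  simp only [Function.comp_def] at h3
  refine h3.congr_deriv (Eq.symm ?_)
  field_simp

-- derivative of g' : second derivative of g
lemma hasDerivAt_g' {k s : ℝ} (hk : 0 < k) (hs : 0 < s) (hks : k^2 + s^2 = 1) (v : ℝ) :
    HasDerivAt (fun w => -(k * Real.cos w) / Real.sqrt (1 - (k * Real.sin w)^2))
      (k * s^2 * Real.sin v / (Real.sqrt (1 - (k * Real.sin v)^2))^3) v := by
  have hnum : HasDerivAt (fun w => -(k * Real.cos w)) (k * Real.sin v) v := by
    have := ((Real.hasDerivAt_cos v).const_mul k).neg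
    refine this.congr_deriv (Eq.symm ?_); ring
  have hE := Epos hs hks v
  have h := hnum.div (hasDerivAt_E hs hks v) (ne_of_gt hE)
  refine h.congr_deriv (Eq.symm ?_)
  have h2 := Esq hs hks v
  have h3 := Real.sin_sq_add_cos_sq v
  obtain ⟨E, hEd⟩ : ∃ E, E = Real.sqrt (1 - (k * Real.sin v)^2) := ⟨_, rfl⟩
  rw [← hEd] at h2 hE ⊢
  field_simp
  linear_combination (-Real.sin v) * h2 + (k^2 * Real.sin v) * h3 + (Real.sin v) * hks

-- derivative of h = arctan (s tan v), at points where cos v ≠ 0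
lemma hasDerivAt_h {k s : ℝ} (hs : 0 < s) (hks : k^2 + s^2 = 1) (v : ℝ)
    (hcv : Real.cos v ≠ 0) :
    HasDerivAt (fun w => Real.arctan (s * Real.tan w))
      (s / (1 - (k * Real.sin v)^2)) v := by
  have h1 : HasDerivAt (fun w => s * Real.tan w) (s * (1 / Real.cos v^2)) v :=
    (Real.hasDerivAt_tan hcv).const_mul s
  have h2 := (Real.hasDerivAt_arctan (s * Real.tan v)).comp v h1
  simp only [Function.comp_def] at h2
  refine h2.congr_deriv (Eq.symm ?_)
  rw [Real.tan_eq_sin_div_cos]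
  have h3 := Real.sin_sq_add_cos_sq v
  have hQ : 1 - (k * Real.sin v)^2 ≠ 0 := by
    nlinarith [Real.sin_sq_le_one v, sq_nonneg k,
      mul_le_mul_of_nonneg_left (Real.sin_sq_le_one v) (sq_nonneg k)]
  have hQ' : 1 - k^2 * Real.sin v^2 ≠ 0 := by rw [← mul_pow]; exact hQ
  field_simp
  linear_combination h3 + Real.sin v^2 * hks

-- derivative of ψ = s / (1 - (k sin v)^2)
lemma hasDerivAt_psi {k s : ℝ} (hs : 0 < s) (hks : k^2 + s^2 = 1) (v : ℝ) :
    HasDerivAt (fun w => s / (1 - (k * Real.sin w)^2))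
      (2 * s * k^2 * Real.sin v * Real.cos v / (1 - (k * Real.sin v)^2)^2) v := by
  have h1 : HasDerivAt (fun w => k * Real.sin w) (k * Real.cos v) v :=
    (Real.hasDerivAt_sin v).const_mul k
  have h2 := (h1.pow 2).const_sub 1
  simp only [Pi.pow_apply] at h2
  have hQ : 1 - (k * Real.sin v)^2 ≠ 0 := by
    nlinarith [Real.sin_sq_le_one v, sq_nonneg k,
      mul_le_mul_of_nonneg_left (Real.sin_sq_le_one v) (sq_nonneg k)]
  have h := (hasDerivAt_const v s).div h2 hQ
  refine h.congr_deriv (Eq.symm ?_)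
  field_simp
  ring


set_option maxHeartbeats 2000000 in
theorem stmt_9 (c θ a b : ℝ) (hc : 1 < c) (hθ : θ ∈ Set.Ioo 0 (π / 2))
    (hab : (a, b) ≠ (0, 0))
    (ω : ℝ) (hω : ω = 1 / Real.sqrt (c ^ 2 - 1))
    (t : ℝ × ℝ → ℝ) (ht : t = fun p => a * p.2 - b * p.1)
    (Ω : Set (ℝ × ℝ)) (hΩ : Ω = {p : ℝ × ℝ | Real.cos (ω * t p) ≠ 0})
    (R S : ℝ × ℝ → ℝ)
    (hRdef : R = fun p => Real.arccos (Real.cos θ * Real.sin (ω * t p)))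
    (hSdef : S = fun p => a * p.1 + b * p.2
      + Real.arctan (Real.sin θ * Real.tan (ω * t p)))
    (A B : ℝ → ℝ)
    (hAdef : A = fun r => c ^ 2 * Real.sin r ^ 2 + Real.cos r ^ 2)
    (hBdef : B = fun r => Real.sin r ^ 2) :
    ∀ p ∈ Ω,
      (2 * A (R p) * (px (px R) p + py (py R) p)
          + deriv A (R p) * ((px R p) ^ 2 + (py R p) ^ 2)
          - deriv B (R p) * ((px S p) ^ 2 + (py S p) ^ 2) = 0)
      ∧ (B (R p) * (px (px S) p + py (py S) p)
          + deriv B (R p) * (px R p * px S p + py R p * py S p) = 0) := by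
  subst ht hΩ hRdef hSdef hAdef hBdef
  intro p hp
  simp only [Set.mem_setOf_eq] at hp
  beta_reduce
  obtain ⟨hθ0, hθ1⟩ := hθ
  set k := Real.cos θ with hkdef
  set s := Real.sin θ with hsdef2
  have hk0 : 0 < k := Real.cos_pos_of_mem_Ioo ⟨by linarith [Real.pi_pos], hθ1⟩
  have hk1 : k < 1 := by
    have h := Real.cos_lt_cos_of_nonneg_of_le_pi le_rfl (by linarith [Real.pi_pos]) hθ0
    simpa using h
  have hs0 : 0 < s := Real.sin_pos_of_pos_of_lt_pi hθ0 (by linarith [Real.pi_pos])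
  have hks : k ^ 2 + s ^ 2 = 1 := by rw [hkdef, hsdef2]; exact Real.cos_sq_add_sin_sq θ
  have hc1 : (0:ℝ) < c ^ 2 - 1 := by nlinarith
  have hω2 : ω ^ 2 * (c ^ 2 - 1) = 1 := by
    rw [hω, div_pow, one_pow, Real.sq_sqrt hc1.le]
    field_simp
  -- the linear maps
  obtain ⟨Uc, hU10, hU01, hUf⟩ :
      ∃ Uc : ℝ × ℝ →L[ℝ] ℝ, Uc (1, 0) = -(ω * b) ∧ Uc (0, 1) = ω * a ∧
        ∀ q : ℝ × ℝ, HasFDerivAt (fun q : ℝ × ℝ => ω * (a * q.2 - b * q.1)) Uc q := by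
    refine ⟨ω • (a • ContinuousLinearMap.snd ℝ ℝ ℝ - b • ContinuousLinearMap.fst ℝ ℝ ℝ),
      by simp, by simp, fun q => ?_⟩
    have heq : (fun q : ℝ × ℝ => ω * (a * q.2 - b * q.1)) =
        ⇑(ω • (a • ContinuousLinearMap.snd ℝ ℝ ℝ - b • ContinuousLinearMap.fst ℝ ℝ ℝ)) := by
      funext q; simp
    rw [heq]
    exact ContinuousLinearMap.hasFDerivAt _
  obtain ⟨Vc, hV10, hV01, hVf⟩ :
      ∃ Vc : ℝ × ℝ →L[ℝ] ℝ, Vc (1, 0) = a ∧ Vc (0, 1) = b ∧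
        ∀ q : ℝ × ℝ, HasFDerivAt (fun q : ℝ × ℝ => a * q.1 + b * q.2) Vc q := by
    refine ⟨a • ContinuousLinearMap.fst ℝ ℝ ℝ + b • ContinuousLinearMap.snd ℝ ℝ ℝ,
      by simp, by simp, fun q => ?_⟩
    have heq : (fun q : ℝ × ℝ => a * q.1 + b * q.2) =
        ⇑(a • ContinuousLinearMap.fst ℝ ℝ ℝ + b • ContinuousLinearMap.snd ℝ ℝ ℝ) := by
      funext q; simp
    rw [heq]
    exact ContinuousLinearMap.hasFDerivAt _
  -- first derivatives of R
  have hRfd : ∀ q : ℝ × ℝ, HasFDerivAt (fun q : ℝ × ℝ => Real.arccos (k * Real.sin (ω * (a * q.2 - b * q.1))))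
      ((-(k * Real.cos (ω * (a * q.2 - b * q.1))) / Real.sqrt (1 - (k * Real.sin (ω * (a * q.2 - b * q.1)))^2)) • Uc) q := fun q => by
    have h := (hasDerivAt_g hk0 hk1 hs0 hks (ω * (a * q.2 - b * q.1))).comp_hasFDerivAt q (hUf q)
    simp only [Function.comp_def] at h
    exact h
  have hpxR : px (fun q : ℝ × ℝ => Real.arccos (k * Real.sin (ω * (a * q.2 - b * q.1)))) = (fun q : ℝ × ℝ => -(k * Real.cos (ω * (a * q.2 - b * q.1))) / Real.sqrt (1 - (k * Real.sin (ω * (a * q.2 - b * q.1)))^2) * (-(ω * b))) := by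
    funext q
    show fderiv ℝ _ q (1, 0) = _
    rw [(hRfd q).fderiv]
    simp [hU10]
  have hpyR : py (fun q : ℝ × ℝ => Real.arccos (k * Real.sin (ω * (a * q.2 - b * q.1)))) = (fun q : ℝ × ℝ => -(k * Real.cos (ω * (a * q.2 - b * q.1))) / Real.sqrt (1 - (k * Real.sin (ω * (a * q.2 - b * q.1)))^2) * (ω * a)) := by
    funext q
    show fderiv ℝ _ q (0, 1) = _
    rw [(hRfd q).fderiv]
    simp [hU01]
  -- second derivatives of R
  have hpxxR : px (px (fun q : ℝ × ℝ => Real.arccos (k * Real.sin (ω * (a * q.2 - b * q.1))))) p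
      = k * s ^ 2 * Real.sin (ω * (a * p.2 - b * p.1)) / (Real.sqrt (1 - (k * Real.sin (ω * (a * p.2 - b * p.1)))^2)) ^ 3 * (-(ω * b)) * (-(ω * b)) := by
    rw [hpxR]
    have h := ((hasDerivAt_g' hk0 hs0 hks (ω * (a * p.2 - b * p.1))).mul_const (-(ω * b))).comp_hasFDerivAt p (hUf p)
    have h2 : HasFDerivAt (fun q : ℝ × ℝ => -(k * Real.cos (ω * (a * q.2 - b * q.1))) / Real.sqrt (1 - (k * Real.sin (ω * (a * q.2 - b * q.1)))^2) * (-(ω * b)))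
        ((k * s ^ 2 * Real.sin (ω * (a * p.2 - b * p.1)) / (Real.sqrt (1 - (k * Real.sin (ω * (a * p.2 - b * p.1)))^2)) ^ 3 * (-(ω * b))) • Uc) p := by
      simp only [Function.comp_def] at h
      exact h
    show fderiv ℝ _ p (1, 0) = _
    rw [h2.fderiv]
    simp [hU10]
  have hpyyR : py (py (fun q : ℝ × ℝ => Real.arccos (k * Real.sin (ω * (a * q.2 - b * q.1))))) p
      = k * s ^ 2 * Real.sin (ω * (a * p.2 - b * p.1)) / (Real.sqrt (1 - (k * Real.sin (ω * (a * p.2 - b * p.1)))^2)) ^ 3 * (ω * a) * (ω * a) := by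
    rw [hpyR]
    have h := ((hasDerivAt_g' hk0 hs0 hks (ω * (a * p.2 - b * p.1))).mul_const (ω * a)).comp_hasFDerivAt p (hUf p)
    have h2 : HasFDerivAt (fun q : ℝ × ℝ => -(k * Real.cos (ω * (a * q.2 - b * q.1))) / Real.sqrt (1 - (k * Real.sin (ω * (a * q.2 - b * q.1)))^2) * (ω * a))
        ((k * s ^ 2 * Real.sin (ω * (a * p.2 - b * p.1)) / (Real.sqrt (1 - (k * Real.sin (ω * (a * p.2 - b * p.1)))^2)) ^ 3 * (ω * a)) • Uc) p := by
      simp only [Function.comp_def] at h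
      exact h
    show fderiv ℝ _ p (0, 1) = _
    rw [h2.fderiv]
    simp [hU01]
  -- first derivatives of S on the open set
  have hSfd : ∀ q : ℝ × ℝ, Real.cos (ω * (a * q.2 - b * q.1)) ≠ 0 → HasFDerivAt (fun q : ℝ × ℝ => a * q.1 + b * q.2 + Real.arctan (s * Real.tan (ω * (a * q.2 - b * q.1))))
      (Vc + (s / (1 - (k * Real.sin (ω * (a * q.2 - b * q.1)))^2)) • Uc) q := fun q hq => by
    have h2 := (hasDerivAt_h hs0 hks (ω * (a * q.2 - b * q.1)) hq).comp_hasFDerivAt q (hUf q)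
    simp only [Function.comp_def] at h2
    exact (hVf q).add h2
  have hpxS : ∀ q : ℝ × ℝ, Real.cos (ω * (a * q.2 - b * q.1)) ≠ 0 →
      px (fun q : ℝ × ℝ => a * q.1 + b * q.2 + Real.arctan (s * Real.tan (ω * (a * q.2 - b * q.1)))) q = a + s / (1 - (k * Real.sin (ω * (a * q.2 - b * q.1)))^2) * (-(ω * b)) := fun q hq => by
    show fderiv ℝ _ q (1, 0) = _
    rw [(hSfd q hq).fderiv]
    simp [hU10, hV10]
  have hpyS : ∀ q : ℝ × ℝ, Real.cos (ω * (a * q.2 - b * q.1)) ≠ 0 →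
      py (fun q : ℝ × ℝ => a * q.1 + b * q.2 + Real.arctan (s * Real.tan (ω * (a * q.2 - b * q.1)))) q = b + s / (1 - (k * Real.sin (ω * (a * q.2 - b * q.1)))^2) * (ω * a) := fun q hq => by
    show fderiv ℝ _ q (0, 1) = _
    rw [(hSfd q hq).fderiv]
    simp [hU01, hV01]
  have hopen : IsOpen {q : ℝ × ℝ | Real.cos (ω * (a * q.2 - b * q.1)) ≠ 0} := by
    have hcont : Continuous fun q : ℝ × ℝ => Real.cos (ω * (a * q.2 - b * q.1)) := by fun_prop
    exact isOpen_ne.preimage hcont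
  have hmem : {q : ℝ × ℝ | Real.cos (ω * (a * q.2 - b * q.1)) ≠ 0} ∈ 𝓝 p := hopen.mem_nhds hp
  have hevx : px (fun q : ℝ × ℝ => a * q.1 + b * q.2 + Real.arctan (s * Real.tan (ω * (a * q.2 - b * q.1)))) =ᶠ[𝓝 p] (fun q : ℝ × ℝ => a + s / (1 - (k * Real.sin (ω * (a * q.2 - b * q.1)))^2) * (-(ω * b))) :=
    Filter.eventuallyEq_of_mem hmem hpxS
  have hevy : py (fun q : ℝ × ℝ => a * q.1 + b * q.2 + Real.arctan (s * Real.tan (ω * (a * q.2 - b * q.1)))) =ᶠ[𝓝 p] (fun q : ℝ × ℝ => b + s / (1 - (k * Real.sin (ω * (a * q.2 - b * q.1)))^2) * (ω * a)) :=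
    Filter.eventuallyEq_of_mem hmem hpyS
  -- second derivatives of S
  have hpxxS : px (px (fun q : ℝ × ℝ => a * q.1 + b * q.2 + Real.arctan (s * Real.tan (ω * (a * q.2 - b * q.1))))) p
      = 2 * s * k ^ 2 * Real.sin (ω * (a * p.2 - b * p.1)) * Real.cos (ω * (a * p.2 - b * p.1)) / (1 - (k * Real.sin (ω * (a * p.2 - b * p.1)))^2) ^ 2
        * (-(ω * b)) * (-(ω * b)) := by
    show fderiv ℝ _ p (1, 0) = _
    rw [hevx.fderiv_eq]
    have h := (((hasDerivAt_psi hs0 hks (ω * (a * p.2 - b * p.1))).mul_const (-(ω * b))).const_add a).comp_hasFDerivAt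
      p (hUf p)
    have h2 : HasFDerivAt (fun q : ℝ × ℝ => a + s / (1 - (k * Real.sin (ω * (a * q.2 - b * q.1)))^2) * (-(ω * b)))
        ((2 * s * k ^ 2 * Real.sin (ω * (a * p.2 - b * p.1)) * Real.cos (ω * (a * p.2 - b * p.1)) / (1 - (k * Real.sin (ω * (a * p.2 - b * p.1)))^2) ^ 2
          * (-(ω * b))) • Uc) p := by
      simp only [Function.comp_def] at h
      exact h
    rw [h2.fderiv]
    simp [hU10]
  have hpyyS : py (py (fun q : ℝ × ℝ => a * q.1 + b * q.2 + Real.arctan (s * Real.tan (ω * (a * q.2 - b * q.1))))) p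
      = 2 * s * k ^ 2 * Real.sin (ω * (a * p.2 - b * p.1)) * Real.cos (ω * (a * p.2 - b * p.1)) / (1 - (k * Real.sin (ω * (a * p.2 - b * p.1)))^2) ^ 2
        * (ω * a) * (ω * a) := by
    show fderiv ℝ _ p (0, 1) = _
    rw [hevy.fderiv_eq]
    have h := (((hasDerivAt_psi hs0 hks (ω * (a * p.2 - b * p.1))).mul_const (ω * a)).const_add b).comp_hasFDerivAt
      p (hUf p)
    have h2 : HasFDerivAt (fun q : ℝ × ℝ => b + s / (1 - (k * Real.sin (ω * (a * q.2 - b * q.1)))^2) * (ω * a))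
        ((2 * s * k ^ 2 * Real.sin (ω * (a * p.2 - b * p.1)) * Real.cos (ω * (a * p.2 - b * p.1)) / (1 - (k * Real.sin (ω * (a * p.2 - b * p.1)))^2) ^ 2
          * (ω * a)) • Uc) p := by
      simp only [Function.comp_def] at h
      exact h
    rw [h2.fderiv]
    simp [hU01]
  -- values of sin and cos at R p
  have hb1 : k * (-1) ≤ k * Real.sin (ω * (a * p.2 - b * p.1)) :=
    mul_le_mul_of_nonneg_left (Real.neg_one_le_sin _) hk0.le
  have hb2 : k * Real.sin (ω * (a * p.2 - b * p.1)) ≤ k * 1 :=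
    mul_le_mul_of_nonneg_left (Real.sin_le_one _) hk0.le
  have hcosR : Real.cos (Real.arccos (k * Real.sin (ω * (a * p.2 - b * p.1)))) = k * Real.sin (ω * (a * p.2 - b * p.1)) :=
    Real.cos_arccos (by nlinarith) (by nlinarith)
  have hsinR : Real.sin (Real.arccos (k * Real.sin (ω * (a * p.2 - b * p.1)))) = Real.sqrt (1 - (k * Real.sin (ω * (a * p.2 - b * p.1)))^2) :=
    Real.sin_arccos _
  -- derivatives of A and B
  have hdA : deriv (fun r => c ^ 2 * Real.sin r ^ 2 + Real.cos r ^ 2)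
      (Real.arccos (k * Real.sin (ω * (a * p.2 - b * p.1))))
      = c ^ 2 * (2 * Real.sin (Real.arccos (k * Real.sin (ω * (a * p.2 - b * p.1)))) ^ 1
          * Real.cos (Real.arccos (k * Real.sin (ω * (a * p.2 - b * p.1)))))
        + 2 * Real.cos (Real.arccos (k * Real.sin (ω * (a * p.2 - b * p.1)))) ^ 1
          * -Real.sin (Real.arccos (k * Real.sin (ω * (a * p.2 - b * p.1)))) := by
    have h1 := ((Real.hasDerivAt_sin (Real.arccos (k * Real.sin (ω * (a * p.2 - b * p.1))))).pow 2).const_mul (c ^ 2)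
    have h2 := (Real.hasDerivAt_cos (Real.arccos (k * Real.sin (ω * (a * p.2 - b * p.1))))).pow 2
    exact (h1.add h2).deriv
  have hdB : deriv (fun r => Real.sin r ^ 2) (Real.arccos (k * Real.sin (ω * (a * p.2 - b * p.1))))
      = 2 * Real.sin (Real.arccos (k * Real.sin (ω * (a * p.2 - b * p.1)))) ^ 1
          * Real.cos (Real.arccos (k * Real.sin (ω * (a * p.2 - b * p.1)))) :=
    ((Real.hasDerivAt_sin _).pow 2).deriv
  -- algebraic data
  have hE2 : (Real.sqrt (1 - (k * Real.sin (ω * (a * p.2 - b * p.1)))^2)) ^ 2 = 1 - (k * Real.sin (ω * (a * p.2 - b * p.1))) ^ 2 := Esq hs0 hks _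
  have hE0 : (0:ℝ) < Real.sqrt (1 - (k * Real.sin (ω * (a * p.2 - b * p.1)))^2) := Epos hs0 hks _
  have hQ0 : 1 - (k * Real.sin (ω * (a * p.2 - b * p.1))) ^ 2 ≠ 0 := by
    rw [← hE2]; positivity
  have hsc : Real.sin (ω * (a * p.2 - b * p.1)) ^ 2 + Real.cos (ω * (a * p.2 - b * p.1)) ^ 2 = 1 := Real.sin_sq_add_cos_sq _
  constructor
  · rw [hpxxR, hpyyR, hpxR, hpyR, hpxS p hp, hpyS p hp]
    beta_reduce
    rw [hdA, hdB, hcosR, hsinR]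
    set sv := Real.sin (ω * (a * p.2 - b * p.1)) with hsvd
    set cv := Real.cos (ω * (a * p.2 - b * p.1)) with hcvd
    set E := Real.sqrt (1 - (k * sv) ^ 2) with hEd
    clear_value sv cv E
    have hQ1 : 1 - k ^ 2 * sv ^ 2 ≠ 0 := by rw [← mul_pow]; exact hQ0
    field_simp [hE0.ne', hQ0, hQ1]
    linear_combination (2 * k * sv * (a ^ 2 + b ^ 2)) * ((E ^ 2 * s ^ 2 * (1 - k ^ 2 * sv ^ 2) ^ 2 + E ^ 2 * k ^ 2 * cv ^ 2 * (1 - k ^ 2 * sv ^ 2) ^ 2) * hω2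
      + E ^ 2 * (1 - k ^ 2 * sv ^ 2) ^ 2 * hks + E ^ 2 * (1 - k ^ 2 * sv ^ 2) ^ 2 * k ^ 2 * hsc
      + (ω ^ 2 * s ^ 2 * (1 - k ^ 2 * sv ^ 2) ^ 2 - E ^ 2 * (1 - k ^ 2 * sv ^ 2) ^ 2 - ω ^ 2 * s ^ 2 * ((1 - k ^ 2 * sv ^ 2) + E ^ 2)) * hE2)
  · rw [hpxxS, hpyyS, hpxR, hpyR, hpxS p hp, hpyS p hp]
    beta_reduce
    rw [hdB, hcosR, hsinR]
    set sv := Real.sin (ω * (a * p.2 - b * p.1)) with hsvd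
    set cv := Real.cos (ω * (a * p.2 - b * p.1)) with hcvd
    set E := Real.sqrt (1 - (k * sv) ^ 2) with hEd
    clear_value sv cv E
    have hQ1 : 1 - k ^ 2 * sv ^ 2 ≠ 0 := by rw [← mul_pow]; exact hQ0
    field_simp [hE0.ne', hQ0, hQ1]
    linear_combination (2 * k ^ 2 * sv * cv * ω ^ 2 * s * (a ^ 2 + b ^ 2)) * hE2
end

section
/- Let c > 1, θ ∈ (0, π/2), and ω = 1/√(c²−1). Define R : ℝ → ℝ by R(t) = arccos(cosθ·sin(ωt)). Then the function t ↦ (c²·sin²R(t) + cos²R(t))·R'(t)² − sin²R(t) + ω²·sin²θ / sin²R(t) is constant on ℝ. -/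
open Real

theorem stmt_10 (c θ : ℝ) (hc : 1 < c) (hθ : θ ∈ Set.Ioo 0 (π / 2))
    (ω : ℝ) (hω : ω = 1 / Real.sqrt (c ^ 2 - 1))
    (R : ℝ → ℝ)
    (hRdef : R = fun t => Real.arccos (Real.cos θ * Real.sin (ω * t))) :
    ∀ s t : ℝ,
      (c ^ 2 * Real.sin (R s) ^ 2 + Real.cos (R s) ^ 2) * (deriv R s) ^ 2
          - Real.sin (R s) ^ 2 + ω ^ 2 * Real.sin θ ^ 2 / Real.sin (R s) ^ 2
        = (c ^ 2 * Real.sin (R t) ^ 2 + Real.cos (R t) ^ 2) * (deriv R t) ^ 2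
          - Real.sin (R t) ^ 2 + ω ^ 2 * Real.sin θ ^ 2 / Real.sin (R t) ^ 2 := by
  have hc1 : (0:ℝ) < c ^ 2 - 1 := by nlinarith
  have hω2 : ω ^ 2 = 1 / (c ^ 2 - 1) := by
    rw [hω, div_pow, one_pow, Real.sq_sqrt hc1.le]
  obtain ⟨hθ0, hθ1⟩ := hθ
  have hb0 : 0 < Real.cos θ := Real.cos_pos_of_mem_Ioo ⟨by linarith [Real.pi_pos], hθ1⟩
  have hb1 : Real.cos θ < 1 := by
    have := Real.cos_lt_cos_of_nonneg_of_le_pi (le_refl 0) (by linarith [Real.pi_pos]) hθ0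
    simpa using this
  have key : ∀ t : ℝ,
      (c ^ 2 * Real.sin (R t) ^ 2 + Real.cos (R t) ^ 2) * (deriv R t) ^ 2
          - Real.sin (R t) ^ 2 + ω ^ 2 * Real.sin θ ^ 2 / Real.sin (R t) ^ 2
        = ω ^ 2 * (1 - (c ^ 2 - 1) * Real.sin θ ^ 2) := by
    intro t
    set b := Real.cos θ with hbdef
    set u := b * Real.sin (ω * t) with hudef
    have hu1 : u < 1 := by
      have h1 : u ≤ b := by
        calc u ≤ |u| := le_abs_self u
        _ = b * |Real.sin (ω * t)| := by rw [abs_mul, abs_of_pos hb0]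
        _ ≤ b * 1 := by exact mul_le_mul_of_nonneg_left (Real.abs_sin_le_one _) hb0.le
        _ = b := mul_one b
      linarith
    have hu2 : -1 < u := by
      have h1 : -b ≤ u := by
        have : |u| ≤ b := by
          calc |u| = b * |Real.sin (ω * t)| := by rw [abs_mul, abs_of_pos hb0]
          _ ≤ b := by nlinarith [Real.abs_sin_le_one (ω * t)]
        linarith [neg_abs_le u]
      linarith
    have hw : 0 < 1 - u ^ 2 := by nlinarith
    set w := 1 - u ^ 2 with hwdef
    have hsq : Real.sqrt w ^ 2 = w := Real.sq_sqrt hw.le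
    have hsqpos : 0 < Real.sqrt w := Real.sqrt_pos.mpr hw
    -- derivative of R
    have hinner : HasDerivAt (fun t : ℝ => b * Real.sin (ω * t)) (b * (Real.cos (ω * t) * ω)) t := by
      have h1 : HasDerivAt (fun t : ℝ => ω * t) ω t := by
        simpa using (hasDerivAt_id t).const_mul ω
      exact ((Real.hasDerivAt_sin (ω * t)).comp t h1).const_mul b
    have hd : HasDerivAt R (-(1 / Real.sqrt (1 - u ^ 2)) * (b * (Real.cos (ω * t) * ω))) t := by
      rw [hRdef]
      have hcomp := (Real.hasDerivAt_arccos (ne_of_gt hu2) (ne_of_lt hu1)).comp t hinner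
      exact hcomp
    have hsin : Real.sin (R t) = Real.sqrt w := by
      rw [hRdef]; simp only []; rw [Real.sin_arccos]
    have hcos : Real.cos (R t) = u := by
      rw [hRdef]; simp only []; exact Real.cos_arccos hu2.le hu1.le
    have hdsq : (deriv R t) ^ 2 = b ^ 2 * Real.cos (ω * t) ^ 2 * ω ^ 2 / w := by
      rw [hd.deriv]
      rw [mul_pow, neg_pow, ← hwdef]
      rw [div_pow, one_pow, hsq]
      ring
    rw [hsin, hcos, hsq, hdsq]
    have hb2 : b ^ 2 = 1 - Real.sin θ ^ 2 := by
      have := Real.sin_sq_add_cos_sq θ; rw [hbdef]; linarith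
    have hco2 : Real.cos (ω * t) ^ 2 = 1 - Real.sin (ω * t) ^ 2 := by
      have := Real.sin_sq_add_cos_sq (ω * t); linarith
    have hueq : u ^ 2 = b ^ 2 * Real.sin (ω * t) ^ 2 := by rw [hudef]; ring
    rw [hwdef, hueq, hco2, hb2, hω2]
    have hw0 : (1 : ℝ) - (1 - Real.sin θ ^ 2) * Real.sin (ω * t) ^ 2 ≠ 0 := by
      rw [hwdef, hueq, hb2] at hw; linarith
    field_simp
    ring
  intro s t
  rw [key s, key t]
end

section
/- Let c > 1, θ ∈ (0, π/2), and ω = 1/√(c²−1). Define R(t) = arccos(cosθ·sin(ωt)) and H(t) = arctan(sinθ·tan(ωt)). Then for every t ∈ ℝ with cos(ωt) ≠ 0 one has sin²(R(t))·H'(t) = ω·sinθ. -/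
open Real

theorem stmt_11 (c θ : ℝ) (hc : 1 < c) (hθ : θ ∈ Set.Ioo 0 (π / 2))
    (ω : ℝ) (hω : ω = 1 / Real.sqrt (c ^ 2 - 1))
    (R H : ℝ → ℝ)
    (hRdef : R = fun t => Real.arccos (Real.cos θ * Real.sin (ω * t)))
    (hHdef : H = fun t => Real.arctan (Real.sin θ * Real.tan (ω * t))) :
    ∀ t : ℝ, Real.cos (ω * t) ≠ 0 →
      Real.sin (R t) ^ 2 * deriv H t = ω * Real.sin θ := by
  intro t hcos
  -- derivative of inner function
  have hlin : HasDerivAt (fun t : ℝ => ω * t) ω t := by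
    simpa using (hasDerivAt_id t).const_mul ω
  have htan : HasDerivAt (fun t : ℝ => Real.tan (ω * t))
      (1 / Real.cos (ω * t) ^ 2 * ω) t :=
    (Real.hasDerivAt_tan hcos).comp t hlin
  have hin : HasDerivAt (fun t : ℝ => Real.sin θ * Real.tan (ω * t))
      (Real.sin θ * (1 / Real.cos (ω * t) ^ 2 * ω)) t := htan.const_mul _
  have hH : HasDerivAt H
      ((1 / (1 + (Real.sin θ * Real.tan (ω * t)) ^ 2)) *
        (Real.sin θ * (1 / Real.cos (ω * t) ^ 2 * ω))) t := by
    rw [hHdef]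
    exact (Real.hasDerivAt_arctan _).comp t hin
  rw [hH.deriv]
  -- sin(R t)^2
  have hRval : Real.sin (R t) ^ 2 = 1 - (Real.cos θ * Real.sin (ω * t)) ^ 2 := by
    rw [hRdef]
    simp only
    rw [Real.sin_arccos, Real.sq_sqrt]
    have h1 : (Real.cos θ * Real.sin (ω * t)) ^ 2 ≤ 1 := by
      rw [mul_pow]
      exact mul_le_one₀ (Real.cos_sq_le_one θ) (sq_nonneg _) (Real.sin_sq_le_one (ω * t))
    linarith
  rw [hRval, Real.tan_eq_sin_div_cos]
  have hpy : Real.sin (ω * t) ^ 2 + Real.cos (ω * t) ^ 2 = 1 := Real.sin_sq_add_cos_sq _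
  have hpyθ : Real.sin θ ^ 2 + Real.cos θ ^ 2 = 1 := Real.sin_sq_add_cos_sq _
  have hden : Real.cos (ω * t) ^ 2 + Real.sin θ ^ 2 * Real.sin (ω * t) ^ 2 ≠ 0 := by
    positivity
  field_simp
  linear_combination (-(Real.sin θ * ω * Real.sin (ω * t) ^ 2)) * hpyθ +
    (-(Real.sin θ * ω)) * hpy
end

section
/- Let c > 1, θ ∈ (0, π/2), a, b ∈ ℝ with (a,b) ≠ (0,0), ω = 1/√(c²−1), t(x,y) = ay−bx, and Ω = {(x,y) : cos(ω·t(x,y)) ≠ 0}. With R(x,y) = arccos(cosθ·sin(ω·t)) and S(x,y) = ax + by + arctan(sinθ·tan(ω·t)), define U : Ω → ℝ³ by U = (c·cos R, sin R·cos S, sin R·sin S), so that U takes values in the ellipsoid E_c = {(x,y,z) : x²/c² + y² + z² = 1}. Then at every point of Ω the vector ΔU = U_xx + U_yy is parallel to the normal direction (U₁/c², U₂, U₃) of E_c at U; i.e., there exists a function μ : Ω → ℝ such that U_xx + U_yy = μ·(U₁/c², U₂, U₃) on Ω. -/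
open Real

noncomputable def W (α β φ A : ℝ) : ℝ × ℝ → ℝ := fun p => A * Real.cos (α * p.1 + β * p.2 + φ)
noncomputable def Ws (α β φ A : ℝ) : ℝ × ℝ → ℝ := fun p => A * Real.sin (α * p.1 + β * p.2 + φ)

lemma hL (α β φ : ℝ) (p : ℝ × ℝ) :
    HasFDerivAt (fun q : ℝ × ℝ => α * q.1 + β * q.2 + φ)
      (α • ContinuousLinearMap.fst ℝ ℝ ℝ + β • ContinuousLinearMap.snd ℝ ℝ ℝ) p := by
  exact (((hasFDerivAt_fst).const_mul α).add ((hasFDerivAt_snd).const_mul β)).add_const φ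

lemma hasFDerivAt_W (α β φ A : ℝ) (p : ℝ × ℝ) :
    HasFDerivAt (W α β φ A)
      ((A * (-Real.sin (α * p.1 + β * p.2 + φ))) •
        (α • ContinuousLinearMap.fst ℝ ℝ ℝ + β • ContinuousLinearMap.snd ℝ ℝ ℝ)) p := by
  have h := ((Real.hasDerivAt_cos (α * p.1 + β * p.2 + φ)).comp_hasFDerivAt p (hL α β φ p)).const_mul A
  rw [smul_smul] at h
  exact h

lemma hasFDerivAt_Ws (α β φ A : ℝ) (p : ℝ × ℝ) :
    HasFDerivAt (Ws α β φ A)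
      ((A * Real.cos (α * p.1 + β * p.2 + φ)) •
        (α • ContinuousLinearMap.fst ℝ ℝ ℝ + β • ContinuousLinearMap.snd ℝ ℝ ℝ)) p := by
  have h := ((Real.hasDerivAt_sin (α * p.1 + β * p.2 + φ)).comp_hasFDerivAt p (hL α β φ p)).const_mul A
  rw [smul_smul] at h
  exact h

lemma diff_W (α β φ A : ℝ) : Differentiable ℝ (W α β φ A) := fun p => (hasFDerivAt_W α β φ A p).differentiableAt
lemma diff_Ws (α β φ A : ℝ) : Differentiable ℝ (Ws α β φ A) := fun p => (hasFDerivAt_Ws α β φ A p).differentiableAt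

lemma px_W (α β φ A : ℝ) : px (W α β φ A) = Ws α β φ (-(A * α)) := by
  funext p
  unfold px
  rw [(hasFDerivAt_W α β φ A p).fderiv]
  simp [Ws]
  ring

lemma py_W (α β φ A : ℝ) : py (W α β φ A) = Ws α β φ (-(A * β)) := by
  funext p
  unfold py
  rw [(hasFDerivAt_W α β φ A p).fderiv]
  simp [Ws]
  ring

lemma px_Ws (α β φ A : ℝ) : px (Ws α β φ A) = W α β φ (A * α) := by
  funext p
  unfold px
  rw [(hasFDerivAt_Ws α β φ A p).fderiv]
  simp [W]
  ring

lemma py_Ws (α β φ A : ℝ) : py (Ws α β φ A) = W α β φ (A * β) := by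
  funext p
  unfold py
  rw [(hasFDerivAt_Ws α β φ A p).fderiv]
  simp [W]
  ring

lemma px_add (f g : ℝ × ℝ → ℝ) (hf : Differentiable ℝ f) (hg : Differentiable ℝ g) :
    px (fun q => f q + g q) = fun q => px f q + px g q := by
  funext p
  unfold px
  rw [fderiv_fun_add (hf p) (hg p)]
  rfl

lemma py_add (f g : ℝ × ℝ → ℝ) (hf : Differentiable ℝ f) (hg : Differentiable ℝ g) :
    py (fun q => f q + g q) = fun q => py f q + py g q := by
  funext p
  unfold py
  rw [fderiv_fun_add (hf p) (hg p)]
  rfl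

lemma lapWW (α₁ β₁ φ₁ A₁ α₂ β₂ φ₂ A₂ : ℝ) (p : ℝ × ℝ) :
    px (px (fun q => W α₁ β₁ φ₁ A₁ q + W α₂ β₂ φ₂ A₂ q)) p
      + py (py (fun q => W α₁ β₁ φ₁ A₁ q + W α₂ β₂ φ₂ A₂ q)) p
    = -(α₁ ^ 2 + β₁ ^ 2) * W α₁ β₁ φ₁ A₁ p - (α₂ ^ 2 + β₂ ^ 2) * W α₂ β₂ φ₂ A₂ p := by
  rw [px_add _ _ (diff_W _ _ _ _) (diff_W _ _ _ _), py_add _ _ (diff_W _ _ _ _) (diff_W _ _ _ _)]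
  simp only [px_W, py_W]
  rw [px_add _ _ (diff_Ws _ _ _ _) (diff_Ws _ _ _ _), py_add _ _ (diff_Ws _ _ _ _) (diff_Ws _ _ _ _)]
  simp only [px_Ws, py_Ws, W]
  ring


lemma px_congr {f g : ℝ × ℝ → ℝ} {O : Set (ℝ × ℝ)} (hO : IsOpen O)
    (h : ∀ q ∈ O, f q = g q) {p : ℝ × ℝ} (hp : p ∈ O) : px f p = px g p := by
  unfold px
  rw [Filter.EventuallyEq.fderiv_eq (Filter.eventuallyEq_of_mem (hO.mem_nhds hp) h)]

lemma py_congr {f g : ℝ × ℝ → ℝ} {O : Set (ℝ × ℝ)} (hO : IsOpen O)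
    (h : ∀ q ∈ O, f q = g q) {p : ℝ × ℝ} (hp : p ∈ O) : py f p = py g p := by
  unfold py
  rw [Filter.EventuallyEq.fderiv_eq (Filter.eventuallyEq_of_mem (hO.mem_nhds hp) h)]

lemma lap_congr {f g : ℝ × ℝ → ℝ} {O : Set (ℝ × ℝ)} (hO : IsOpen O)
    (h : ∀ q ∈ O, f q = g q) {p : ℝ × ℝ} (hp : p ∈ O) :
    px (px f) p + py (py f) p = px (px g) p + py (py g) p := by
  have h1 : ∀ q ∈ O, px f q = px g q := fun q hq => px_congr hO h hq
  have h2 : ∀ q ∈ O, py f q = py g q := fun q hq => py_congr hO h hq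
  rw [px_congr hO h1 hp, py_congr hO h2 hp]

-- trig key lemmas
lemma key_sin_arccos (θ u : ℝ) :
    Real.sin (Real.arccos (Real.cos θ * Real.sin u))
      = Real.sqrt (Real.cos u ^ 2 + Real.sin θ ^ 2 * Real.sin u ^ 2) := by
  rw [Real.sin_arccos]
  congr 1
  have h1 := Real.sin_sq_add_cos_sq u
  have h2 := Real.sin_sq_add_cos_sq θ
  nlinarith [h1, h2]

lemma key_main (θ s u ε : ℝ) (hε : ε = 1 ∨ ε = -1) (hcu : 0 < ε * Real.cos u) :
    Real.sin (Real.arccos (Real.cos θ * Real.sin u))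
        * Real.cos (Real.arctan (Real.sin θ * Real.tan u)) = ε * Real.cos u
    ∧ Real.sin (Real.arccos (Real.cos θ * Real.sin u))
        * Real.sin (Real.arctan (Real.sin θ * Real.tan u)) = ε * (Real.sin θ * Real.sin u) := by
  have hcu0 : Real.cos u ≠ 0 := by
    rcases hε with h | h <;> subst h <;> intro h0 <;> rw [h0] at hcu <;> simp at hcu
  have habs : |Real.cos u| = ε * Real.cos u := by
    rcases hε with h | h <;> subst h
    · rw [abs_of_pos (by linarith)]; ring
    · rw [abs_of_neg (by nlinarith)]; ring
  set k := Real.sin θ with hk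
  set D := Real.sqrt (Real.cos u ^ 2 + k ^ 2 * Real.sin u ^ 2) with hD
  have hDpos : 0 < D := Real.sqrt_pos.mpr (by positivity)
  have htan : Real.tan u = Real.sin u / Real.cos u := Real.tan_eq_sin_div_cos u
  have h3 : Real.sqrt (1 + (k * Real.tan u) ^ 2) = D / |Real.cos u| := by
    have he : 1 + (k * Real.tan u) ^ 2
        = (Real.cos u ^ 2 + k ^ 2 * Real.sin u ^ 2) / Real.cos u ^ 2 := by
      rw [htan]; field_simp
    rw [he, Real.sqrt_div' _ (by positivity), Real.sqrt_sq_eq_abs]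
  have hcos_at : Real.cos (Real.arctan (k * Real.tan u)) = 1 / Real.sqrt (1 + (k * Real.tan u) ^ 2) :=
    Real.cos_arctan _
  have hsin_at : Real.sin (Real.arctan (k * Real.tan u)) = (k * Real.tan u) / Real.sqrt (1 + (k * Real.tan u) ^ 2) :=
    Real.sin_arctan _
  have habs0 : |Real.cos u| ≠ 0 := abs_ne_zero.mpr hcu0
  constructor
  · rw [key_sin_arccos, ← hk, ← hD, hcos_at, h3, ← habs]
    field_simp
  · rw [key_sin_arccos, ← hk, ← hD, hsin_at, h3, htan]
    rw [div_div_eq_mul_div, habs]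
    field_simp

theorem stmt_12 (c θ a b : ℝ) (hc : 1 < c) (hθ : θ ∈ Set.Ioo 0 (π / 2))
    (hab : (a, b) ≠ (0, 0))
    (ω : ℝ) (hω : ω = 1 / Real.sqrt (c ^ 2 - 1))
    (t : ℝ × ℝ → ℝ) (ht : t = fun p => a * p.2 - b * p.1)
    (Ω : Set (ℝ × ℝ)) (hΩ : Ω = {p : ℝ × ℝ | Real.cos (ω * t p) ≠ 0})
    (R S : ℝ × ℝ → ℝ)
    (hRdef : R = fun p => Real.arccos (Real.cos θ * Real.sin (ω * t p)))
    (hSdef : S = fun p => a * p.1 + b * p.2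
      + Real.arctan (Real.sin θ * Real.tan (ω * t p)))
    (U₁ U₂ U₃ : ℝ × ℝ → ℝ)
    (hU₁ : U₁ = fun p => c * Real.cos (R p))
    (hU₂ : U₂ = fun p => Real.sin (R p) * Real.cos (S p))
    (hU₃ : U₃ = fun p => Real.sin (R p) * Real.sin (S p)) :
    (∀ p ∈ Ω, (U₁ p) ^ 2 / c ^ 2 + (U₂ p) ^ 2 + (U₃ p) ^ 2 = 1)
    ∧ ∃ μ : ℝ × ℝ → ℝ, ∀ p ∈ Ω,
        px (px U₁) p + py (py U₁) p = μ p * (U₁ p / c ^ 2)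
        ∧ px (px U₂) p + py (py U₂) p = μ p * U₂ p
        ∧ px (px U₃) p + py (py U₃) p = μ p * U₃ p := by
  have hc0 : c ≠ 0 := by nlinarith
  have hc1 : (0:ℝ) < c ^ 2 - 1 := by nlinarith
  have hω2 : ω ^ 2 * (c ^ 2 - 1) = 1 := by
    rw [hω, div_pow, one_pow, Real.sq_sqrt hc1.le]
    field_simp
  constructor
  · intro p _
    simp only [hU₁, hU₂, hU₃]
    have h1 := Real.sin_sq_add_cos_sq (R p)
    have h2 := Real.sin_sq_add_cos_sq (S p)
    field_simp
    linear_combination h1 + Real.sin (R p) ^ 2 * h2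
  · refine ⟨fun _ => -((1 + ω ^ 2) * (a ^ 2 + b ^ 2)), fun p hp => ?_⟩
    rw [hΩ] at hp
    simp only [Set.mem_setOf_eq] at hp
    set k := Real.sin θ with hk
    set ε : ℝ := if 0 < Real.cos (ω * t p) then 1 else -1 with hε
    have hεcase : ε = 1 ∨ ε = -1 := by
      rw [hε]; split <;> simp
    set O : Set (ℝ × ℝ) := {q | 0 < ε * Real.cos (ω * t q)} with hOdef
    have hOopen : IsOpen O := by
      have hcont : Continuous fun q : ℝ × ℝ => ε * Real.cos (ω * t q) := by
        rw [ht]; fun_prop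
      exact isOpen_lt continuous_const hcont
    have hpO : p ∈ O := by
      simp only [hOdef, Set.mem_setOf_eq]
      rcases lt_or_gt_of_ne hp with h | h
      · rw [hε, if_neg (by linarith)]; nlinarith
      · rw [hε, if_pos h]; nlinarith
    -- U₁
    have hV₁ : ∀ q, U₁ q = W (-(ω * b)) (ω * a) (-(π / 2)) (c * Real.cos θ) q
        + W (-(ω * b)) (ω * a) 0 0 q := by
      intro q
      have hb1 : -1 ≤ Real.cos θ * Real.sin (ω * t q) := by
        nlinarith [Real.neg_one_le_cos θ, Real.cos_le_one θ, Real.neg_one_le_sin (ω * t q),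
          Real.sin_le_one (ω * t q)]
      have hb2 : Real.cos θ * Real.sin (ω * t q) ≤ 1 := by
        nlinarith [Real.neg_one_le_cos θ, Real.cos_le_one θ, Real.neg_one_le_sin (ω * t q),
          Real.sin_le_one (ω * t q)]
      have harg : -(ω * b) * q.1 + ω * a * q.2 + -(π / 2) = -(π / 2 - ω * t q) := by
        rw [ht]; ring
      simp only [hU₁, hRdef, W, harg, Real.cos_neg, Real.cos_pi_div_two_sub,
        Real.cos_arccos hb1 hb2, mul_zero, zero_mul, add_zero]
      ring
    -- U₂
    have hV₂ : ∀ q ∈ O, U₂ q = W (a - ω * b) (b + ω * a) 0 (ε * (1 + k) / 2) q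
        + W (a + ω * b) (b - ω * a) 0 (ε * (1 - k) / 2) q := by
      intro q hq
      simp only [hOdef, Set.mem_setOf_eq] at hq
      have hkm := key_main θ (a * q.1 + b * q.2) (ω * t q) ε hεcase hq
      have harg1 : (a - ω * b) * q.1 + (b + ω * a) * q.2 + 0
          = (a * q.1 + b * q.2) + ω * t q := by rw [ht]; ring
      have harg2 : (a + ω * b) * q.1 + (b - ω * a) * q.2 + 0
          = (a * q.1 + b * q.2) - ω * t q := by rw [ht]; ring
      simp only [hU₂, hRdef, hSdef, W, harg1, harg2]
      set sq := a * q.1 + b * q.2 with hsq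
      set uq := ω * t q with huq
      rw [Real.cos_add sq uq, Real.cos_sub sq uq,
        Real.cos_add sq (Real.arctan (k * Real.tan uq))]
      linear_combination Real.cos sq * hkm.1 - Real.sin sq * hkm.2
    -- U₃
    have hV₃ : ∀ q ∈ O, U₃ q = W (a - ω * b) (b + ω * a) (-(π / 2)) (ε * (1 + k) / 2) q
        + W (a + ω * b) (b - ω * a) (-(π / 2)) (ε * (1 - k) / 2) q := by
      intro q hq
      simp only [hOdef, Set.mem_setOf_eq] at hq
      have hkm := key_main θ (a * q.1 + b * q.2) (ω * t q) ε hεcase hq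
      have harg1 : (a - ω * b) * q.1 + (b + ω * a) * q.2 + -(π / 2)
          = (a * q.1 + b * q.2 + ω * t q) - π / 2 := by rw [ht]; ring
      have harg2 : (a + ω * b) * q.1 + (b - ω * a) * q.2 + -(π / 2)
          = (a * q.1 + b * q.2 - ω * t q) - π / 2 := by rw [ht]; ring
      simp only [hU₃, hRdef, hSdef, W, harg1, harg2]
      set sq := a * q.1 + b * q.2 with hsq
      set uq := ω * t q with huq
      rw [Real.cos_sub_pi_div_two, Real.cos_sub_pi_div_two, Real.sin_add sq uq,
        Real.sin_sub sq uq, Real.sin_add sq (Real.arctan (k * Real.tan uq))]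
      linear_combination Real.sin sq * hkm.1 + Real.cos sq * hkm.2
    refine ⟨?_, ?_, ?_⟩
    · have hU1eq : U₁ = fun q => W (-(ω * b)) (ω * a) (-(π / 2)) (c * Real.cos θ) q
          + W (-(ω * b)) (ω * a) 0 0 q := funext hV₁
      rw [hU1eq, lapWW]
      simp only []
      have h0 : W (-(ω * b)) (ω * a) 0 0 p = 0 := by simp [W]
      rw [h0]
      set w := W (-(ω * b)) (ω * a) (-(π / 2)) (c * Real.cos θ) p with hw
      field_simp
      linear_combination (-(a ^ 2 + b ^ 2) * w) * hω2
    · rw [lap_congr hOopen hV₂ hpO, lapWW, hV₂ p hpO]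
      ring
    · rw [lap_congr hOopen hV₃ hpO, lapWW, hV₃ p hpO]
      ring
end

section
/- Let c > 1, θ ∈ ℝ, ν ∈ ℝ with ν ≠ 0, and ω = ν/√(c²−1). On the set I = {t ∈ ℝ : cosh²θ·sin²(ωt) < 1} define R(t) = arccos(coshθ·sin(ωt)). Then the function t ↦ (c²·sin²R(t) + cos²R(t))·R'(t)² − ω²·sinh²θ / sin²R(t) − ν²·sin²R(t) takes the same constant value at every point of I. -/
open Real

private lemma stmt_15_pointval (c θ ν ω : ℝ) (hc : 1 < c) (hν : ν ≠ 0)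
    (hω : ω = ν / Real.sqrt (c ^ 2 - 1)) (t : ℝ)
    (ht : Real.cosh θ ^ 2 * Real.sin (ω * t) ^ 2 < 1)
    (R : ℝ → ℝ)
    (hRdef : R = fun t => Real.arccos (Real.cosh θ * Real.sin (ω * t))) :
    (c ^ 2 * Real.sin (R t) ^ 2 + Real.cos (R t) ^ 2) * (deriv R t) ^ 2
      - ω ^ 2 * Real.sinh θ ^ 2 / Real.sin (R t) ^ 2
      - ν ^ 2 * Real.sin (R t) ^ 2
      = ω ^ 2 * ((c ^ 2 - 1) * Real.sinh θ ^ 2 + 1) := by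
  set u := Real.cosh θ * Real.sin (ω * t) with hu
  have hu2 : u ^ 2 < 1 := by rw [hu, mul_pow]; exact ht
  have hS : (0 : ℝ) < 1 - u ^ 2 := by linarith
  have habs : |u| < 1 := (sq_lt_one_iff_abs_lt_one u).mp hu2
  have hlt := abs_lt.mp habs
  have hinner : HasDerivAt (fun t => Real.cosh θ * Real.sin (ω * t))
      (Real.cosh θ * (Real.cos (ω * t) * ω)) t := by
    have h1 : HasDerivAt (fun t : ℝ => ω * t) ω t := by
      simpa using (hasDerivAt_id t).const_mul ω
    exact ((Real.hasDerivAt_sin (ω * t)).comp t h1).const_mul _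
  have harc : HasDerivAt R
      (-(1 / Real.sqrt (1 - u ^ 2)) * (Real.cosh θ * (Real.cos (ω * t) * ω))) t := by
    rw [hRdef]
    exact (Real.hasDerivAt_arccos hlt.1.ne' hlt.2.ne).comp (h₂ := Real.arccos)
      (h := fun t => Real.cosh θ * Real.sin (ω * t)) t hinner
  have hderiv : deriv R t
      = -(1 / Real.sqrt (1 - u ^ 2)) * (Real.cosh θ * (Real.cos (ω * t) * ω)) :=
    harc.deriv
  have hsin : Real.sin (R t) = Real.sqrt (1 - u ^ 2) := by
    rw [hRdef]; exact Real.sin_arccos _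
  have hcos : Real.cos (R t) = u := by
    rw [hRdef]; exact Real.cos_arccos hlt.1.le hlt.2.le
  have hsin2 : Real.sin (R t) ^ 2 = 1 - u ^ 2 := by
    rw [hsin, Real.sq_sqrt hS.le]
  have hd2 : (deriv R t) ^ 2
      = Real.cosh θ ^ 2 * Real.cos (ω * t) ^ 2 * ω ^ 2 / (1 - u ^ 2) := by
    rw [hderiv,
      show (-(1 / Real.sqrt (1 - u ^ 2)) * (Real.cosh θ * (Real.cos (ω * t) * ω))) ^ 2
        = Real.cosh θ ^ 2 * Real.cos (ω * t) ^ 2 * ω ^ 2 / Real.sqrt (1 - u ^ 2) ^ 2 by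
        ring,
      Real.sq_sqrt hS.le]
  have hc2 : (0 : ℝ) < c ^ 2 - 1 := by nlinarith
  have hν2 : ν ^ 2 = ω ^ 2 * (c ^ 2 - 1) := by
    rw [hω, div_pow, Real.sq_sqrt hc2.le, div_mul_cancel₀ _ hc2.ne']
  have hx : u ^ 2 = Real.cosh θ ^ 2 * Real.sin (ω * t) ^ 2 := by rw [hu, mul_pow]
  have hSne : 1 - Real.cosh θ ^ 2 * Real.sin (ω * t) ^ 2 ≠ 0 := by
    rw [← hx]; exact hS.ne'
  rw [hsin2, hcos, hd2, hν2, hx, Real.cos_sq', Real.sinh_sq]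
  field_simp [hSne]
  ring

theorem stmt_15 (c θ ν : ℝ) (hc : 1 < c) (hν : ν ≠ 0)
    (ω : ℝ) (hω : ω = ν / Real.sqrt (c ^ 2 - 1))
    (I : Set ℝ) (hI : I = {t : ℝ | Real.cosh θ ^ 2 * Real.sin (ω * t) ^ 2 < 1})
    (R : ℝ → ℝ)
    (hRdef : R = fun t => Real.arccos (Real.cosh θ * Real.sin (ω * t))) :
    ∀ s ∈ I, ∀ t ∈ I,
      (c ^ 2 * Real.sin (R s) ^ 2 + Real.cos (R s) ^ 2) * (deriv R s) ^ 2
          - ω ^ 2 * Real.sinh θ ^ 2 / Real.sin (R s) ^ 2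
          - ν ^ 2 * Real.sin (R s) ^ 2
        = (c ^ 2 * Real.sin (R t) ^ 2 + Real.cos (R t) ^ 2) * (deriv R t) ^ 2
          - ω ^ 2 * Real.sinh θ ^ 2 / Real.sin (R t) ^ 2
          - ν ^ 2 * Real.sin (R t) ^ 2 := by
  intro s hs t ht
  rw [hI] at hs ht
  rw [stmt_15_pointval c θ ν ω hc hν hω s hs R hRdef,
    stmt_15_pointval c θ ν ω hc hν hω t ht R hRdef]
end
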